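/- arXiv:2304.05273 — 11 statements merged into one kernel-verified Lean document; each statement's English description precedes it below -/
import Mathlib

section
/- Let G ∈ ℝ^{(m−ℓ)×d} be a Gale dual of M, i.e. ker M = im G (where d = dim(ker M)), and set G' = I·G ∈ ℝ^{m×d}. Then G' is a Gale dual of B', that is, D = ker B' = im G', and consequently dim D = d. -/
/-!
The incidence matrix `I` is injective, since dropping the last coordinate of every class is a
left inverse, and its image is `ker J`: a vector sums to zero on every class exactly when each
last coordinate is minus the sum of the others in its class. Hence
`ker B' = ker B ⊓ ker J = ker B ⊓ im I = I (I⁻¹ (ker B)) = I (ker M) = I (im G) = im G'`,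
and the injective map `I` preserves dimension.
-/

open Matrix

theorem Fin.sum_eq_zero_iff_eq_neg_sum_castLE {M : Type*} [AddCommGroup M] {n : ℕ}
    (f : Fin n → M) :
    ∑ a, f a = 0 ↔
      ∀ a : Fin n, (a : ℕ) = n - 1 → f a = -∑ b : Fin (n - 1), f (b.castLE (n.sub_le 1)) := by
  cases n with
  | zero => simp
  | succ k =>
    have hlast : ∀ a : Fin (k + 1), (a : ℕ) = k + 1 - 1 ↔ a = Fin.last k :=
      fun a => by simp [Fin.ext_iff]
    simp only [hlast, forall_eq, Fin.sum_univ_castSucc (f := f)]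
    -- `b.castLE _ : Fin (k + 1)` for `b : Fin (k + 1 - 1)` is `b.castSucc` definitionally
    exact add_eq_zero_iff_eq_neg'

theorem Matrix.ker_mulVecLin_fromRows {R m₁ m₂ n : Type*} [CommRing R] [Fintype n]
    (A₁ : Matrix m₁ n R) (A₂ : Matrix m₂ n R) :
    LinearMap.ker (fromRows A₁ A₂).mulVecLin =
      LinearMap.ker A₁.mulVecLin ⊓ LinearMap.ker A₂.mulVecLin := by
  ext v
  simp only [LinearMap.mem_ker, Submodule.mem_inf, mulVecLin_apply, fromRows_mulVec,
    ← Sum.elim_zero_zero, Sum.elim_eq_iff]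

section Blocks

variable {l : ℕ} {mv : Fin l → ℕ} {R : Type*}

def dropLastOfClass (x : (Σ i : Fin l, Fin (mv i)) → R) : (Σ i : Fin l, Fin (mv i - 1)) → R :=
  fun p => x ⟨p.1, p.2.castLE (Nat.sub_le _ 1)⟩

theorem cayley_mulVec_apply [Semiring R] {J : Matrix (Fin l) (Σ i : Fin l, Fin (mv i)) R}
    (hJ : ∀ (i j : Fin l) (a : Fin (mv j)), J i ⟨j, a⟩ = if j = i then 1 else 0)
    (x : (Σ i : Fin l, Fin (mv i)) → R) (i : Fin l) :
    (J *ᵥ x) i = ∑ a, x ⟨i, a⟩ := by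
  rw [mulVec, dotProduct, Fintype.sum_sigma, Finset.sum_eq_single i]
  · simp [hJ]
  · intro j _ hj
    simp [hJ, hj]
  · simp

section Incidence

variable [CommRing R] {Iinc : Matrix (Σ i : Fin l, Fin (mv i)) (Σ i : Fin l, Fin (mv i - 1)) R}
  (hIinc : ∀ (i : Fin l) (a : Fin (mv i)) (j : Fin l) (b : Fin (mv j - 1)),
    Iinc ⟨i, a⟩ ⟨j, b⟩ =
      if i = j then
        (if (a : ℕ) = (b : ℕ) then 1 else if (a : ℕ) = mv i - 1 then -1 else 0)
      else 0)
include hIinc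

theorem incidence_mulVec_apply (y : (Σ i : Fin l, Fin (mv i - 1)) → R) (i : Fin l)
    (a : Fin (mv i)) :
    (Iinc *ᵥ y) ⟨i, a⟩ = if h : (a : ℕ) < mv i - 1 then y ⟨i, ⟨a, h⟩⟩ else -∑ b, y ⟨i, b⟩ := by
  have hblock : (Iinc *ᵥ y) ⟨i, a⟩ = ∑ b, Iinc ⟨i, a⟩ ⟨i, b⟩ * y ⟨i, b⟩ := by
    rw [mulVec, dotProduct, Fintype.sum_sigma, Finset.sum_eq_single i]
    · intro j _ hj
      simp [hIinc, Ne.symm hj]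
    · simp
  rw [hblock]
  split_ifs with h
  · rw [Finset.sum_eq_single ⟨a, h⟩]
    · simp [hIinc]
    · intro b _ hb
      simp [hIinc, Ne.symm (Fin.val_ne_of_ne hb), h.ne]
    · simp
  · have ha : (a : ℕ) = mv i - 1 := by omega
    rw [← Finset.sum_neg_distrib]
    refine Finset.sum_congr rfl fun b _ => ?_
    simp [hIinc, ha, b.isLt.ne']

theorem dropLastOfClass_incidence_mulVec (y : (Σ i : Fin l, Fin (mv i - 1)) → R) :
    dropLastOfClass (Iinc *ᵥ y) = y := by
  funext ⟨i, b⟩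
  simp [dropLastOfClass, incidence_mulVec_apply hIinc]

theorem incidence_mulVec_dropLastOfClass_eq_self_iff (x : (Σ i : Fin l, Fin (mv i)) → R) :
    Iinc *ᵥ dropLastOfClass x = x ↔
      ∀ i (a : Fin (mv i)), (a : ℕ) = mv i - 1 →
        x ⟨i, a⟩ = -∑ b : Fin (mv i - 1), x ⟨i, b.castLE (Nat.sub_le _ 1)⟩ := by
  simp only [funext_iff, Sigma.forall, incidence_mulVec_apply hIinc]
  refine forall_congr' fun i => forall_congr' fun a => ?_
  by_cases h : (a : ℕ) < mv i - 1
  · simp [h, h.ne, dropLastOfClass]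
  · have ha : (a : ℕ) = mv i - 1 := by omega
    simp [ha, dropLastOfClass, eq_comm]

theorem ker_cayley_eq_range_incidence {J : Matrix (Fin l) (Σ i : Fin l, Fin (mv i)) R}
    (hJ : ∀ (i j : Fin l) (a : Fin (mv j)), J i ⟨j, a⟩ = if j = i then 1 else 0) :
    LinearMap.ker J.mulVecLin = LinearMap.range Iinc.mulVecLin := by
  ext x
  have hrange : x ∈ LinearMap.range Iinc.mulVecLin ↔ Iinc *ᵥ dropLastOfClass x = x :=
    ⟨by rintro ⟨y, rfl⟩; simp [dropLastOfClass_incidence_mulVec hIinc],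
      fun h => ⟨_, h⟩⟩
  rw [hrange, incidence_mulVec_dropLastOfClass_eq_self_iff hIinc, LinearMap.mem_ker,
    mulVecLin_apply, funext_iff]
  simp only [cayley_mulVec_apply hJ, Pi.zero_apply, Fin.sum_eq_zero_iff_eq_neg_sum_castLE]

theorem injective_incidence_mulVecLin : Function.Injective Iinc.mulVecLin :=
  Function.LeftInverse.injective (dropLastOfClass_incidence_mulVec hIinc)

end Incidence

end Blocks

theorem stmt_0_general {n l : ℕ} (mv : Fin l → ℕ)
    (B : Matrix (Fin n) (Σ i : Fin l, Fin (mv i)) ℝ)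
    (Iinc : Matrix (Σ i : Fin l, Fin (mv i)) (Σ i : Fin l, Fin (mv i - 1)) ℝ)
    (hIinc : ∀ (i : Fin l) (a : Fin (mv i)) (j : Fin l) (b : Fin (mv j - 1)),
      Iinc ⟨i, a⟩ ⟨j, b⟩ =
        if i = j then
          (if (a : ℕ) = (b : ℕ) then 1 else if (a : ℕ) = mv i - 1 then -1 else 0)
        else 0)
    (J : Matrix (Fin l) (Σ i : Fin l, Fin (mv i)) ℝ)
    (hJ : ∀ (i j : Fin l) (a : Fin (mv j)), J i ⟨j, a⟩ = if j = i then 1 else 0)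
    (d : ℕ)
    (hd : d = Module.finrank ℝ (LinearMap.ker (B * Iinc).mulVecLin))
    (G : Matrix (Σ i : Fin l, Fin (mv i - 1)) (Fin d) ℝ)
    (hG : LinearMap.range G.mulVecLin = LinearMap.ker (B * Iinc).mulVecLin) :
    LinearMap.ker (Matrix.fromRows B J).mulVecLin =
        LinearMap.range (Iinc * G).mulVecLin ∧
      Module.finrank ℝ (LinearMap.ker (Matrix.fromRows B J).mulVecLin) = d := by
  have hrange : LinearMap.range (Iinc * G).mulVecLin =
      (LinearMap.ker (B * Iinc).mulVecLin).map Iinc.mulVecLin := by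
    rw [mulVecLin_mul, LinearMap.range_comp, hG]
  have hker : LinearMap.ker (fromRows B J).mulVecLin = LinearMap.range (Iinc * G).mulVecLin := by
    rw [hrange, mulVecLin_mul, LinearMap.ker_comp, Submodule.map_comap_eq,
      ker_mulVecLin_fromRows, ker_cayley_eq_range_incidence hIinc hJ, inf_comm]
  refine ⟨hker, ?_⟩
  rw [hker, hrange, hd]
  exact (Submodule.equivMapOfInjective _ (injective_incidence_mulVecLin hIinc) _).finrank_eq.symm

/-- If `G` is a Gale dual of `M = B·I` (i.e. `im G = ker M`), then `G' = I·G` is a Gale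
dual of `B' = (B over J)`, i.e. `D = ker B' = im G'`, and `dim D = d = dim (ker M)`.
Here the indices `{1,…,m}` are partitioned into `ℓ` classes of sizes `mv i`, `I` is the
block-diagonal incidence matrix, and `J` is the block-diagonal all-ones "Cayley" matrix. -/
theorem stmt_0 {n l : ℕ} (mv : Fin l → ℕ) (hmv : ∀ i, 0 < mv i)
    (B : Matrix (Fin n) (Σ i : Fin l, Fin (mv i)) ℝ)
    (Iinc : Matrix (Σ i : Fin l, Fin (mv i)) (Σ i : Fin l, Fin (mv i - 1)) ℝ)
    (hIinc : ∀ (i : Fin l) (a : Fin (mv i)) (j : Fin l) (b : Fin (mv j - 1)),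
      Iinc ⟨i, a⟩ ⟨j, b⟩ =
        if i = j then
          (if (a : ℕ) = (b : ℕ) then 1 else if (a : ℕ) = mv i - 1 then -1 else 0)
        else 0)
    (J : Matrix (Fin l) (Σ i : Fin l, Fin (mv i)) ℝ)
    (hJ : ∀ (i j : Fin l) (a : Fin (mv j)), J i ⟨j, a⟩ = if j = i then 1 else 0)
    (d : ℕ)
    (hd : d = Module.finrank ℝ (LinearMap.ker (B * Iinc).mulVecLin))
    (G : Matrix (Σ i : Fin l, Fin (mv i - 1)) (Fin d) ℝ)
    (hG : LinearMap.range G.mulVecLin = LinearMap.ker (B * Iinc).mulVecLin) :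
    LinearMap.ker (Matrix.fromRows B J).mulVecLin =
        LinearMap.range (Iinc * G).mulVecLin ∧
      Module.finrank ℝ (LinearMap.ker (Matrix.fromRows B J).mulVecLin) = d :=
  stmt_0_general mv B Iinc hIinc J hJ d hd G hG
end

section
/- Let M* ∈ ℝ^{(m−ℓ)×n} be a generalized inverse of M (i.e. M·M*·M = M) and E = I·M* ∈ ℝ^{m×n}, where for w ∈ ℝ^m_> the vector w^E ∈ ℝ^n_> has entries (w^E)_i = ∏_{j=1}^m w_j^{E_{ji}}. Then the set of positive solutions satisfies Z_c = { (y ∘ c^{−1})^E ∘ e^v : y ∈ Y_c, v ∈ L^⊥ }, where c^{−1} is the componentwise inverse of c. -/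
open Matrix

/-- Main theorem: the set of positive solutions `Z_c` of `A(c ∘ x^B) = 0` equals
`{ (y ∘ c⁻¹)^E ∘ e^v : y ∈ Y_c, v ∈ L^⊥ }`, where `Y_c` is the solution set on the
coefficient polytope `P`, `D = ker (B over J)` is the monomial dependency subspace,
`L = im (B·I)` is the monomial difference subspace, and `E = I·M*` for a generalized
inverse `M*` of `M = B·I`. -/
theorem stmt_1 {n n' l : ℕ} (mv : Fin l → ℕ) (hmv : ∀ i, 0 < mv i)
    (A : Matrix (Fin n') (Σ i : Fin l, Fin (mv i)) ℝ)
    (B : Matrix (Fin n) (Σ i : Fin l, Fin (mv i)) ℝ)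
    (c : (Σ i : Fin l, Fin (mv i)) → ℝ) (hc : ∀ j, 0 < c j)
    (hrank : A.rank = n')
    (hpos : ∃ y : (Σ i : Fin l, Fin (mv i)) → ℝ, A.mulVec y = 0 ∧ ∀ j, 0 < y j)
    (hprod : ∀ y : (Σ i : Fin l, Fin (mv i)) → ℝ,
      (A.mulVec y = 0 ∧ ∀ j, 0 ≤ y j) ↔
        ∀ i : Fin l,
          (Matrix.of fun (r : Fin n') (a : Fin (mv i)) => A r ⟨i, a⟩).mulVec
              (fun a => y ⟨i, a⟩) = 0 ∧ ∀ a : Fin (mv i), 0 ≤ y ⟨i, a⟩)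
    (Iinc : Matrix (Σ i : Fin l, Fin (mv i)) (Σ i : Fin l, Fin (mv i - 1)) ℝ)
    (hIinc : ∀ (i : Fin l) (a : Fin (mv i)) (j : Fin l) (b : Fin (mv j - 1)),
      Iinc ⟨i, a⟩ ⟨j, b⟩ =
        if i = j then
          (if (a : ℕ) = (b : ℕ) then 1 else if (a : ℕ) = mv i - 1 then -1 else 0)
        else 0)
    (J : Matrix (Fin l) (Σ i : Fin l, Fin (mv i)) ℝ)
    (hJ : ∀ (i j : Fin l) (a : Fin (mv j)), J i ⟨j, a⟩ = if j = i then 1 else 0)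
    (Mstar : Matrix (Σ i : Fin l, Fin (mv i - 1)) (Fin n) ℝ)
    (hMstar : B * Iinc * Mstar * (B * Iinc) = B * Iinc) :
    {x : Fin n → ℝ | (∀ i, 0 < x i) ∧
        A.mulVec (fun j => c j * ∏ i, x i ^ B i j) = 0} =
      {x : Fin n → ℝ | ∃ y : (Σ i : Fin l, Fin (mv i)) → ℝ,
        ((A.mulVec y = 0 ∧ (∀ j, 0 < y j) ∧
            ∀ i : Fin l, ∑ a : Fin (mv i), y ⟨i, a⟩ = 1) ∧
          ∀ z : (Σ i : Fin l, Fin (mv i)) → ℝ,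
            (Matrix.fromRows B J).mulVec z = 0 →
              ∏ j, y j ^ z j = ∏ j, c j ^ z j) ∧
        ∃ v : Fin n → ℝ,
          (∀ u : (Σ i : Fin l, Fin (mv i - 1)) → ℝ, v ⬝ᵥ (B * Iinc).mulVec u = 0) ∧
          x = fun i => (∏ j, (y j / c j) ^ ((Iinc * Mstar) j i)) * Real.exp (v i)} := by
  classical
  have hlast : ∀ k : Fin l, mv k - 1 < mv k := fun k => Nat.sub_lt (hmv k) one_pos
  have hbk : ∀ (k : Fin l) (b : Fin (mv k - 1)), (b : ℕ) < mv k :=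
    fun k b => lt_of_lt_of_le b.2 (Nat.sub_le _ _)
  -- summing over the sigma type blockwise
  have hsig : ∀ (f : (Σ i : Fin l, Fin (mv i)) → ℝ),
      ∑ j, f j = ∑ k : Fin l, ∑ a : Fin (mv k), f ⟨k, a⟩ := by
    intro f
    rw [← Finset.univ_sigma_univ, Finset.sum_sigma]
  -- row of J dotted with a vector
  have hJrow : ∀ (g : (Σ i : Fin l, Fin (mv i)) → ℝ) (k : Fin l),
      ∑ j, J k j * g j = ∑ a : Fin (mv k), g ⟨k, a⟩ := by
    intro g k
    rw [hsig fun j => J k j * g j]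
    rw [Finset.sum_eq_single k]
    · exact Finset.sum_congr rfl fun a _ => by rw [hJ, if_pos rfl, one_mul]
    · intro k' _ hk'
      exact Finset.sum_eq_zero fun a _ => by rw [hJ, if_neg hk', zero_mul]
    · exact fun h => absurd (Finset.mem_univ k) h
  -- within a block, dotting against a column of Iinc
  have hinner : ∀ (k : Fin l) (b : Fin (mv k - 1)) (g : Fin (mv k) → ℝ),
      ∑ a : Fin (mv k), g a * Iinc ⟨k, a⟩ ⟨k, b⟩
        = g ⟨b, hbk k b⟩ - g ⟨mv k - 1, hlast k⟩ := by
    intro k b g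
    have hb := b.2
    have step : ∀ a : Fin (mv k),
        g a * Iinc ⟨k, a⟩ ⟨k, b⟩
          = (if a = ⟨b, hbk k b⟩ then g a else 0)
            + (if a = ⟨mv k - 1, hlast k⟩ then -g a else 0) := by
      intro a
      rw [hIinc, if_pos rfl]
      simp only [Fin.ext_iff]
      split_ifs with h1 h2 h2 <;> first | (exfalso; omega) | ring
    rw [Finset.sum_congr rfl fun a _ => step a, Finset.sum_add_distrib,
      Finset.sum_ite_eq' Finset.univ, Finset.sum_ite_eq' Finset.univ,
      if_pos (Finset.mem_univ _), if_pos (Finset.mem_univ _)]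
    ring
  -- dotting a full vector against a column of Iinc
  have hcol : ∀ (f : (Σ i : Fin l, Fin (mv i)) → ℝ) (k : Fin l) (b : Fin (mv k - 1)),
      ∑ j, f j * Iinc j ⟨k, b⟩
        = f ⟨k, ⟨b, hbk k b⟩⟩ - f ⟨k, ⟨mv k - 1, hlast k⟩⟩ := by
    intro f k b
    rw [hsig fun j => f j * Iinc j ⟨k, b⟩]
    rw [Finset.sum_eq_single k]
    · exact hinner k b fun a => f ⟨k, a⟩
    · intro k' _ hk'
      exact Finset.sum_eq_zero fun a _ => by rw [hIinc, if_neg hk', mul_zero]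
    · exact fun h => absurd (Finset.mem_univ k) h
  -- J * Iinc = 0
  have hJI : J * Iinc = 0 := by
    ext k j
    obtain ⟨k', b⟩ := j
    rw [Matrix.mul_apply, Matrix.zero_apply]
    rw [hJrow (fun j => Iinc j ⟨k', b⟩) k]
    rcases eq_or_ne k k' with rfl | hk
    · have := hinner k b fun _ => (1 : ℝ)
      simpa using this
    · exact Finset.sum_eq_zero fun a _ => by rw [hIinc, if_neg hk]
  -- B * (Iinc * Mstar * (B * Iinc)) = B * Iinc
  have hBEM : B * (Iinc * Mstar * (B * Iinc)) = B * Iinc := by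
    calc B * (Iinc * Mstar * (B * Iinc)) = B * Iinc * Mstar * (B * Iinc) := by
          rw [Matrix.mul_assoc, Matrix.mul_assoc, Matrix.mul_assoc]
      _ = B * Iinc := hMstar
  -- J * (Iinc * Mstar * (B * Iinc)) = 0
  have hJEM : J * (Iinc * Mstar * (B * Iinc)) = 0 := by
    have e : J * (Iinc * Mstar * (B * Iinc)) = J * Iinc * (Mstar * (B * Iinc)) := by
      rw [Matrix.mul_assoc Iinc Mstar (B * Iinc),
        ← Matrix.mul_assoc J Iinc (Mstar * (B * Iinc))]
    rw [e, hJI, Matrix.zero_mul]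
  ext x
  simp only [Set.mem_setOf_eq]
  constructor
  · rintro ⟨hxpos, hxA⟩
    set u : (Σ i : Fin l, Fin (mv i)) → ℝ := fun j => c j * ∏ i, x i ^ B i j with hu
    have hupos : ∀ j, 0 < u j := fun j =>
      mul_pos (hc j) (Finset.prod_pos fun i _ => Real.rpow_pos_of_pos (hxpos i) _)
    have hublocks := (hprod u).mp ⟨hxA, fun j => (hupos j).le⟩
    set s : Fin l → ℝ := fun k => ∑ a : Fin (mv k), u ⟨k, a⟩ with hs
    have hspos : ∀ k, 0 < s k := fun k =>
      Finset.sum_pos (fun a _ => hupos _) ⟨⟨0, hmv k⟩, Finset.mem_univ _⟩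
    set y : (Σ i : Fin l, Fin (mv i)) → ℝ := fun j => u j / s j.1 with hy
    have hypos : ∀ j, 0 < y j := fun j => div_pos (hupos j) (hspos j.1)
    have hysum : ∀ k : Fin l, ∑ a : Fin (mv k), y ⟨k, a⟩ = 1 := by
      intro k
      show ∑ a : Fin (mv k), u ⟨k, a⟩ / s k = 1
      rw [← Finset.sum_div]
      exact div_self (hspos k).ne'
    have hAy : A.mulVec y = 0 := by
      refine ((hprod y).mpr fun k => ⟨?_, fun a => (hypos _).le⟩).1
      funext r
      have h0r := congrFun (hublocks k).1 r
      simp only [Matrix.mulVec, dotProduct, Matrix.of_apply, Pi.zero_apply] at h0r ⊢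
      calc ∑ a : Fin (mv k), A r ⟨k, a⟩ * (u ⟨k, a⟩ / s k)
          = (∑ a : Fin (mv k), A r ⟨k, a⟩ * u ⟨k, a⟩) / s k := by
            rw [Finset.sum_div]
            exact Finset.sum_congr rfl fun a _ => by ring
        _ = 0 := by rw [h0r, zero_div]
    have hlogu : ∀ j, Real.log (u j) = Real.log (c j) + ∑ i, B i j * Real.log (x i) := by
      intro j
      rw [hu]
      rw [Real.log_mul (hc j).ne'
        (Finset.prod_pos fun i _ => Real.rpow_pos_of_pos (hxpos i) _).ne',
        Real.log_prod fun i _ => (Real.rpow_pos_of_pos (hxpos i) _).ne']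
      congr 1
      exact Finset.sum_congr rfl fun i _ => Real.log_rpow (hxpos i) _
    have hwval : ∀ j : (Σ i : Fin l, Fin (mv i)), Real.log (y j / c j)
        = (∑ i, B i j * Real.log (x i)) - Real.log (s j.1) := by
      intro j
      rw [Real.log_div (hypos j).ne' (hc j).ne', hy]
      show Real.log (u j / s j.1) - Real.log (c j) = _
      rw [Real.log_div (hupos j).ne' (hspos j.1).ne', hlogu j]
      ring
    have hYc : ∀ z : (Σ i : Fin l, Fin (mv i)) → ℝ,
        (Matrix.fromRows B J).mulVec z = 0 →
          ∏ j, y j ^ z j = ∏ j, c j ^ z j := by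
      intro z hz
      have hBz : B.mulVec z = 0 := by
        funext r
        have := congrFun hz (Sum.inl r)
        rw [Matrix.fromRows_mulVec] at this
        simpa using this
      have hJz : J.mulVec z = 0 := by
        funext r
        have := congrFun hz (Sum.inr r)
        rw [Matrix.fromRows_mulVec] at this
        simpa using this
      have key : ∑ j, z j * Real.log (y j / c j) = 0 := by
        have e1 : ∑ j, z j * Real.log (y j / c j)
            = (∑ j, z j * ∑ i, B i j * Real.log (x i))
              - ∑ j, z j * Real.log (s j.1) := by
          rw [← Finset.sum_sub_distrib]
          exact Finset.sum_congr rfl fun j _ => by rw [hwval]; ring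
        have e2 : ∑ j, z j * ∑ i, B i j * Real.log (x i) = 0 := by
          calc ∑ j, z j * ∑ i, B i j * Real.log (x i)
              = ∑ j, ∑ i, z j * (B i j * Real.log (x i)) :=
                Finset.sum_congr rfl fun j _ => Finset.mul_sum _ _ _
            _ = ∑ i, ∑ j, z j * (B i j * Real.log (x i)) := Finset.sum_comm
            _ = ∑ i, Real.log (x i) * (B.mulVec z i) := by
                refine Finset.sum_congr rfl fun i _ => ?_
                simp only [Matrix.mulVec, dotProduct]
                rw [Finset.mul_sum]
                exact Finset.sum_congr rfl fun j _ => by ring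
            _ = 0 := by rw [hBz]; simp
        have e3 : ∑ j, z j * Real.log (s j.1) = 0 := by
          rw [hsig fun j => z j * Real.log (s j.1)]
          have estep : ∀ k : Fin l, ∑ a : Fin (mv k), z ⟨k, a⟩ * Real.log (s k)
              = Real.log (s k) * (J.mulVec z k) := by
            intro k
            simp only [Matrix.mulVec, dotProduct]
            rw [hJrow z k, Finset.mul_sum]
            exact Finset.sum_congr rfl fun a _ => by ring
          rw [Finset.sum_congr rfl fun k _ => estep k, hJz]
          simp
        rw [e1, e2, e3, sub_zero]
      have h1 : ∏ j, (y j / c j) ^ z j = 1 := by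
        have : ∏ j, (y j / c j) ^ z j
            = Real.exp (∑ j, z j * Real.log (y j / c j)) := by
          rw [Real.exp_sum]
          exact Finset.prod_congr rfl fun j _ => by
            rw [Real.rpow_def_of_pos (div_pos (hypos j) (hc j)), mul_comm]
        rw [this, key, Real.exp_zero]
      have h2 : ∏ j, (y j / c j) ^ z j = (∏ j, y j ^ z j) / ∏ j, c j ^ z j := by
        rw [← Finset.prod_div_distrib]
        exact Finset.prod_congr rfl fun j _ => Real.div_rpow (hypos j).le (hc j).le _
      rw [h2] at h1
      have hcz : (0:ℝ) < ∏ j, c j ^ z j :=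
        Finset.prod_pos fun j _ => Real.rpow_pos_of_pos (hc j) _
      field_simp at h1
      exact h1
    refine ⟨y, ⟨⟨hAy, hypos, hysum⟩, hYc⟩,
      fun i => Real.log (x i) - ∑ j, (Iinc * Mstar) j i * Real.log (y j / c j), ?_, ?_⟩
    · intro u'
      rw [dotProduct_mulVec]
      have hvM : Matrix.vecMul
          (fun i => Real.log (x i) - ∑ j, (Iinc * Mstar) j i * Real.log (y j / c j))
          (B * Iinc) = 0 := by
        funext col
        obtain ⟨k, b⟩ := col
        simp only [Matrix.vecMul, dotProduct, Pi.zero_apply]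
        have split1 : ∑ i, (Real.log (x i) - ∑ j, (Iinc * Mstar) j i * Real.log (y j / c j))
              * (B * Iinc) i ⟨k, b⟩
            = (∑ i, Real.log (x i) * (B * Iinc) i ⟨k, b⟩)
              - ∑ i, (∑ j, (Iinc * Mstar) j i * Real.log (y j / c j)) * (B * Iinc) i ⟨k, b⟩ := by
          rw [← Finset.sum_sub_distrib]
          exact Finset.sum_congr rfl fun i _ => by ring
        have swap1 : ∑ i, (∑ j, (Iinc * Mstar) j i * Real.log (y j / c j)) * (B * Iinc) i ⟨k, b⟩
            = ∑ j, Real.log (y j / c j) * (Iinc * Mstar * (B * Iinc)) j ⟨k, b⟩ := by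
          calc ∑ i, (∑ j, (Iinc * Mstar) j i * Real.log (y j / c j)) * (B * Iinc) i ⟨k, b⟩
              = ∑ i, ∑ j, Real.log (y j / c j)
                  * ((Iinc * Mstar) j i * (B * Iinc) i ⟨k, b⟩) := by
                refine Finset.sum_congr rfl fun i _ => ?_
                rw [Finset.sum_mul]
                exact Finset.sum_congr rfl fun j _ => by ring
            _ = ∑ j, ∑ i, Real.log (y j / c j)
                  * ((Iinc * Mstar) j i * (B * Iinc) i ⟨k, b⟩) := Finset.sum_comm
            _ = ∑ j, Real.log (y j / c j) * (Iinc * Mstar * (B * Iinc)) j ⟨k, b⟩ := by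
                refine Finset.sum_congr rfl fun j _ => ?_
                rw [Matrix.mul_apply, Finset.mul_sum]
        have expand : ∑ j, Real.log (y j / c j) * (Iinc * Mstar * (B * Iinc)) j ⟨k, b⟩
            = ∑ i, Real.log (x i) * (B * Iinc) i ⟨k, b⟩ := by
          have e1 : ∑ j, Real.log (y j / c j) * (Iinc * Mstar * (B * Iinc)) j ⟨k, b⟩
              = (∑ j, (∑ i, B i j * Real.log (x i))
                    * (Iinc * Mstar * (B * Iinc)) j ⟨k, b⟩)
                - ∑ j, Real.log (s j.1) * (Iinc * Mstar * (B * Iinc)) j ⟨k, b⟩ := by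
            rw [← Finset.sum_sub_distrib]
            exact Finset.sum_congr rfl fun j _ => by rw [hwval]; ring
          have e2 : ∑ j, (∑ i, B i j * Real.log (x i))
                * (Iinc * Mstar * (B * Iinc)) j ⟨k, b⟩
              = ∑ i, Real.log (x i) * (B * (Iinc * Mstar * (B * Iinc))) i ⟨k, b⟩ := by
            calc ∑ j, (∑ i, B i j * Real.log (x i))
                  * (Iinc * Mstar * (B * Iinc)) j ⟨k, b⟩
                = ∑ j, ∑ i, Real.log (x i)
                    * (B i j * (Iinc * Mstar * (B * Iinc)) j ⟨k, b⟩) := by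
                  refine Finset.sum_congr rfl fun j _ => ?_
                  rw [Finset.sum_mul]
                  exact Finset.sum_congr rfl fun i _ => by ring
              _ = ∑ i, ∑ j, Real.log (x i)
                    * (B i j * (Iinc * Mstar * (B * Iinc)) j ⟨k, b⟩) := Finset.sum_comm
              _ = ∑ i, Real.log (x i) * (B * (Iinc * Mstar * (B * Iinc))) i ⟨k, b⟩ := by
                  refine Finset.sum_congr rfl fun i _ => ?_
                  rw [Matrix.mul_apply, Finset.mul_sum]
          have e3 : ∑ j, Real.log (s j.1) * (Iinc * Mstar * (B * Iinc)) j ⟨k, b⟩ = 0 := by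
            rw [hsig fun j => Real.log (s j.1) * (Iinc * Mstar * (B * Iinc)) j ⟨k, b⟩]
            have estep : ∀ k' : Fin l,
                ∑ a : Fin (mv k'), Real.log (s k')
                    * (Iinc * Mstar * (B * Iinc)) ⟨k', a⟩ ⟨k, b⟩
                = Real.log (s k') * (J * (Iinc * Mstar * (B * Iinc))) k' ⟨k, b⟩ := by
              intro k'
              rw [Matrix.mul_apply, hJrow (fun j => (Iinc * Mstar * (B * Iinc)) j ⟨k, b⟩) k',
                Finset.mul_sum]
            rw [Finset.sum_congr rfl fun k' _ => estep k', hJEM]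
            simp
          rw [e1, e2, e3, sub_zero, hBEM]
        rw [split1, swap1, expand, sub_self]
      rw [hvM]
      simp [dotProduct]
    · funext i
      have hexp : (∏ j, (y j / c j) ^ ((Iinc * Mstar) j i))
          = Real.exp (∑ j, (Iinc * Mstar) j i * Real.log (y j / c j)) := by
        rw [Real.exp_sum]
        exact Finset.prod_congr rfl fun j _ => by
          rw [Real.rpow_def_of_pos (div_pos (hypos j) (hc j)), mul_comm]
      rw [hexp, ← Real.exp_add,
        show (∑ j, (Iinc * Mstar) j i * Real.log (y j / c j))
            + (Real.log (x i) - ∑ j, (Iinc * Mstar) j i * Real.log (y j / c j))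
          = Real.log (x i) by ring,
        Real.exp_log (hxpos i)]
  · rintro ⟨y, ⟨⟨hAy, hypos, hysum⟩, hYc⟩, v, hv, rfl⟩
    set w : (Σ i : Fin l, Fin (mv i)) → ℝ := fun j => Real.log (y j / c j) with hwdef
    set t : Fin n → ℝ := fun i => (∑ j, (Iinc * Mstar) j i * w j) + v i with ht
    have hx : ∀ i, (∏ j, (y j / c j) ^ ((Iinc * Mstar) j i)) * Real.exp (v i)
        = Real.exp (t i) := by
      intro i
      rw [ht]
      show _ = Real.exp ((∑ j, (Iinc * Mstar) j i * w j) + v i)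
      rw [Real.exp_add]
      congr 1
      rw [Real.exp_sum]
      exact Finset.prod_congr rfl fun j _ => by
        rw [Real.rpow_def_of_pos (div_pos (hypos j) (hc j)), mul_comm]
    constructor
    · intro i
      exact mul_pos
        (Finset.prod_pos fun j _ => Real.rpow_pos_of_pos (div_pos (hypos j) (hc j)) _)
        (Real.exp_pos _)
    · -- main equation
      set g : (Σ i : Fin l, Fin (mv i)) → ℝ := fun j => (∑ i, t i * B i j) - w j with hg
      -- g is constant on blocks
      have hgconst : ∀ (k : Fin l) (a : Fin (mv k)),
          g ⟨k, a⟩ = g ⟨k, ⟨mv k - 1, hlast k⟩⟩ := by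
        intro k a
        rcases eq_or_ne (a : ℕ) (mv k - 1) with ha | ha
        · have ha' : a = ⟨mv k - 1, hlast k⟩ := Fin.ext (by simpa using ha)
          rw [ha']
        · have hab : (a : ℕ) < mv k - 1 := by omega
          set b : Fin (mv k - 1) := ⟨a, hab⟩ with hb
          set z : (Σ i : Fin l, Fin (mv i)) → ℝ :=
            fun j => (Iinc * Mstar * (B * Iinc)) j ⟨k, b⟩ - Iinc j ⟨k, b⟩ with hz
          have hBz : B.mulVec z = 0 := by
            funext r
            simp only [Matrix.mulVec, dotProduct, Pi.zero_apply, hz]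
            have : ∑ j, B r j * ((Iinc * Mstar * (B * Iinc)) j ⟨k, b⟩ - Iinc j ⟨k, b⟩)
                = (B * (Iinc * Mstar * (B * Iinc))) r ⟨k, b⟩ - (B * Iinc) r ⟨k, b⟩ := by
              rw [Matrix.mul_apply, Matrix.mul_apply, ← Finset.sum_sub_distrib]
              exact Finset.sum_congr rfl fun j _ => by ring
            rw [this, hBEM, sub_self]
          have hJz : J.mulVec z = 0 := by
            funext r
            simp only [Matrix.mulVec, dotProduct, Pi.zero_apply, hz]
            have : ∑ j, J r j * ((Iinc * Mstar * (B * Iinc)) j ⟨k, b⟩ - Iinc j ⟨k, b⟩)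
                = (J * (Iinc * Mstar * (B * Iinc))) r ⟨k, b⟩ - (J * Iinc) r ⟨k, b⟩ := by
              rw [Matrix.mul_apply, Matrix.mul_apply, ← Finset.sum_sub_distrib]
              exact Finset.sum_congr rfl fun j _ => by ring
            rw [this, hJEM, hJI]
            simp
          have hzfr : (Matrix.fromRows B J).mulVec z = 0 := by
            rw [Matrix.fromRows_mulVec, hBz, hJz]
            funext r
            cases r <;> rfl
          have hyz := hYc z hzfr
          have hwz : ∑ j, z j * w j = 0 := by
            have h1 : ∏ j, (y j / c j) ^ z j = 1 := by
              have h2 : ∏ j, (y j / c j) ^ z j = (∏ j, y j ^ z j) / ∏ j, c j ^ z j := by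
                rw [← Finset.prod_div_distrib]
                exact Finset.prod_congr rfl fun j _ =>
                  Real.div_rpow (hypos j).le (hc j).le _
              rw [h2, hyz, div_self
                (Finset.prod_pos fun j _ => Real.rpow_pos_of_pos (hc j) _).ne']
            have h3 : ∏ j, (y j / c j) ^ z j = Real.exp (∑ j, z j * w j) := by
              rw [Real.exp_sum]
              exact Finset.prod_congr rfl fun j _ => by
                rw [Real.rpow_def_of_pos (div_pos (hypos j) (hc j)), mul_comm]
            rw [h3, ← Real.exp_zero] at h1
            exact Real.exp_eq_exp.mp h1
          have hcolg := hcol g k b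
          have hgdiff : ∑ j, g j * Iinc j ⟨k, b⟩ = 0 := by
            have split1 : ∑ j, g j * Iinc j ⟨k, b⟩
                = (∑ j, (∑ i, t i * B i j) * Iinc j ⟨k, b⟩) - ∑ j, w j * Iinc j ⟨k, b⟩ := by
              rw [← Finset.sum_sub_distrib]
              exact Finset.sum_congr rfl fun j _ => by rw [hg]; ring
            have swap1 : ∑ j, (∑ i, t i * B i j) * Iinc j ⟨k, b⟩
                = ∑ i, t i * (B * Iinc) i ⟨k, b⟩ := by
              calc ∑ j, (∑ i, t i * B i j) * Iinc j ⟨k, b⟩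
                  = ∑ j, ∑ i, t i * (B i j * Iinc j ⟨k, b⟩) := by
                    refine Finset.sum_congr rfl fun j _ => ?_
                    rw [Finset.sum_mul]
                    exact Finset.sum_congr rfl fun i _ => by ring
                _ = ∑ i, ∑ j, t i * (B i j * Iinc j ⟨k, b⟩) := Finset.sum_comm
                _ = ∑ i, t i * (B * Iinc) i ⟨k, b⟩ := by
                    refine Finset.sum_congr rfl fun i _ => ?_
                    rw [Matrix.mul_apply, Finset.mul_sum]
            have expand : ∑ i, t i * (B * Iinc) i ⟨k, b⟩
                = (∑ j, w j * (Iinc * Mstar * (B * Iinc)) j ⟨k, b⟩)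
                  + ∑ i, v i * (B * Iinc) i ⟨k, b⟩ := by
              have e1 : ∑ i, t i * (B * Iinc) i ⟨k, b⟩
                  = (∑ i, (∑ j, (Iinc * Mstar) j i * w j) * (B * Iinc) i ⟨k, b⟩)
                    + ∑ i, v i * (B * Iinc) i ⟨k, b⟩ := by
                rw [← Finset.sum_add_distrib]
                exact Finset.sum_congr rfl fun i _ => by rw [ht]; ring
              have e2 : ∑ i, (∑ j, (Iinc * Mstar) j i * w j) * (B * Iinc) i ⟨k, b⟩
                  = ∑ j, w j * (Iinc * Mstar * (B * Iinc)) j ⟨k, b⟩ := by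
                calc ∑ i, (∑ j, (Iinc * Mstar) j i * w j) * (B * Iinc) i ⟨k, b⟩
                    = ∑ i, ∑ j, w j * ((Iinc * Mstar) j i * (B * Iinc) i ⟨k, b⟩) := by
                      refine Finset.sum_congr rfl fun i _ => ?_
                      rw [Finset.sum_mul]
                      exact Finset.sum_congr rfl fun j _ => by ring
                  _ = ∑ j, ∑ i, w j * ((Iinc * Mstar) j i * (B * Iinc) i ⟨k, b⟩) :=
                      Finset.sum_comm
                  _ = ∑ j, w j * (Iinc * Mstar * (B * Iinc)) j ⟨k, b⟩ := by
                      refine Finset.sum_congr rfl fun j _ => ?_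
                      rw [Matrix.mul_apply, Finset.mul_sum]
              rw [e1, e2]
            have hvzero : ∑ i, v i * (B * Iinc) i ⟨k, b⟩ = 0 := by
              have := hv (Pi.single ⟨k, b⟩ 1)
              rw [Matrix.mulVec_single] at this
              simpa [dotProduct] using this
            have hwpart : (∑ j, w j * (Iinc * Mstar * (B * Iinc)) j ⟨k, b⟩)
                - ∑ j, w j * Iinc j ⟨k, b⟩ = 0 := by
              rw [← Finset.sum_sub_distrib]
              rw [show ∑ j, (w j * (Iinc * Mstar * (B * Iinc)) j ⟨k, b⟩
                  - w j * Iinc j ⟨k, b⟩) = ∑ j, z j * w j from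
                Finset.sum_congr rfl fun j _ => by rw [hz]; ring, hwz]
            rw [split1, swap1, expand, hvzero, add_zero]
            linarith [hwpart]
          rw [hgdiff] at hcolg
          have : g ⟨k, ⟨(b : ℕ), hbk k b⟩⟩ = g ⟨k, ⟨mv k - 1, hlast k⟩⟩ :=
            (sub_eq_zero.mp hcolg.symm)
          convert this using 3
      -- now finish
      have hxe : (fun j => c j * ∏ i,
            ((∏ j', (y j' / c j') ^ ((Iinc * Mstar) j' i)) * Real.exp (v i)) ^ B i j)
          = fun j => y j * Real.exp (g j) := by
        funext j
        have hprodexp : ∏ i, ((∏ j', (y j' / c j') ^ ((Iinc * Mstar) j' i))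
              * Real.exp (v i)) ^ B i j = Real.exp (∑ i, t i * B i j) := by
          rw [Real.exp_sum]
          refine Finset.prod_congr rfl fun i _ => ?_
          rw [hx i, Real.rpow_def_of_pos (Real.exp_pos _), Real.log_exp]
        rw [hprodexp, hg]
        have : (∑ i, t i * B i j) = ((∑ i, t i * B i j) - w j) + w j := by ring
        rw [this, Real.exp_add]
        have hew : Real.exp (w j) = y j / c j := by
          rw [hwdef]
          exact Real.exp_log (div_pos (hypos j) (hc j))
        rw [hew]
        have hcj : c j ≠ 0 := (hc j).ne'
        field_simp
      rw [hxe]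
      have hAblocks := (hprod y).mp ⟨hAy, fun j => (hypos j).le⟩
      funext r
      simp only [Matrix.mulVec, dotProduct, Pi.zero_apply]
      rw [hsig fun j => A r j * (y j * Real.exp (g j))]
      have hstep : ∀ k : Fin l,
          ∑ a : Fin (mv k), A r ⟨k, a⟩ * (y ⟨k, a⟩ * Real.exp (g ⟨k, a⟩))
            = Real.exp (g ⟨k, ⟨mv k - 1, hlast k⟩⟩)
              * ∑ a : Fin (mv k), A r ⟨k, a⟩ * y ⟨k, a⟩ := by
        intro k
        rw [Finset.mul_sum]
        exact Finset.sum_congr rfl fun a _ => by rw [hgconst k a]; ring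
      rw [Finset.sum_congr rfl fun k _ => hstep k]
      have hblock : ∀ k : Fin l, ∑ a : Fin (mv k), A r ⟨k, a⟩ * y ⟨k, a⟩ = 0 := by
        intro k
        have := congrFun (hAblocks k).1 r
        simpa [Matrix.mulVec, dotProduct] using this
      simp [hblock]
end

section
/- Assume the monomial dependency vanishes, d = dim(ker M) = 0. Let M* be a generalized inverse of M and E = I·M*. Then Z_c = { (y ∘ c^{−1})^E ∘ e^v : y ∈ P_>, v ∈ L^⊥ }, and in particular Z_c ≠ ∅ for every parameter vector c > 0. If moreover n' = n (a system of n equations in n unknowns), then Z_c contains exactly one element for every c > 0. -/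
open Matrix

section helpers
variable {l : ℕ} {mv : Fin l → ℕ} (hmv : ∀ i, 0 < mv i)
  {Iinc : Matrix (Σ i : Fin l, Fin (mv i)) (Σ i : Fin l, Fin (mv i - 1)) ℝ}
  (hIinc : ∀ (i : Fin l) (a : Fin (mv i)) (j : Fin l) (b : Fin (mv j - 1)),
      Iinc ⟨i, a⟩ ⟨j, b⟩ =
        if i = j then
          (if (a : ℕ) = (b : ℕ) then 1 else if (a : ℕ) = mv i - 1 then -1 else 0)
        else 0)

/-- the inclusion of `Fin (mv i - 1)` into `Fin (mv i)` -/
def finc (i : Fin l) (b : Fin (mv i - 1)) : Fin (mv i) := ⟨b.1, by omega⟩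

/-- the last element of `Fin (mv i)` -/
def flst (hmv : ∀ i, 0 < mv i) (i : Fin l) : Fin (mv i) := ⟨mv i - 1, by have := hmv i; omega⟩

theorem sigma_mk_eq_iff {i : Fin l} (a a' : Fin (mv i)) :
    ((⟨i, a⟩ : Σ i, Fin (mv i)) = ⟨i, a'⟩) ↔ (a : ℕ) = (a' : ℕ) := by
  simp [Fin.ext_iff]

include hmv hIinc in
theorem Iinc_eq (j : Σ i : Fin l, Fin (mv i)) (i : Fin l) (b : Fin (mv i - 1)) :
    Iinc j ⟨i, b⟩ = (if j = ⟨i, finc i b⟩ then 1 else 0) - (if j = ⟨i, flst hmv i⟩ then 1 else 0) := by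
  obtain ⟨i', a⟩ := j
  rw [hIinc]
  rcases eq_or_ne i' i with rfl | hne
  · rw [if_pos rfl]
    simp only [sigma_mk_eq_iff]
    have hb := b.2
    show _ = (if (a:ℕ) = ((finc i' b : Fin (mv i')) : ℕ) then (1:ℝ) else 0)
        - (if (a:ℕ) = ((flst hmv i' : Fin (mv i')) : ℕ) then 1 else 0)
    show _ = (if (a:ℕ) = (b:ℕ) then (1:ℝ) else 0) - (if (a:ℕ) = mv i' - 1 then 1 else 0)
    split_ifs <;> first | omega | norm_num
  · rw [if_neg hne, if_neg (by simp [hne]), if_neg (by simp [hne]), sub_zero]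

include hmv hIinc in
theorem vecMul_Iinc (p : (Σ i : Fin l, Fin (mv i)) → ℝ) (i : Fin l) (b : Fin (mv i - 1)) :
    (p ᵥ* Iinc) ⟨i, b⟩ = p ⟨i, finc i b⟩ - p ⟨i, flst hmv i⟩ := by
  show ∑ j, p j * Iinc j ⟨i, b⟩ = _
  simp only [Iinc_eq hmv hIinc _ i b, mul_sub, mul_ite, mul_one, mul_zero]
  rw [Finset.sum_sub_distrib, Finset.sum_ite_eq', Finset.sum_ite_eq']
  simp

include hmv hIinc in
theorem vecMul_Iinc_of_blockConst (p : (Σ i : Fin l, Fin (mv i)) → ℝ) (h : Fin l → ℝ)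
    (hp : ∀ j : (Σ i : Fin l, Fin (mv i)), p j = h j.1) : p ᵥ* Iinc = 0 := by
  funext k
  obtain ⟨i, b⟩ := k
  rw [vecMul_Iinc hmv hIinc, hp, hp]
  simp

include hmv hIinc in
theorem blockConst_of_vecMul_Iinc (p : (Σ i : Fin l, Fin (mv i)) → ℝ) (hp : p ᵥ* Iinc = 0)
    (i : Fin l) (a : Fin (mv i)) : p ⟨i, a⟩ = p ⟨i, flst hmv i⟩ := by
  rcases eq_or_ne (a : ℕ) (mv i - 1) with hal | hal
  · congr 1
    exact congrArg _ (Fin.ext (by simpa [flst]))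
  · have ha : (a : ℕ) < mv i - 1 := by have := a.2; omega
    have h2 := vecMul_Iinc hmv hIinc p i ⟨a.1, ha⟩
    rw [hp] at h2
    have hfa : finc i ⟨a.1, ha⟩ = a := Fin.ext rfl
    rw [hfa] at h2
    simp only [Pi.zero_apply] at h2
    linarith

/-- the block sums, as a linear map -/
def blockSum : ((Σ i : Fin l, Fin (mv i)) → ℝ) →ₗ[ℝ] (Fin l → ℝ) where
  toFun z := fun i => ∑ a, z ⟨i, a⟩
  map_add' z w := by funext i; simp [Finset.sum_add_distrib]
  map_smul' r z := by funext i; simp [Finset.mul_sum]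

end helpers

/-- The case of monomial dependency zero (`d = dim ker M = 0`): the set of positive
solutions of `A(c ∘ x^B) = 0` has the explicit parametrization
`Z_c = { (y ∘ c⁻¹)^E ∘ e^v : y ∈ P_>, v ∈ L^⊥ }`; in particular `Z_c ≠ ∅` for all `c > 0`,
and if moreover `n' = n`, there is a unique solution. -/
theorem stmt_2 {n n' l : ℕ} (mv : Fin l → ℕ) (hmv : ∀ i, 0 < mv i)
    (A : Matrix (Fin n') (Σ i : Fin l, Fin (mv i)) ℝ)
    (B : Matrix (Fin n) (Σ i : Fin l, Fin (mv i)) ℝ)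
    (c : (Σ i : Fin l, Fin (mv i)) → ℝ) (hc : ∀ j, 0 < c j)
    (hrank : A.rank = n')
    (hpos : ∃ y : (Σ i : Fin l, Fin (mv i)) → ℝ, A.mulVec y = 0 ∧ ∀ j, 0 < y j)
    (hprod : ∀ y : (Σ i : Fin l, Fin (mv i)) → ℝ,
      (A.mulVec y = 0 ∧ ∀ j, 0 ≤ y j) ↔
        ∀ i : Fin l,
          (Matrix.of fun (r : Fin n') (a : Fin (mv i)) => A r ⟨i, a⟩).mulVec
              (fun a => y ⟨i, a⟩) = 0 ∧ ∀ a : Fin (mv i), 0 ≤ y ⟨i, a⟩)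
    (Iinc : Matrix (Σ i : Fin l, Fin (mv i)) (Σ i : Fin l, Fin (mv i - 1)) ℝ)
    (hIinc : ∀ (i : Fin l) (a : Fin (mv i)) (j : Fin l) (b : Fin (mv j - 1)),
      Iinc ⟨i, a⟩ ⟨j, b⟩ =
        if i = j then
          (if (a : ℕ) = (b : ℕ) then 1 else if (a : ℕ) = mv i - 1 then -1 else 0)
        else 0)
    (hd : Module.finrank ℝ (LinearMap.ker (B * Iinc).mulVecLin) = 0)
    (Mstar : Matrix (Σ i : Fin l, Fin (mv i - 1)) (Fin n) ℝ)
    (hMstar : B * Iinc * Mstar * (B * Iinc) = B * Iinc) :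
    ({x : Fin n → ℝ | (∀ i, 0 < x i) ∧
        A.mulVec (fun j => c j * ∏ i, x i ^ B i j) = 0} =
      {x : Fin n → ℝ | ∃ y : (Σ i : Fin l, Fin (mv i)) → ℝ,
        (A.mulVec y = 0 ∧ (∀ j, 0 < y j) ∧
          ∀ i : Fin l, ∑ a : Fin (mv i), y ⟨i, a⟩ = 1) ∧
        ∃ v : Fin n → ℝ,
          (∀ u : (Σ i : Fin l, Fin (mv i - 1)) → ℝ, v ⬝ᵥ (B * Iinc).mulVec u = 0) ∧
          x = fun i => (∏ j, (y j / c j) ^ ((Iinc * Mstar) j i)) * Real.exp (v i)}) ∧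
    {x : Fin n → ℝ | (∀ i, 0 < x i) ∧
        A.mulVec (fun j => c j * ∏ i, x i ^ B i j) = 0}.Nonempty ∧
    (n' = n →
      ∃! x : Fin n → ℝ, (∀ i, 0 < x i) ∧
        A.mulVec (fun j => c j * ∏ i, x i ^ B i j) = 0) := by
  -- abbreviations
  set M : Matrix (Fin n) (Σ i : Fin l, Fin (mv i - 1)) ℝ := B * Iinc with hM
  set E : Matrix (Σ i : Fin l, Fin (mv i)) (Fin n) ℝ := Iinc * Mstar with hE
  -- M is injective
  have hMinj : Function.Injective M.mulVecLin := by
    rw [← LinearMap.ker_eq_bot]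
    exact Submodule.finrank_eq_zero.mp hd
  -- Mstar is a left inverse
  have hMstarM : Mstar * M = 1 := by
    have h1 : ∀ u, M.mulVecLin ((Mstar * M).mulVec u) = M.mulVecLin u := by
      intro u
      simp only [mulVecLin_apply, mulVec_mulVec]
      rw [← Matrix.mul_assoc, hMstar]
    ext k k'
    have h2 := hMinj (h1 (Pi.single k' 1))
    have h3 := congrFun h2 k
    simpa [mulVec_single, Matrix.one_apply, Pi.single_apply, eq_comm] using h3
  have hEM : E * M = Iinc := by rw [hE, Matrix.mul_assoc, hMstarM, Matrix.mul_one]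
  -- σ-positivity helper
  have hsum_pos : ∀ (z : (Σ i : Fin l, Fin (mv i)) → ℝ), (∀ j, 0 < z j) →
      ∀ i : Fin l, 0 < ∑ a, z ⟨i, a⟩ := by
    intro z hz i
    have : Nonempty (Fin (mv i)) := ⟨⟨0, hmv i⟩⟩
    exact Finset.sum_pos (fun a _ => hz _) Finset.univ_nonempty
  -- scaled blocks stay in the kernel
  have hscale : ∀ (y : (Σ i : Fin l, Fin (mv i)) → ℝ), A.mulVec y = 0 → (∀ j, 0 ≤ y j) →
      ∀ (τ : Fin l → ℝ), (∀ i, 0 ≤ τ i) → A.mulVec (fun j => τ j.1 * y j) = 0 := by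
    intro y hy hy0 τ hτ
    have hb := (hprod y).mp ⟨hy, hy0⟩
    refine ((hprod _).mpr fun i => ?_).1
    constructor
    · have : (fun a => τ (⟨i, a⟩ : Σ i : Fin l, Fin (mv i)).1 * y ⟨i, a⟩)
          = τ i • (fun a => y ⟨i, a⟩) := by
        funext a; simp [smul_eq_mul]
      rw [this, mulVec_smul, (hb i).1, smul_zero]
    · intro a; exact mul_nonneg (hτ i) (hy0 _)
  -- normalization: from any positive kernel vector get one with unit block sums
  have hnorm : ∀ (z : (Σ i : Fin l, Fin (mv i)) → ℝ), A.mulVec z = 0 → (∀ j, 0 < z j) →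
      A.mulVec (fun j => z j / (∑ a, z ⟨j.1, a⟩)) = 0 ∧
      (∀ j, 0 < z j / (∑ a, z ⟨j.1, a⟩)) ∧
      (∀ i : Fin l, ∑ a : Fin (mv i), z (⟨i, a⟩ : Σ i : Fin l, Fin (mv i)) / (∑ a', z ⟨i, a'⟩) = 1) := by
    intro z hz hz0
    have hσ : ∀ i, 0 < ∑ a, z ⟨i, a⟩ := hsum_pos z hz0
    refine ⟨?_, fun j => div_pos (hz0 j) (hσ j.1), fun i => ?_⟩
    · have : (fun j : (Σ i : Fin l, Fin (mv i)) => z j / (∑ a, z ⟨j.1, a⟩))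
          = fun j => (∑ a, z ⟨j.1, a⟩)⁻¹ * z j := by
        funext j; rw [div_eq_inv_mul]
      rw [this]
      exact hscale z hz (fun j => (hz0 j).le) _ (fun i => (inv_pos.mpr (hσ i)).le)
    · rw [← Finset.sum_div, div_self (hσ i).ne']
  -- rewriting the nonlinear equation through logarithms
  have hlogprod : ∀ (x : Fin n → ℝ), (∀ i, 0 < x i) → ∀ j,
      c j * ∏ i, x i ^ B i j
        = c j * Real.exp (((fun i => Real.log (x i)) ᵥ* B) j) := by
    intro x hx j
    congr 1
    rw [show ((fun i => Real.log (x i)) ᵥ* B) j = ∑ i, Real.log (x i) * B i j from rfl,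
      Real.exp_sum]
    exact Finset.prod_congr rfl fun i _ => (Real.rpow_def_of_pos (hx i) _)
  -- the parametrized formula, through logarithms
  have hformula : ∀ (y : (Σ i : Fin l, Fin (mv i)) → ℝ), (∀ j, 0 < y j) →
      ∀ (v : Fin n → ℝ) (i : Fin n),
      (∏ j, (y j / c j) ^ (E j i)) * Real.exp (v i)
        = Real.exp (((fun j => Real.log (y j) - Real.log (c j)) ᵥ* E) i + v i) := by
    intro y hy v i
    rw [Real.exp_add]
    congr 1
    rw [show ((fun j => Real.log (y j) - Real.log (c j)) ᵥ* E) i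
        = ∑ j, (Real.log (y j) - Real.log (c j)) * E j i from rfl, Real.exp_sum]
    refine Finset.prod_congr rfl fun j _ => ?_
    rw [Real.rpow_def_of_pos (div_pos (hy j) (hc j)), Real.log_div (hy j).ne' (hc j).ne']
  -- the main set equality
  have hseteq : ({x : Fin n → ℝ | (∀ i, 0 < x i) ∧
        A.mulVec (fun j => c j * ∏ i, x i ^ B i j) = 0} =
      {x : Fin n → ℝ | ∃ y : (Σ i : Fin l, Fin (mv i)) → ℝ,
        (A.mulVec y = 0 ∧ (∀ j, 0 < y j) ∧
          ∀ i : Fin l, ∑ a : Fin (mv i), y ⟨i, a⟩ = 1) ∧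
        ∃ v : Fin n → ℝ,
          (∀ u : (Σ i : Fin l, Fin (mv i - 1)) → ℝ, v ⬝ᵥ (B * Iinc).mulVec u = 0) ∧
          x = fun i => (∏ j, (y j / c j) ^ (E j i)) * Real.exp (v i)}) := by
    ext x
    simp only [Set.mem_setOf_eq]
    constructor
    · rintro ⟨hx, hAx⟩
      set t : Fin n → ℝ := fun i => Real.log (x i) with ht
      set z : (Σ i : Fin l, Fin (mv i)) → ℝ := fun j => c j * Real.exp ((t ᵥ* B) j) with hzdef
      have hz0 : ∀ j, 0 < z j := fun j => mul_pos (hc j) (Real.exp_pos _)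
      have hzx : z = fun j => c j * ∏ i, x i ^ B i j :=
        funext fun j => (hlogprod x hx j).symm
      have hAz : A.mulVec z = 0 := by rw [hzx]; exact hAx
      set σ : Fin l → ℝ := fun i => ∑ a, z ⟨i, a⟩ with hσdef
      have hσ : ∀ i, 0 < σ i := hsum_pos z hz0
      set y : (Σ i : Fin l, Fin (mv i)) → ℝ := fun j => z j / σ j.1 with hydef
      obtain ⟨hAy, hy0, hysum⟩ := hnorm z hAz hz0
      set w : (Σ i : Fin l, Fin (mv i)) → ℝ :=
        fun j => Real.log (y j) - Real.log (c j) with hwdef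
      have hw : w = (t ᵥ* B) - fun j => Real.log (σ j.1) := by
        funext j
        rw [hwdef]
        show Real.log (z j / σ j.1) - Real.log (c j) = (t ᵥ* B) j - Real.log (σ j.1)
        rw [Real.log_div (hz0 j).ne' (hσ j.1).ne', hzdef]
        show Real.log (c j * Real.exp ((t ᵥ* B) j)) - _ - _ = _
        rw [Real.log_mul (hc j).ne' (Real.exp_pos _).ne', Real.log_exp]
        ring
      refine ⟨y, ⟨hAy, hy0, hysum⟩, fun i => t i - (w ᵥ* E) i, ?_, ?_⟩
      · intro u
        rw [dotProduct_mulVec]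
        have hv : (fun i => t i - (w ᵥ* E) i) = t - w ᵥ* E := rfl
        rw [hv, sub_vecMul, vecMul_vecMul, hEM]
        have h1 : t ᵥ* M = (t ᵥ* B) ᵥ* Iinc := by rw [hM, ← vecMul_vecMul]
        have h2 : w ᵥ* Iinc = (t ᵥ* B) ᵥ* Iinc := by
          rw [hw, sub_vecMul,
            vecMul_Iinc_of_blockConst hmv hIinc _ (fun i => Real.log (σ i)) (fun j => rfl),
            sub_zero]
        rw [h1, h2, sub_self, zero_dotProduct]
      · funext i
        rw [hformula y hy0 (fun i => t i - (w ᵥ* E) i) i]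
        show x i = Real.exp ((w ᵥ* E) i + (t i - (w ᵥ* E) i))
        rw [add_sub_cancel, ht, Real.exp_log (hx i)]
    · rintro ⟨y, ⟨hAy, hy0, hysum⟩, v, hv, hxeq⟩
      set w : (Σ i : Fin l, Fin (mv i)) → ℝ :=
        fun j => Real.log (y j) - Real.log (c j) with hwdef
      have hxe : x = fun i => Real.exp ((w ᵥ* E) i + v i) := by
        rw [hxeq]; funext i; rw [hformula y hy0]
      have hx : ∀ i, 0 < x i := by
        intro i; rw [hxe]; exact Real.exp_pos _
      refine ⟨hx, ?_⟩
      set t : Fin n → ℝ := fun i => Real.log (x i) with ht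
      have htw : t = w ᵥ* E + v := by
        funext i; rw [ht, hxe]; exact Real.log_exp _
      have hvM : v ᵥ* M = 0 := by
        funext k
        have := hv (Pi.single k 1)
        rw [dotProduct_mulVec, dotProduct_single, mul_one] at this
        exact this
      have hp : ((t ᵥ* B) - w) ᵥ* Iinc = 0 := by
        rw [sub_vecMul, vecMul_vecMul, ← hM, htw, add_vecMul, vecMul_vecMul, hEM, hvM,
          add_zero, sub_self]
      have hpc := blockConst_of_vecMul_Iinc hmv hIinc _ hp
      set p : (Σ i : Fin l, Fin (mv i)) → ℝ := (t ᵥ* B) - w with hpdef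
      have key : (fun j => c j * ∏ i, x i ^ B i j)
          = fun j : (Σ i : Fin l, Fin (mv i)) =>
              (fun i : Fin l => Real.exp (p ⟨i, flst hmv i⟩)) j.1 * y j := by
        funext j
        rw [hlogprod x hx j]
        have h1 : (t ᵥ* B) j = w j + p j := by rw [hpdef]; show _ = _ + ((_ : ℝ) - _); ring
        rw [h1, Real.exp_add]
        have h2 : Real.exp (w j) = y j / c j := by
          rw [hwdef]
          show Real.exp (Real.log (y j) - Real.log (c j)) = _
          rw [Real.exp_sub, Real.exp_log (hy0 j), Real.exp_log (hc j)]
        obtain ⟨i, a⟩ := j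
        rw [h2, hpc i a]
        rw [show c ⟨i, a⟩ * (y ⟨i, a⟩ / c ⟨i, a⟩ * Real.exp (p ⟨i, flst hmv i⟩))
            = y ⟨i, a⟩ / c ⟨i, a⟩ * c ⟨i, a⟩ * Real.exp (p ⟨i, flst hmv i⟩) from by ring,
          div_mul_cancel₀ _ (hc ⟨i, a⟩).ne']
        ring
      rw [key]
      exact hscale y hAy (fun j => (hy0 j).le)
        (fun i : Fin l => Real.exp (p ⟨i, flst hmv i⟩)) (fun i => (Real.exp_pos _).le)
  refine ⟨hseteq, ?_, ?_⟩
  -- nonemptiness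
  · obtain ⟨z, hAz, hz0⟩ := hpos
    obtain ⟨hAy, hy0, hysum⟩ := hnorm z hAz hz0
    rw [hseteq]
    exact ⟨_, fun j => z j / (∑ a, z ⟨j.1, a⟩), ⟨hAy, hy0, hysum⟩, 0,
      fun u => zero_dotProduct _, rfl⟩
  -- uniqueness in the square case
  · intro hnn
    subst hnn
    -- cardinalities
    have hcardJ : Fintype.card (Σ i : Fin l, Fin (mv i))
        = Fintype.card (Σ i : Fin l, Fin (mv i - 1)) + l := by
      simp only [Fintype.card_sigma, Fintype.card_fin]
      calc ∑ i, mv i = ∑ i : Fin l, ((mv i - 1) + 1) :=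
            Finset.sum_congr rfl fun i _ => by have := hmv i; omega
        _ = (∑ i : Fin l, (mv i - 1)) + l := by
            rw [Finset.sum_add_distrib]
            simp
    have hKn : Fintype.card (Σ i : Fin l, Fin (mv i - 1)) ≤ n' := by
      have := LinearMap.finrank_le_finrank_of_injective hMinj
      rwa [Module.finrank_fintype_fun_eq_card, Module.finrank_fintype_fun_eq_card,
        Fintype.card_fin] at this
    have hnJ : n' ≤ Fintype.card (Σ i : Fin l, Fin (mv i)) := by
      have := A.rank_le_card_width
      omega
    have hkerA : Module.finrank ℝ (LinearMap.ker A.mulVecLin)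
        = Fintype.card (Σ i : Fin l, Fin (mv i)) - n' := by
      have h1 := LinearMap.finrank_range_add_finrank_ker A.mulVecLin
      rw [Module.finrank_fintype_fun_eq_card] at h1
      have h2 : Module.finrank ℝ (LinearMap.range A.mulVecLin) = n' := hrank
      omega
    -- the restricted block-sum map
    set ψ : (LinearMap.ker A.mulVecLin) →ₗ[ℝ] (Fin l → ℝ) :=
      blockSum.comp (LinearMap.ker A.mulVecLin).subtype with hψdef
    obtain ⟨z0, hAz0, hz00⟩ := hpos
    have hσ0 : ∀ i, 0 < ∑ a, z0 ⟨i, a⟩ := hsum_pos z0 hz00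
    have hψsurj : Function.Surjective ψ := by
      intro φ
      set τ : Fin l → ℝ := fun i => φ i / (∑ a, z0 ⟨i, a⟩) with hτdef
      set zp : (Σ i : Fin l, Fin (mv i)) → ℝ := fun j => max (τ j.1) 0 * z0 j with hzp
      set zm : (Σ i : Fin l, Fin (mv i)) → ℝ := fun j => max (-(τ j.1)) 0 * z0 j with hzm
      have hAzp : A.mulVec zp = 0 := by
        rw [hzp]
        exact hscale z0 hAz0 (fun j => (hz00 j).le) (fun i => max (τ i) 0)
          (fun i => le_max_right _ _)
      have hAzm : A.mulVec zm = 0 := by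
        rw [hzm]
        exact hscale z0 hAz0 (fun j => (hz00 j).le) (fun i => max (-(τ i)) 0)
          (fun i => le_max_right _ _)
      have hmem : zp - zm ∈ LinearMap.ker A.mulVecLin := by
        rw [LinearMap.mem_ker, mulVecLin_apply, mulVec_sub, hAzp, hAzm, sub_zero]
      refine ⟨⟨zp - zm, hmem⟩, ?_⟩
      funext i
      show ∑ a, (zp - zm) ⟨i, a⟩ = φ i
      have : ∀ a : Fin (mv i), (zp - zm) (⟨i, a⟩ : Σ i : Fin l, Fin (mv i))
          = τ i * z0 ⟨i, a⟩ := by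
        intro a
        show zp ⟨i, a⟩ - zm ⟨i, a⟩ = _
        rw [hzp, hzm]
        show max (τ i) 0 * z0 ⟨i, a⟩ - max (-(τ i)) 0 * z0 ⟨i, a⟩ = _
        rw [← sub_mul, max_zero_sub_max_neg_zero_eq_self]
      rw [Finset.sum_congr rfl fun a _ => this a, ← Finset.mul_sum, hτdef]
      exact div_mul_cancel₀ _ (hσ0 i).ne'
    -- dimension count: finrank of ker A equals l, so ψ is injective
    have hψinj : Function.Injective ψ := by
      have h1 := LinearMap.finrank_range_add_finrank_ker ψ
      rw [LinearMap.range_eq_top.mpr hψsurj] at h1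
      rw [finrank_top, Module.finrank_fintype_fun_eq_card, Fintype.card_fin] at h1
      rw [hkerA] at h1
      have h2 : Module.finrank ℝ (LinearMap.ker ψ) = 0 := by omega
      rw [← LinearMap.ker_eq_bot]
      exact Submodule.finrank_eq_zero.mp h2
    -- M is surjective
    have hcardK : Fintype.card (Σ i : Fin l, Fin (mv i - 1)) = n' := by
      -- from h1 above: l ≤ card J − n'
      have h1 := LinearMap.finrank_range_add_finrank_ker ψ
      rw [LinearMap.range_eq_top.mpr hψsurj] at h1
      rw [finrank_top, Module.finrank_fintype_fun_eq_card, Fintype.card_fin, hkerA] at h1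
      omega
    have hMsurj : Function.Surjective M.mulVecLin := by
      rw [← LinearMap.range_eq_top]
      apply Submodule.eq_top_of_finrank_eq
      have h1 := LinearMap.finrank_range_add_finrank_ker M.mulVecLin
      rw [hd, Module.finrank_fintype_fun_eq_card] at h1
      rw [Module.finrank_fintype_fun_eq_card, Fintype.card_fin]
      omega
    -- conclude
    obtain ⟨x0, hx0⟩ : ({x : Fin n' → ℝ | (∀ i, 0 < x i) ∧
        A.mulVec (fun j => c j * ∏ i, x i ^ B i j) = 0}).Nonempty := by
      obtain ⟨hAy, hy0, hysum⟩ := hnorm z0 hAz0 hz00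
      rw [hseteq]
      exact ⟨_, fun j => z0 j / (∑ a, z0 ⟨j.1, a⟩), ⟨hAy, hy0, hysum⟩, 0,
        fun u => zero_dotProduct _, rfl⟩
    -- any element of the parametrized set is determined
    have huniq : ∀ x1 x2 : Fin n' → ℝ,
        ((∀ i, 0 < x1 i) ∧ A.mulVec (fun j => c j * ∏ i, x1 i ^ B i j) = 0) →
        ((∀ i, 0 < x2 i) ∧ A.mulVec (fun j => c j * ∏ i, x2 i ^ B i j) = 0) →
        x1 = x2 := by
      intro x1 x2 h1 h2
      have m1 : x1 ∈ {x : Fin n' → ℝ | (∀ i, 0 < x i) ∧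
        A.mulVec (fun j => c j * ∏ i, x i ^ B i j) = 0} := h1
      have m2 : x2 ∈ {x : Fin n' → ℝ | (∀ i, 0 < x i) ∧
        A.mulVec (fun j => c j * ∏ i, x i ^ B i j) = 0} := h2
      rw [hseteq] at m1 m2
      obtain ⟨y1, ⟨hAy1, hy01, hsum1⟩, v1, hv1, hx1⟩ := m1
      obtain ⟨y2, ⟨hAy2, hy02, hsum2⟩, v2, hv2, hx2⟩ := m2
      -- v1 = v2 = 0
      have hvzero : ∀ (v : Fin n' → ℝ),
          (∀ u : (Σ i : Fin l, Fin (mv i - 1)) → ℝ, v ⬝ᵥ (B * Iinc).mulVec u = 0) →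
          v = 0 := by
        intro v hv
        funext i
        obtain ⟨u, hu⟩ := hMsurj (Pi.single i 1)
        rw [mulVecLin_apply] at hu
        have := hv u
        rw [show (B * Iinc) = M from rfl, hu, dotProduct_single, mul_one] at this
        exact this
      -- y1 = y2
      have hyeq : y1 = y2 := by
        have hmem : y1 - y2 ∈ LinearMap.ker A.mulVecLin := by
          rw [LinearMap.mem_ker, mulVecLin_apply, mulVec_sub, hAy1, hAy2, sub_zero]
        have hψ0 : ψ ⟨y1 - y2, hmem⟩ = 0 := by
          funext i
          show ∑ a, (y1 - y2) ⟨i, a⟩ = 0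
          have : ∀ a : Fin (mv i), (y1 - y2) (⟨i, a⟩ : Σ i : Fin l, Fin (mv i))
              = y1 ⟨i, a⟩ - y2 ⟨i, a⟩ := fun a => rfl
          rw [Finset.sum_congr rfl fun a _ => this a, Finset.sum_sub_distrib,
            hsum1 i, hsum2 i, sub_self]
        have := hψinj (a₁ := ⟨y1 - y2, hmem⟩) (a₂ := 0) (by rw [hψ0, map_zero])
        have h0 : y1 - y2 = 0 := congrArg Subtype.val this
        exact sub_eq_zero.mp h0
      rw [hx1, hx2, hyeq, hvzero v1 hv1, hvzero v2 hv2]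
    exact ⟨x0, hx0, fun x hx => huniq x x0 hx hx0⟩
end

section
/- Let ȳ ∈ P. Then the solution set on the coefficient polytope satisfies Y_c = (c ∘ e^{D^⊥}) ∩ P_> = (c ∘ e^{D^⊥}) ∩ (ȳ + ker A'), where c ∘ e^{D^⊥} = { c ∘ e^v : v ∈ D^⊥ } and D^⊥ is the orthogonal complement of D in ℝ^m. -/
open Matrix

/-
Taking logarithms turns the binomial equations `y^z = c^z` (`z ∈ D`) into the linear equations
`(log y - log c) ⬝ z = 0`, so a positive `y` solves them exactly when `y = c ∘ e^v` with
`v ∈ D^⊥`. Since `ȳ` satisfies `A y = 0` and `J y = 1`, those affine conditions cut out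
`ȳ + ker A'`, and on `c ∘ e^{D^⊥}` positivity is automatic.
-/

lemma Real.prod_rpow_eq_exp_dotProduct {ι : Type*} [Fintype ι] {y : ι → ℝ} (hy : ∀ j, 0 < y j)
    (z : ι → ℝ) : ∏ j, y j ^ z j = Real.exp ((fun j => Real.log (y j)) ⬝ᵥ z) := by
  rw [dotProduct, Real.exp_sum]
  exact Finset.prod_congr rfl fun j _ => Real.rpow_def_of_pos (hy j) (z j)

lemma Real.prod_rpow_eq_prod_rpow_iff {ι : Type*} [Fintype ι] {y c : ι → ℝ}
    (hy : ∀ j, 0 < y j) (hc : ∀ j, 0 < c j) (z : ι → ℝ) :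
    ∏ j, y j ^ z j = ∏ j, c j ^ z j ↔ (fun j => Real.log (y j) - Real.log (c j)) ⬝ᵥ z = 0 := by
  rw [Real.prod_rpow_eq_exp_dotProduct hy, Real.prod_rpow_eq_exp_dotProduct hc, Real.exp_eq_exp,
    ← sub_eq_zero, ← sub_dotProduct]
  rfl

lemma prod_rpow_eq_on_ker_iff {ι κ : Type*} [Fintype ι] (M : Matrix κ ι ℝ) {y c : ι → ℝ}
    (hy : ∀ j, 0 < y j) (hc : ∀ j, 0 < c j) :
    (∀ z, M *ᵥ z = 0 → ∏ j, y j ^ z j = ∏ j, c j ^ z j) ↔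
      ∃ v : ι → ℝ, (∀ z, M *ᵥ z = 0 → v ⬝ᵥ z = 0) ∧ y = fun j => c j * Real.exp (v j) := by
  simp only [Real.prod_rpow_eq_prod_rpow_iff hy hc]
  constructor
  · intro h
    refine ⟨_, h, funext fun j => ?_⟩
    rw [Real.exp_sub, Real.exp_log (hy j), Real.exp_log (hc j), mul_div_cancel₀ _ (hc j).ne']
  · rintro ⟨v, hv, rfl⟩ z hz
    convert hv z hz using 2
    funext j
    rw [Real.log_mul (hc j).ne' (Real.exp_ne_zero _), Real.log_exp, add_sub_cancel_left]

lemma fromRows_mulVec_eq_zero_iff {R m₁ m₂ n : Type*} [Semiring R] [Fintype n]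
    (A₁ : Matrix m₁ n R) (A₂ : Matrix m₂ n R) (w : n → R) :
    fromRows A₁ A₂ *ᵥ w = 0 ↔ A₁ *ᵥ w = 0 ∧ A₂ *ᵥ w = 0 := by
  simp only [fromRows_mulVec, funext_iff, Sum.forall, Sum.elim_inl, Sum.elim_inr, Pi.zero_apply]

lemma mulVec_eq_and_mulVec_eq_iff_mem_add_ker {R m₁ m₂ n : Type*} [Ring R] [Fintype n]
    {A₁ : Matrix m₁ n R} {A₂ : Matrix m₂ n R} {b₁ : m₁ → R} {b₂ : m₂ → R} {ybar : n → R}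
    (h₁ : A₁ *ᵥ ybar = b₁) (h₂ : A₂ *ᵥ ybar = b₂) (y : n → R) :
    (A₁ *ᵥ y = b₁ ∧ A₂ *ᵥ y = b₂) ↔ ∃ w, fromRows A₁ A₂ *ᵥ w = 0 ∧ y = ybar + w := by
  constructor
  · rintro ⟨hy₁, hy₂⟩
    refine ⟨y - ybar, ?_, (add_sub_cancel _ _).symm⟩
    simp [mulVec_sub, hy₁, hy₂, h₁, h₂]
  · rintro ⟨w, hw, rfl⟩
    rw [fromRows_mulVec_eq_zero_iff] at hw
    simp [mulVec_add, hw, h₁, h₂]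

theorem stmt_5_general {n n' l : ℕ} (mv : Fin l → ℕ)
    (A : Matrix (Fin n') (Σ i : Fin l, Fin (mv i)) ℝ)
    (B : Matrix (Fin n) (Σ i : Fin l, Fin (mv i)) ℝ)
    (c : (Σ i : Fin l, Fin (mv i)) → ℝ) (hc : ∀ j, 0 < c j)
    (J : Matrix (Fin l) (Σ i : Fin l, Fin (mv i)) ℝ)
    (ybar : (Σ i : Fin l, Fin (mv i)) → ℝ)
    (hybar : A.mulVec ybar = 0 ∧ (∀ j, 0 ≤ ybar j) ∧ J.mulVec ybar = 1) :
    ({y : (Σ i : Fin l, Fin (mv i)) → ℝ |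
        (A.mulVec y = 0 ∧ (∀ j, 0 < y j) ∧ J.mulVec y = 1) ∧
        ∀ z : (Σ i : Fin l, Fin (mv i)) → ℝ,
          (Matrix.fromRows B J).mulVec z = 0 → ∏ j, y j ^ z j = ∏ j, c j ^ z j} =
      {y : (Σ i : Fin l, Fin (mv i)) → ℝ |
        ∃ v : (Σ i : Fin l, Fin (mv i)) → ℝ,
          (∀ z : (Σ i : Fin l, Fin (mv i)) → ℝ,
            (Matrix.fromRows B J).mulVec z = 0 → v ⬝ᵥ z = 0) ∧
          y = fun j => c j * Real.exp (v j)} ∩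
      {y : (Σ i : Fin l, Fin (mv i)) → ℝ |
        A.mulVec y = 0 ∧ (∀ j, 0 < y j) ∧ J.mulVec y = 1}) ∧
    ({y : (Σ i : Fin l, Fin (mv i)) → ℝ |
        (A.mulVec y = 0 ∧ (∀ j, 0 < y j) ∧ J.mulVec y = 1) ∧
        ∀ z : (Σ i : Fin l, Fin (mv i)) → ℝ,
          (Matrix.fromRows B J).mulVec z = 0 → ∏ j, y j ^ z j = ∏ j, c j ^ z j} =
      {y : (Σ i : Fin l, Fin (mv i)) → ℝ |
        ∃ v : (Σ i : Fin l, Fin (mv i)) → ℝ,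
          (∀ z : (Σ i : Fin l, Fin (mv i)) → ℝ,
            (Matrix.fromRows B J).mulVec z = 0 → v ⬝ᵥ z = 0) ∧
          y = fun j => c j * Real.exp (v j)} ∩
      {y : (Σ i : Fin l, Fin (mv i)) → ℝ |
        ∃ w, (Matrix.fromRows A J).mulVec w = 0 ∧ y = ybar + w}) := by
  obtain ⟨hA, -, hJ⟩ := hybar
  have hY : {y | (A *ᵥ y = 0 ∧ (∀ j, 0 < y j) ∧ J *ᵥ y = 1) ∧
      ∀ z, fromRows B J *ᵥ z = 0 → ∏ j, y j ^ z j = ∏ j, c j ^ z j} =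
      {y | ∃ v, (∀ z, fromRows B J *ᵥ z = 0 → v ⬝ᵥ z = 0) ∧ y = fun j => c j * Real.exp (v j)} ∩
      {y | A *ᵥ y = 0 ∧ (∀ j, 0 < y j) ∧ J *ᵥ y = 1} := by
    ext y
    simp only [Set.mem_ofPred_eq, Set.mem_inter_iff]
    refine ⟨fun ⟨hP, hprod⟩ => ⟨(prod_rpow_eq_on_ker_iff _ hP.2.1 hc).1 hprod, hP⟩,
      fun ⟨hE, hP⟩ => ⟨hP, (prod_rpow_eq_on_ker_iff _ hP.2.1 hc).2 hE⟩⟩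
  refine ⟨hY, hY.trans ?_⟩
  ext y
  simp only [Set.mem_inter_iff]
  refine and_congr_right fun ⟨v, _, hy⟩ => ?_
  have hpos : ∀ j, 0 < y j := hy ▸ fun j => mul_pos (hc j) (Real.exp_pos _)
  simp only [Set.mem_ofPred_eq, ← mulVec_eq_and_mulVec_eq_iff_mem_add_ker hA hJ, hpos,
    implies_true, true_and]

/-- For `ȳ ∈ P`, the solution set on the coefficient polytope satisfies
`Y_c = (c ∘ e^{D^⊥}) ∩ P_> = (c ∘ e^{D^⊥}) ∩ (ȳ + ker A')`, where `D = ker (B over J)`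
and `A' = (A over J)`. -/
theorem stmt_5 {n n' l : ℕ} (mv : Fin l → ℕ) (hmv : ∀ i, 0 < mv i)
    (A : Matrix (Fin n') (Σ i : Fin l, Fin (mv i)) ℝ)
    (B : Matrix (Fin n) (Σ i : Fin l, Fin (mv i)) ℝ)
    (c : (Σ i : Fin l, Fin (mv i)) → ℝ) (hc : ∀ j, 0 < c j)
    (J : Matrix (Fin l) (Σ i : Fin l, Fin (mv i)) ℝ)
    (hJ : ∀ (i j : Fin l) (a : Fin (mv j)), J i ⟨j, a⟩ = if j = i then 1 else 0)
    (ybar : (Σ i : Fin l, Fin (mv i)) → ℝ)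
    (hybar : A.mulVec ybar = 0 ∧ (∀ j, 0 ≤ ybar j) ∧ J.mulVec ybar = 1) :
    ({y : (Σ i : Fin l, Fin (mv i)) → ℝ |
        (A.mulVec y = 0 ∧ (∀ j, 0 < y j) ∧ J.mulVec y = 1) ∧
        ∀ z : (Σ i : Fin l, Fin (mv i)) → ℝ,
          (Matrix.fromRows B J).mulVec z = 0 → ∏ j, y j ^ z j = ∏ j, c j ^ z j} =
      {y : (Σ i : Fin l, Fin (mv i)) → ℝ |
        ∃ v : (Σ i : Fin l, Fin (mv i)) → ℝ,
          (∀ z : (Σ i : Fin l, Fin (mv i)) → ℝ,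
            (Matrix.fromRows B J).mulVec z = 0 → v ⬝ᵥ z = 0) ∧
          y = fun j => c j * Real.exp (v j)} ∩
      {y : (Σ i : Fin l, Fin (mv i)) → ℝ |
        A.mulVec y = 0 ∧ (∀ j, 0 < y j) ∧ J.mulVec y = 1}) ∧
    ({y : (Σ i : Fin l, Fin (mv i)) → ℝ |
        (A.mulVec y = 0 ∧ (∀ j, 0 < y j) ∧ J.mulVec y = 1) ∧
        ∀ z : (Σ i : Fin l, Fin (mv i)) → ℝ,
          (Matrix.fromRows B J).mulVec z = 0 → ∏ j, y j ^ z j = ∏ j, c j ^ z j} =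
      {y : (Σ i : Fin l, Fin (mv i)) → ℝ |
        ∃ v : (Σ i : Fin l, Fin (mv i)) → ℝ,
          (∀ z : (Σ i : Fin l, Fin (mv i)) → ℝ,
            (Matrix.fromRows B J).mulVec z = 0 → v ⬝ᵥ z = 0) ∧
          y = fun j => c j * Real.exp (v j)} ∩
      {y : (Σ i : Fin l, Fin (mv i)) → ℝ |
        ∃ w, (Matrix.fromRows A J).mulVec w = 0 ∧ y = ybar + w}) :=
  stmt_5_general mv A B c hc J ybar hybar
end

section
/- If sign(ker A') ∩ sign(D^⊥) = {0}, then solutions on the coefficient polytope are unique for all parameters: |Y_c| ≤ 1 for every c ∈ ℝ^m_>. -/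
open Matrix

/-- Uniqueness of solutions on the coefficient polytope for all parameters:
if `sign(ker A') ∩ sign(D^⊥) = {0}` (i.e. a vector of `ker A'` and a vector of `D^⊥`
with the same sign vector are necessarily zero), then `|Y_c| ≤ 1` for all `c > 0`. -/
theorem stmt_6 {n n' l : ℕ} (mv : Fin l → ℕ) (hmv : ∀ i, 0 < mv i)
    (A : Matrix (Fin n') (Σ i : Fin l, Fin (mv i)) ℝ)
    (B : Matrix (Fin n) (Σ i : Fin l, Fin (mv i)) ℝ)
    (hrank : A.rank = n')
    (hpos : ∃ y : (Σ i : Fin l, Fin (mv i)) → ℝ, A.mulVec y = 0 ∧ ∀ j, 0 < y j)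
    (J : Matrix (Fin l) (Σ i : Fin l, Fin (mv i)) ℝ)
    (hJ : ∀ (i j : Fin l) (a : Fin (mv j)), J i ⟨j, a⟩ = if j = i then 1 else 0)
    (hsign : ∀ u w : (Σ i : Fin l, Fin (mv i)) → ℝ,
      (Matrix.fromRows A J).mulVec u = 0 →
      (∀ z : (Σ i : Fin l, Fin (mv i)) → ℝ,
        (Matrix.fromRows B J).mulVec z = 0 → w ⬝ᵥ z = 0) →
      (∀ j, Real.sign (u j) = Real.sign (w j)) → u = 0) :
    ∀ c : (Σ i : Fin l, Fin (mv i)) → ℝ, (∀ j, 0 < c j) →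
      Set.Subsingleton
        {y : (Σ i : Fin l, Fin (mv i)) → ℝ |
          (A.mulVec y = 0 ∧ (∀ j, 0 < y j) ∧ J.mulVec y = 1) ∧
          ∀ z : (Σ i : Fin l, Fin (mv i)) → ℝ,
            (Matrix.fromRows B J).mulVec z = 0 →
              ∏ j, y j ^ z j = ∏ j, c j ^ z j} := by
  intro c hc y₁ hy₁ y₂ hy₂
  obtain ⟨⟨hA₁, hpos₁, hJ₁⟩, hprod₁⟩ := hy₁
  obtain ⟨⟨hA₂, hpos₂, hJ₂⟩, hprod₂⟩ := hy₂
  set u : (Σ i : Fin l, Fin (mv i)) → ℝ := y₁ - y₂ with hu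
  set w : (Σ i : Fin l, Fin (mv i)) → ℝ :=
    fun j => Real.log (y₁ j) - Real.log (y₂ j) with hw
  have h1 : (Matrix.fromRows A J).mulVec u = 0 := by
    rw [Matrix.fromRows_mulVec]
    have hA : A.mulVec u = 0 := by
      rw [hu, Matrix.mulVec_sub, hA₁, hA₂, sub_zero]
    have hJu : J.mulVec u = 0 := by
      rw [hu, Matrix.mulVec_sub, hJ₁, hJ₂, sub_self]
    rw [hA, hJu]
    ext (i | i) <;> simp
  have h2 : ∀ z : (Σ i : Fin l, Fin (mv i)) → ℝ,
      (Matrix.fromRows B J).mulVec z = 0 → w ⬝ᵥ z = 0 := by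
    intro z hz
    have heq : ∏ j, y₁ j ^ z j = ∏ j, y₂ j ^ z j :=
      (hprod₁ z hz).trans (hprod₂ z hz).symm
    have hlog : ∑ j, z j * Real.log (y₁ j) = ∑ j, z j * Real.log (y₂ j) := by
      have h1' := Real.log_prod (s := Finset.univ) (f := fun j => y₁ j ^ z j)
        (fun j _ => (Real.rpow_pos_of_pos (hpos₁ j) (z j)).ne')
      have h2' := Real.log_prod (s := Finset.univ) (f := fun j => y₂ j ^ z j)
        (fun j _ => (Real.rpow_pos_of_pos (hpos₂ j) (z j)).ne')
      have := congrArg Real.log heq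
      rw [h1', h2'] at this
      simpa [Real.log_rpow (hpos₁ _), Real.log_rpow (hpos₂ _)] using this
    have : ∑ j, (Real.log (y₁ j) - Real.log (y₂ j)) * z j = 0 := by
      have : ∑ j, (Real.log (y₁ j) - Real.log (y₂ j)) * z j
          = ∑ j, z j * Real.log (y₁ j) - ∑ j, z j * Real.log (y₂ j) := by
        rw [← Finset.sum_sub_distrib]
        congr 1; ext j; ring
      rw [this, hlog, sub_self]
    simpa [dotProduct, hw] using this
  have h3 : ∀ j, Real.sign (u j) = Real.sign (w j) := by
    intro j
    rcases lt_trichotomy (y₁ j) (y₂ j) with h | h | h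
    · have hu' : u j < 0 := by simp [hu, sub_neg, h]
      have hw' : w j < 0 := by
        simp only [hw, sub_neg]
        exact Real.log_lt_log (hpos₁ j) h
      rw [Real.sign_of_neg hu', Real.sign_of_neg hw']
    · have hu' : u j = 0 := by simp [hu, h]
      have hw' : w j = 0 := by simp [hw, h]
      rw [hu', hw']
    · have hu' : 0 < u j := by simp [hu, sub_pos, h]
      have hw' : 0 < w j := by
        simp only [hw, sub_pos]
        exact Real.log_lt_log (hpos₂ j) h
      rw [Real.sign_of_pos hu', Real.sign_of_pos hw']
  have hu0 : u = 0 := hsign u w h1 h2 h3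
  have : y₁ - y₂ = 0 := hu0
  exact sub_eq_zero.mp this
end

section
/- If dim(ker A') = d and sign(ker A') ⊆ sign(D)^↓ (the lower closure of the set of sign vectors of D), then there exists a unique solution on the coefficient polytope for all parameters: |Y_c| = 1 for every c ∈ ℝ^m_>. -/
open Matrix

open Filter Set Topology

lemma aux_fromRows_zero {m₁ m₂ ι : Type*} [Fintype ι] (M₁ : Matrix m₁ ι ℝ)
    (M₂ : Matrix m₂ ι ℝ) (v : ι → ℝ) :
    (Matrix.fromRows M₁ M₂).mulVec v = 0 ↔ M₁.mulVec v = 0 ∧ M₂.mulVec v = 0 := by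
  rw [Matrix.fromRows_mulVec]
  constructor
  · intro h
    exact ⟨funext fun i => congrFun h (Sum.inl i), funext fun i => congrFun h (Sum.inr i)⟩
  · rintro ⟨h1, h2⟩
    funext i
    cases i with
    | inl i => simpa using congrFun h1 i
    | inr i => simpa using congrFun h2 i

lemma aux_sign_neg {z : ℝ} (h : Real.sign z = -1) : z < 0 := by
  rcases lt_trichotomy z 0 with h' | rfl | h'
  · exact h'
  · simp [Real.sign_zero] at h
  · rw [Real.sign_of_pos h'] at h; norm_num at h

lemma aux_sign_pos {z : ℝ} (h : Real.sign z = 1) : 0 < z := by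
  rcases lt_trichotomy z 0 with h' | rfl | h'
  · rw [Real.sign_of_neg h'] at h; norm_num at h
  · simp [Real.sign_zero] at h
  · exact h'

lemma aux_prod_eq_exp {ι : Type*} [Fintype ι] (y z : ι → ℝ) (hy : ∀ j, 0 < y j) :
    (∏ j, y j ^ z j) = Real.exp (∑ j, z j * Real.log (y j)) := by
  rw [Real.exp_sum]
  exact Finset.prod_congr rfl fun j _ => by rw [Real.rpow_def_of_pos (hy j), mul_comm]

lemma aux_expand {ι : Type*} [Fintype ι] {d : ℕ} (K : Submodule ℝ (ι → ℝ))
    (zb : Module.Basis (Fin d) ℝ K) (w : ι → ℝ) (zz : K) :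
    ∑ j, (zz : ι → ℝ) j * w j = ∑ i, zb.repr zz i * ∑ j, ((zb i : ι → ℝ) j * w j) := by
  classical
  let φ : (ι → ℝ) →ₗ[ℝ] ℝ :=
    { toFun := fun v => ∑ j, v j * w j
      map_add' := fun v v' => by
        simp [add_mul, Finset.sum_add_distrib]
      map_smul' := fun r v => by
        simp [Finset.mul_sum, mul_assoc] }
  have h1 : ((zz : ι → ℝ)) = ∑ i, zb.repr zz i • ((zb i : ι → ℝ)) := by
    conv_lhs => rw [← zb.sum_repr zz]
    push_cast
    simp
  calc ∑ j, (zz : ι → ℝ) j * w j = φ (zz : ι → ℝ) := rfl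
    _ = φ (∑ i, zb.repr zz i • ((zb i : ι → ℝ))) := by rw [← h1]
    _ = ∑ i, zb.repr zz i * φ ((zb i : ι → ℝ)) := by
        rw [map_sum]
        exact Finset.sum_congr rfl fun i _ => by rw [_root_.map_smul, smul_eq_mul]
    _ = ∑ i, zb.repr zz i * ∑ j, ((zb i : ι → ℝ) j * w j) := rfl

lemma aux_unique {ι : Type*} [Fintype ι] (KA KB : Submodule ℝ (ι → ℝ))
    (hsign : ∀ u ∈ KA, ∃ z ∈ KB, ∀ j, Real.sign (u j) = 0 ∨ Real.sign (u j) = Real.sign (z j))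
    (y y' : ι → ℝ) (hy : ∀ j, 0 < y j) (hy' : ∀ j, 0 < y' j)
    (hmem : y - y' ∈ KA)
    (hdot : ∀ z ∈ KB, ∑ j, z j * (Real.log (y j) - Real.log (y' j)) = 0) :
    y = y' := by
  obtain ⟨z, hzB, hzs⟩ := hsign _ hmem
  have hsum := hdot z hzB
  have hterm : ∀ j, y j ≠ y' j → 0 < z j * (Real.log (y j) - Real.log (y' j)) := by
    intro j hne
    rcases hzs j with h0 | hsg
    · exact absurd (sub_eq_zero.mp (Real.sign_eq_zero_iff.mp (by simpa using h0))) hne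
    · rcases lt_or_gt_of_ne hne with hlt | hgt
      · have hu : (y - y') j < 0 := by simpa using sub_neg.mpr hlt
        rw [Real.sign_of_neg hu] at hsg
        have hzj : z j < 0 := aux_sign_neg hsg.symm
        exact mul_pos_of_neg_of_neg hzj (sub_neg.mpr (Real.log_lt_log (hy j) hlt))
      · have hu : (0 : ℝ) < (y - y') j := by simpa using sub_pos.mpr hgt
        rw [Real.sign_of_pos hu] at hsg
        have hzj : 0 < z j := aux_sign_pos hsg.symm
        exact mul_pos hzj (sub_pos.mpr (Real.log_lt_log (hy' j) hgt))
  have hnn : ∀ j ∈ Finset.univ, 0 ≤ z j * (Real.log (y j) - Real.log (y' j)) := by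
    intro j _
    by_cases hne : y j = y' j
    · simp [hne]
    · exact (hterm j hne).le
  have hall := (Finset.sum_eq_zero_iff_of_nonneg hnn).mp hsum
  funext j
  by_contra hne
  exact (hterm j hne).ne' (hall j (Finset.mem_univ j))

section
variable {ι : Type*} [Fintype ι] [DecidableEq ι]

lemma aux_birch (KA KB : Submodule ℝ (ι → ℝ))
    (hdim : Module.finrank ℝ KA = Module.finrank ℝ KB)
    (hsign : ∀ u ∈ KA, ∃ z ∈ KB, ∀ j, Real.sign (u j) = 0 ∨ Real.sign (u j) = Real.sign (z j))
    (y0 : ι → ℝ) (hy0 : ∀ j, 0 < y0 j)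
    (hbound : ∀ y : ι → ℝ, y - y0 ∈ KA → (∀ j, 0 < y j) → ∀ j, y j ≤ 1)
    (c : ι → ℝ) (hc : ∀ j, 0 < c j) :
    ∃ y : ι → ℝ, (y - y0 ∈ KA) ∧ (∀ j, 0 < y j) ∧
      ∀ z ∈ KB, ∑ j, z j * Real.log (y j) = ∑ j, z j * Real.log (c j) := by
  classical
  set d := Module.finrank ℝ KA with hd
  let vb : Module.Basis (Fin d) ℝ KA := Module.finBasis ℝ KA
  let zb : Module.Basis (Fin d) ℝ KB := Module.finBasisOfFinrankEq ℝ KB (hdim.symm.trans hd.symm)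
  set Yf : (Fin d → ℝ) → ι → ℝ := fun x j => y0 j + ∑ a, x a * (vb a : ι → ℝ) j with hYf
  have hsumK : ∀ x : Fin d → ℝ,
      ((∑ a, x a • vb a : KA) : ι → ℝ) = fun j => ∑ a, x a * (vb a : ι → ℝ) j := by
    intro x
    funext j
    rw [AddSubmonoidClass.coe_finset_sum]
    simp [Finset.sum_apply]
  have hYmem : ∀ x, Yf x - y0 ∈ KA := by
    intro x
    have h : Yf x - y0 = ((∑ a, x a • vb a : KA) : ι → ℝ) := by
      funext j
      rw [hsumK]
      simp [hYf]
    rw [h]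
    exact Submodule.coe_mem _
  set U : Set (Fin d → ℝ) := {x | ∀ j, 0 < Yf x j} with hU
  set Φ : (Fin d → ℝ) → (Fin d → ℝ) := fun x i => ∑ j, (zb i : ι → ℝ) j * Real.log (Yf x j)
    with hΦdef
  have hYcont : ∀ j, Continuous fun x : Fin d → ℝ => Yf x j := by
    intro j
    exact continuous_const.add
      (continuous_finset_sum _ fun a _ => (continuous_apply a).mul continuous_const)
  have hUopen : IsOpen U := by
    have h : U = ⋂ j, {x : Fin d → ℝ | 0 < Yf x j} := by
      ext x; simp [hU, Set.mem_iInter]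
    rw [h]
    exact isOpen_iInter_of_finite fun j => isOpen_lt continuous_const (hYcont j)
  -- open mapping via inverse function theorem
  have hderiv : ∀ x ∈ U, Filter.map Φ (𝓝 x) = 𝓝 (Φ x) := by
    intro x hx
    set lin : ι → (Fin d → ℝ) →L[ℝ] ℝ :=
      fun j => ∑ a, ((vb a : ι → ℝ) j) • ContinuousLinearMap.proj a with hlindef
    have hlin : ∀ (j : ι) (h : Fin d → ℝ), lin j h = ∑ a, h a * (vb a : ι → ℝ) j := by
      intro j h
      rw [hlindef]
      simp only [ContinuousLinearMap.coe_sum', Finset.sum_apply,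
        ContinuousLinearMap.coe_smul', Pi.smul_apply, ContinuousLinearMap.proj_apply,
        smul_eq_mul]
      exact Finset.sum_congr rfl fun a _ => mul_comm _ _
    have hY' : ∀ j, HasStrictFDerivAt (fun x => Yf x j) (lin j) x := by
      intro j
      have h2 := ((lin j).hasStrictFDerivAt (x := x)).const_add (y0 j)
      have h3 : (fun x' : Fin d → ℝ => y0 j + lin j x') = fun x' => Yf x' j := by
        funext x'
        rw [hlin]
      rwa [h3] at h2
    have hlog : ∀ j, HasStrictFDerivAt (fun x' => Real.log (Yf x' j)) ((Yf x j)⁻¹ • lin j) x :=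
      fun j => by
        have := (Real.hasStrictDerivAt_log (hx j).ne').comp_hasStrictFDerivAt x (hY' j)
        exact this
    set Di : Fin d → (Fin d → ℝ) →L[ℝ] ℝ :=
      fun i => ∑ j, ((zb i : ι → ℝ) j) • ((Yf x j)⁻¹ • lin j) with hDidef
    have hPhii : ∀ i, HasStrictFDerivAt (fun x' => Φ x' i) (Di i) x := by
      intro i
      have hs := HasStrictFDerivAt.sum (x := x) (u := Finset.univ)
        (A := fun (j : ι) (x' : Fin d → ℝ) => (zb i : ι → ℝ) j * Real.log (Yf x' j))
        (A' := fun j => ((zb i : ι → ℝ) j) • ((Yf x j)⁻¹ • lin j))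
        (fun j _ => (hlog j).const_mul _)
      rw [Finset.sum_fn] at hs
      exact hs
    set DPhi : (Fin d → ℝ) →L[ℝ] (Fin d → ℝ) := ContinuousLinearMap.pi Di with hDPhi
    have hPhi : HasStrictFDerivAt Φ DPhi x := by
      apply hasStrictFDerivAt_pi'.mpr
      intro i
      rw [hDPhi, ContinuousLinearMap.proj_pi]
      exact hPhii i
    have hker : ∀ h : Fin d → ℝ, DPhi h = 0 → h = 0 := by
      intro h hh0
      set vK : KA := ∑ a, h a • vb a with hvK
      have hAv : (vK : ι → ℝ) ∈ KA := Submodule.coe_mem vK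
      obtain ⟨z', hzB', hzs'⟩ := hsign _ hAv
      have hvco : ∀ j, (vK : ι → ℝ) j = lin j h := by
        intro j
        rw [hlin, hvK, hsumK]
      have hbasis0 : ∀ i, ∑ j, (zb i : ι → ℝ) j * ((Yf x j)⁻¹ * (vK : ι → ℝ) j) = 0 := by
        intro i
        have hDi := congrFun hh0 i
        rw [hDPhi] at hDi
        simp only [ContinuousLinearMap.pi_apply, Pi.zero_apply] at hDi
        rw [hDidef] at hDi
        simp only [ContinuousLinearMap.coe_sum', Finset.sum_apply,
          ContinuousLinearMap.coe_smul', Pi.smul_apply, smul_eq_mul] at hDi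
        rw [← hDi]
        exact Finset.sum_congr rfl fun j _ => by rw [hvco]
      have hzdot : ∑ j, z' j * ((Yf x j)⁻¹ * (vK : ι → ℝ) j) = 0 := by
        have he := aux_expand KB zb (fun j => (Yf x j)⁻¹ * (vK : ι → ℝ) j) ⟨z', hzB'⟩
        simp only at he
        rw [he]
        refine Finset.sum_eq_zero fun i _ => ?_
        rw [hbasis0 i, mul_zero]
      have hterm : ∀ j, (vK : ι → ℝ) j ≠ 0 → 0 < z' j * ((Yf x j)⁻¹ * (vK : ι → ℝ) j) := by
        intro j hne
        rcases hzs' j with h0 | hsg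
        · exact absurd (Real.sign_eq_zero_iff.mp h0) hne
        · rcases lt_or_gt_of_ne hne with hlt | hgt
          · rw [Real.sign_of_neg hlt] at hsg
            have hzj : z' j < 0 := aux_sign_neg hsg.symm
            exact mul_pos_of_neg_of_neg hzj
              (mul_neg_of_pos_of_neg (inv_pos.mpr (hx j)) hlt)
          · rw [Real.sign_of_pos hgt] at hsg
            have hzj : 0 < z' j := aux_sign_pos hsg.symm
            exact mul_pos hzj (mul_pos (inv_pos.mpr (hx j)) hgt)
      have hvzero : ∀ j, (vK : ι → ℝ) j = 0 := by
        intro j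
        by_contra hne
        have hnn : ∀ j ∈ Finset.univ, 0 ≤ z' j * ((Yf x j)⁻¹ * (vK : ι → ℝ) j) := by
          intro j' _
          by_cases h0 : (vK : ι → ℝ) j' = 0
          · simp [h0]
          · exact (hterm j' h0).le
        have hall := (Finset.sum_eq_zero_iff_of_nonneg hnn).mp hzdot
        exact (hterm j hne).ne' (hall j (Finset.mem_univ j))
      have hvK0 : vK = 0 := by
        ext j
        exact hvzero j
      have hli : ∀ a, h a = 0 :=
        Fintype.linearIndependent_iff.mp vb.linearIndependent h (by rw [← hvK]; exact hvK0)
      funext a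
      exact hli a
    have hinj : Function.Injective (DPhi : (Fin d → ℝ) →ₗ[ℝ] (Fin d → ℝ)) := by
      rw [← LinearMap.ker_eq_bot, LinearMap.ker_eq_bot']
      intro m hm
      exact hker m hm
    have hbij : Function.Bijective (DPhi : (Fin d → ℝ) →ₗ[ℝ] (Fin d → ℝ)) :=
      ⟨hinj, LinearMap.injective_iff_surjective.mp hinj⟩
    let e : (Fin d → ℝ) ≃ₗ[ℝ] (Fin d → ℝ) := LinearEquiv.ofBijective _ hbij
    let eC : (Fin d → ℝ) ≃L[ℝ] (Fin d → ℝ) := e.toContinuousLinearEquiv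
    have hcoe : (eC : (Fin d → ℝ) →L[ℝ] (Fin d → ℝ)) = DPhi := by
      ext h
      rfl
    have hPhi' : HasStrictFDerivAt Φ (eC : (Fin d → ℝ) →L[ℝ] (Fin d → ℝ)) x := by
      rw [hcoe]
      exact hPhi
    exact hPhi'.map_nhds_eq_of_equiv
  have hOpenIm : IsOpen (Φ '' U) := by
    rw [isOpen_iff_mem_nhds]
    rintro s ⟨x, hxU, rfl⟩
    rw [← hderiv x hxU]
    exact Filter.image_mem_map (hUopen.mem_nhds hxU)
  have hClosedIm : IsClosed (Φ '' U) := by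
    refine IsSeqClosed.isClosed ?_
    intro S s hS hlim
    choose xx hxxU hxxPhi using hS
    set Y : ℕ → ι → ℝ := fun k => Yf (xx k) with hYdef
    have hYpos : ∀ k j, 0 < Y k j := fun k j => hxxU k j
    have hYle : ∀ k j, Y k j ≤ 1 := fun k => hbound (Y k) (hYmem (xx k)) (hYpos k)
    have hmemIcc : ∀ k, Y k ∈ Set.Icc (0 : ι → ℝ) 1 := by
      intro k
      exact Set.mem_Icc.mpr ⟨Pi.le_def.mpr fun j => (hYpos k j).le,
        Pi.le_def.mpr fun j => hYle k j⟩
    obtain ⟨ystar, hystar, φ, hφmono, hφtend⟩ :=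
      (isCompact_Icc : IsCompact (Set.Icc (0 : ι → ℝ) 1)).tendsto_subseq hmemIcc
    have hYcomp : ∀ j, Tendsto (fun k => Y (φ k) j) atTop (𝓝 (ystar j)) := by
      intro j
      exact (tendsto_pi_nhds.mp hφtend) j
    have h0le : ∀ j, 0 ≤ ystar j :=
      fun j => Pi.le_def.mp (Set.mem_Icc.mp hystar).1 j
    have hPhilim : Tendsto (fun k => Φ (xx (φ k))) atTop (𝓝 s) := by
      have h1 : Tendsto (fun k => S (φ k)) atTop (𝓝 s) := hlim.comp hφmono.tendsto_atTop
      have h2 : (fun k => Φ (xx (φ k))) = fun k => S (φ k) := by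
        funext k; rw [hxxPhi]
      rwa [h2]
    have hKAclosed : IsClosed (KA : Set (ι → ℝ)) := Submodule.closed_of_finiteDimensional KA
    have humem : ystar - y0 ∈ KA := by
      have hseq : ∀ k, Y (φ k) - y0 ∈ (KA : Set (ι → ℝ)) := fun k => hYmem (xx (φ k))
      have htend : Tendsto (fun k => Y (φ k) - y0) atTop (𝓝 (ystar - y0)) :=
        hφtend.sub tendsto_const_nhds
      exact hKAclosed.isSeqClosed hseq htend
    by_cases hsp : ∀ j, 0 < ystar j
    · set xs : Fin d → ℝ := fun a => vb.repr ⟨ystar - y0, humem⟩ a with hxs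
      have hYxs : Yf xs = ystar := by
        funext j
        have h1 : (∑ a, xs a • vb a) = (⟨ystar - y0, humem⟩ : KA) := vb.sum_repr _
        have h2 : ((∑ a, xs a • vb a : KA) : ι → ℝ) j = ystar j - y0 j := by
          rw [h1]
          rfl
        rw [hsumK] at h2
        show y0 j + ∑ a, xs a * (vb a : ι → ℝ) j = ystar j
        simp only at h2
        rw [h2]
        ring
      have hxsU : xs ∈ U := by
        simp only [hU, Set.mem_setOf_eq, hYxs]
        exact hsp
      refine ⟨xs, hxsU, ?_⟩
      have hΨ : Tendsto (fun k => Φ (xx (φ k))) atTop (𝓝 (Φ xs)) := by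
        rw [tendsto_pi_nhds]
        intro i
        have hgoal : Φ xs i = ∑ j, (zb i : ι → ℝ) j * Real.log (ystar j) := by
          simp only [hΦdef, hYxs]
        rw [hgoal]
        apply tendsto_finset_sum
        intro j _
        exact tendsto_const_nhds.mul ((Real.continuousAt_log (hsp j).ne').tendsto.comp (hYcomp j))
      exact tendsto_nhds_unique hΨ hPhilim
    · exfalso
      push_neg at hsp
      obtain ⟨j0, hj0le⟩ := hsp
      have hj00 : ystar j0 = 0 := le_antisymm hj0le (h0le j0)
      obtain ⟨z, hzB, hzs⟩ := hsign _ humem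
      have hzneg : ∀ j, ystar j = 0 → z j < 0 := by
        intro j hj
        have hu : (ystar - y0) j < 0 := by
          have := hy0 j
          simp only [Pi.sub_apply, hj, zero_sub]
          linarith
        rcases hzs j with h0 | hsg
        · rw [Real.sign_of_neg hu] at h0; norm_num at h0
        · rw [Real.sign_of_neg hu] at hsg
          exact aux_sign_neg hsg.symm
      set q : ℕ → ℝ := fun k => ∑ j, z j * Real.log (Y (φ k) j) with hq
      have hqconv : Tendsto q atTop (𝓝 (∑ i, zb.repr ⟨z, hzB⟩ i * s i)) := by
        have hqeq : ∀ k, q k = ∑ i, zb.repr ⟨z, hzB⟩ i *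
            ∑ j, (zb i : ι → ℝ) j * Real.log (Y (φ k) j) := by
          intro k
          exact aux_expand KB zb (fun j => Real.log (Y (φ k) j)) ⟨z, hzB⟩
        refine Tendsto.congr (fun k => (hqeq k).symm) ?_
        apply tendsto_finset_sum
        intro i _
        exact tendsto_const_nhds.mul ((tendsto_pi_nhds.mp hPhilim) i)
      have hterm0 : Tendsto (fun k => z j0 * Real.log (Y (φ k) j0)) atTop atTop := by
        rw [tendsto_const_mul_atTop_of_neg (hzneg j0 hj00)]
        apply Real.tendsto_log_nhdsGT_zero.comp
        refine tendsto_nhdsWithin_of_tendsto_nhds_of_eventually_within _ ?_ ?_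
        · simpa [hj00] using hYcomp j0
        · exact Eventually.of_forall fun k => hYpos (φ k) j0
      set Zc : Finset ι := Finset.univ.filter (fun j => ¬ ystar j = 0) with hZc
      have hrest : Tendsto (fun k => ∑ j ∈ Zc, z j * Real.log (Y (φ k) j)) atTop
          (𝓝 (∑ j ∈ Zc, z j * Real.log (ystar j))) := by
        apply tendsto_finset_sum
        intro j hj
        have hjne : ¬ ystar j = 0 := by
          rw [hZc] at hj
          exact (Finset.mem_filter.mp hj).2
        have hpos : 0 < ystar j := lt_of_le_of_ne (h0le j) (Ne.symm hjne)
        exact tendsto_const_nhds.mul ((Real.continuousAt_log hpos.ne').tendsto.comp (hYcomp j))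
      have hlower : ∀ k, (∑ j ∈ Zc, z j * Real.log (Y (φ k) j))
          + z j0 * Real.log (Y (φ k) j0) ≤ q k := by
        intro k
        have hsplit : q k = (∑ j ∈ Finset.univ.filter (fun j => ystar j = 0),
            z j * Real.log (Y (φ k) j)) + ∑ j ∈ Zc, z j * Real.log (Y (φ k) j) := by
          rw [hq, hZc]
          exact (Finset.sum_filter_add_sum_filter_not _ _ _).symm
        have hj0mem : j0 ∈ Finset.univ.filter (fun j : ι => ystar j = 0) := by
          simp [hj00]
        have hsingle : z j0 * Real.log (Y (φ k) j0) ≤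
            ∑ j ∈ Finset.univ.filter (fun j : ι => ystar j = 0),
              z j * Real.log (Y (φ k) j) := by
          apply Finset.single_le_sum ?_ hj0mem
          intro j hj
          have hj' : ystar j = 0 := (Finset.mem_filter.mp hj).2
          exact mul_nonneg_iff.mpr (Or.inr ⟨(hzneg j hj').le,
            Real.log_nonpos (hYpos (φ k) j).le (hYle (φ k) j)⟩)
        rw [hsplit]
        linarith
      have hqtop : Tendsto q atTop atTop :=
        tendsto_atTop_mono hlower (hrest.add_atTop hterm0)
      exact not_tendsto_atTop_of_tendsto_nhds hqconv hqtop
  have hne : (Φ '' U).Nonempty := by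
    refine ⟨Φ 0, 0, ?_, rfl⟩
    intro j
    simpa [hYf] using hy0 j
  have huniv : Φ '' U = Set.univ := IsClopen.eq_univ ⟨hClosedIm, hOpenIm⟩ hne
  have hmemt : (fun i => ∑ j, (zb i : ι → ℝ) j * Real.log (c j)) ∈ Φ '' U := by
    rw [huniv]; exact Set.mem_univ _
  obtain ⟨x, hxU, hΦx⟩ := hmemt
  refine ⟨Yf x, hYmem x, hxU, ?_⟩
  intro z hz
  have e1 := aux_expand KB zb (fun j => Real.log (Yf x j)) ⟨z, hz⟩
  have e2 := aux_expand KB zb (fun j => Real.log (c j)) ⟨z, hz⟩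
  rw [e1, e2]
  refine Finset.sum_congr rfl fun i _ => ?_
  have := congrFun hΦx i
  simp only [hΦdef] at this
  rw [this]
end

/-- Unique existence of solutions on the coefficient polytope for all parameters:
if `dim (ker A') = d = dim D` and `sign(ker A') ⊆ sign(D)^↓` (lower closure with respect
to `0 < −`, `0 < +`), then `|Y_c| = 1` for all `c > 0`. -/
theorem stmt_7 {n n' l : ℕ} (mv : Fin l → ℕ) (hmv : ∀ i, 0 < mv i)
    (A : Matrix (Fin n') (Σ i : Fin l, Fin (mv i)) ℝ)
    (B : Matrix (Fin n) (Σ i : Fin l, Fin (mv i)) ℝ)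
    (hrank : A.rank = n')
    (hpos : ∃ y : (Σ i : Fin l, Fin (mv i)) → ℝ, A.mulVec y = 0 ∧ ∀ j, 0 < y j)
    (J : Matrix (Fin l) (Σ i : Fin l, Fin (mv i)) ℝ)
    (hJ : ∀ (i j : Fin l) (a : Fin (mv j)), J i ⟨j, a⟩ = if j = i then 1 else 0)
    (hPpos : ∃ y : (Σ i : Fin l, Fin (mv i)) → ℝ,
      A.mulVec y = 0 ∧ (∀ j, 0 < y j) ∧ J.mulVec y = 1)
    (hdim : Module.finrank ℝ (LinearMap.ker (Matrix.fromRows A J).mulVecLin) =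
      Module.finrank ℝ (LinearMap.ker (Matrix.fromRows B J).mulVecLin))
    (hsign : ∀ u : (Σ i : Fin l, Fin (mv i)) → ℝ,
      (Matrix.fromRows A J).mulVec u = 0 →
      ∃ z : (Σ i : Fin l, Fin (mv i)) → ℝ,
        (Matrix.fromRows B J).mulVec z = 0 ∧
        ∀ j, Real.sign (u j) = 0 ∨ Real.sign (u j) = Real.sign (z j)) :
    ∀ c : (Σ i : Fin l, Fin (mv i)) → ℝ, (∀ j, 0 < c j) →
      ∃! y : (Σ i : Fin l, Fin (mv i)) → ℝ,
        (A.mulVec y = 0 ∧ (∀ j, 0 < y j) ∧ J.mulVec y = 1) ∧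
        ∀ z : (Σ i : Fin l, Fin (mv i)) → ℝ,
          (Matrix.fromRows B J).mulVec z = 0 →
            ∏ j, y j ^ z j = ∏ j, c j ^ z j := by
  intro c hc
  classical
  obtain ⟨y0, hAy0, hy0, hJy0⟩ := hPpos
  set KA := LinearMap.ker (Matrix.fromRows A J).mulVecLin with hKA
  set KB := LinearMap.ker (Matrix.fromRows B J).mulVecLin with hKB
  have hmemA : ∀ w, w ∈ KA ↔ (A.mulVec w = 0 ∧ J.mulVec w = 0) := by
    intro w
    rw [hKA, LinearMap.mem_ker, Matrix.mulVecLin_apply, aux_fromRows_zero]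
  have hmemB : ∀ w, w ∈ KB ↔ (B.mulVec w = 0 ∧ J.mulVec w = 0) := by
    intro w
    rw [hKB, LinearMap.mem_ker, Matrix.mulVecLin_apply, aux_fromRows_zero]
  have hsign' : ∀ u ∈ KA, ∃ z ∈ KB,
      ∀ j, Real.sign (u j) = 0 ∨ Real.sign (u j) = Real.sign (z j) := by
    intro u hu
    obtain ⟨z, hz, hs⟩ := hsign u
      (by rwa [hKA, LinearMap.mem_ker, Matrix.mulVecLin_apply] at hu)
    exact ⟨z, by rw [hKB, LinearMap.mem_ker, Matrix.mulVecLin_apply]; exact hz, hs⟩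
  have hJsum : ∀ (y : (Σ i : Fin l, Fin (mv i)) → ℝ) (i : Fin l),
      J.mulVec y i = ∑ a : Fin (mv i), y ⟨i, a⟩ := by
    intro y i
    show ∑ j, J i j * y j = _
    rw [← Finset.univ_sigma_univ, Finset.sum_sigma]
    have h1 : ∀ i' : Fin l, ∑ a : Fin (mv i'), J i ⟨i', a⟩ * y ⟨i', a⟩
        = if i' = i then ∑ a : Fin (mv i'), y ⟨i', a⟩ else 0 := by
      intro i'
      by_cases hii : i' = i
      · simp [hJ, hii]
      · simp [hJ, hii]
    rw [Finset.sum_congr rfl fun i' _ => h1 i']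
    rw [Finset.sum_ite_eq' Finset.univ i (fun i' => ∑ a : Fin (mv i'), y ⟨i', a⟩)]
    simp
  have hbound : ∀ y : (Σ i : Fin l, Fin (mv i)) → ℝ,
      y - y0 ∈ KA → (∀ j, 0 < y j) → ∀ j, y j ≤ 1 := by
    intro y hmem hp j
    have hJy : J.mulVec y = 1 := by
      have h := ((hmemA _).mp hmem).2
      have h2 : J.mulVec y = J.mulVec (y - y0) + J.mulVec y0 := by
        rw [← Matrix.mulVec_add, sub_add_cancel]
      rw [h2, h, hJy0]
      simp
    obtain ⟨i, a⟩ := j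
    have h1 : ∑ a' : Fin (mv i), y ⟨i, a'⟩ = 1 := by
      have := congrFun hJy i
      rwa [hJsum] at this
    calc y ⟨i, a⟩ ≤ ∑ a' : Fin (mv i), y ⟨i, a'⟩ :=
          Finset.single_le_sum (fun a' _ => (hp ⟨i, a'⟩).le) (Finset.mem_univ a)
      _ = 1 := h1
  obtain ⟨y, hymem, hypos, hysum⟩ := aux_birch KA KB hdim hsign' y0 hy0 hbound c hc
  have hAJy : A.mulVec y = 0 ∧ J.mulVec y = 1 := by
    have h := (hmemA _).mp hymem
    constructor
    · have h2 : A.mulVec y = A.mulVec (y - y0) + A.mulVec y0 := by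
        rw [← Matrix.mulVec_add, sub_add_cancel]
      rw [h2, h.1, hAy0]; simp
    · have h2 : J.mulVec y = J.mulVec (y - y0) + J.mulVec y0 := by
        rw [← Matrix.mulVec_add, sub_add_cancel]
      rw [h2, h.2, hJy0]; simp
  have prodeq : ∀ (w : (Σ i : Fin l, Fin (mv i)) → ℝ) (hw : ∀ j, 0 < w j)
      (z : (Σ i : Fin l, Fin (mv i)) → ℝ),
      (∏ j, w j ^ z j) = Real.exp (∑ j, z j * Real.log (w j)) :=
    fun w hw z => aux_prod_eq_exp w z hw
  refine ⟨y, ⟨⟨hAJy.1, hypos, hAJy.2⟩, ?_⟩, ?_⟩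
  · intro z hz
    have hzK : z ∈ KB := by
      rw [hKB, LinearMap.mem_ker, Matrix.mulVecLin_apply]; exact hz
    rw [prodeq y hypos z, prodeq c hc z, hysum z hzK]
  · rintro y' ⟨⟨hA', hp', hJ'⟩, hprod'⟩
    apply aux_unique KA KB hsign' y' y hp' hypos
    · rw [hmemA]
      constructor
      · rw [Matrix.mulVec_sub, hA', hAJy.1, sub_self]
      · rw [Matrix.mulVec_sub, hJ', hAJy.2, sub_self]
    · intro z hzK
      have hz : (Matrix.fromRows B J).mulVec z = 0 := by
        rw [hKB, LinearMap.mem_ker, Matrix.mulVecLin_apply] at hzK; exact hzK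
      have h1 := hprod' z hz
      have h2 : (∏ j, y j ^ z j) = ∏ j, c j ^ z j := by
        rw [prodeq y hypos z, prodeq c hc z, hysum z hzK]
      rw [prodeq y' hp' z, prodeq c hc z] at h1
      rw [prodeq y hypos z, prodeq c hc z] at h2
      have e1 := Real.exp_eq_exp.mp h1
      have e2 := Real.exp_eq_exp.mp h2
      simp only [mul_sub]
      rw [Finset.sum_sub_distrib, e1, e2, sub_self]
end

section
/- Let A ∈ ℝ^{n×(n+2)} have full row rank with ker A ∩ ℝ^{n+2}_> ≠ ∅. If ker A is not a direct product (there is no partition of the coordinates {1,…,n+2} into two nonempty blocks such that ker A equals the direct product of its coordinate projections onto the two blocks), then, after a suitable permutation of the columns of A, one has ker A = c ∘ im(1_{n+2}, q) = { c ∘ (s·1_{n+2} + t·q) : s,t ∈ ℝ }, where c ∈ ℝ^{n+2}_> and q ∈ ℝ^{n+2} satisfies 1 = q_1 ≥ q_2 ≥ … ≥ q_{n+2} = −1. -/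
/-!
A vector `y > 0` of the two-dimensional kernel is completed to a basis `y, z`; with the
ratio `r = z / y` the kernel is `y ∘ im(1, r)`. Sorting the columns makes `r` antitone, and
an affine change of `r`, which does not change `im(1, r)`, moves its extreme values to `±1`.
-/

open Module Submodule

theorem Matrix.rank_add_finrank_ker_mulVecLin {m n K : Type*} [Fintype n] [Field K]
    (A : Matrix m n K) : A.rank + finrank K (LinearMap.ker A.mulVecLin) = Fintype.card n := by
  rw [Matrix.rank, LinearMap.finrank_range_add_finrank_ker, finrank_fintype_fun_eq_card]

theorem Matrix.ker_mulVecLin_submatrix_equiv {m n l K : Type*} [Fintype n] [Fintype l]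
    [CommSemiring K] (A : Matrix m n K) (e : l ≃ n) :
    LinearMap.ker (A.submatrix id e).mulVecLin =
      (LinearMap.ker A.mulVecLin).map (LinearMap.funLeft K K e) := by
  ext w
  simp only [LinearMap.mem_ker, Matrix.mulVecLin_apply, Matrix.submatrix_mulVec_equiv, mem_map]
  constructor
  · intro h
    exact ⟨w ∘ e.symm, by simpa using h, by ext; simp [LinearMap.funLeft_apply]⟩
  · rintro ⟨v, hv, rfl⟩
    ext i
    simpa [LinearMap.funLeft_apply, Function.comp_def] using congrFun hv i

section SpanPair

variable {K M : Type*} [Field K] [AddCommGroup M] [Module K M]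

theorem exists_eq_span_pair_of_finrank_eq_two {V : Submodule K M} (hV : finrank K V = 2)
    {y : M} (hy : y ∈ V) (hy0 : y ≠ 0) : ∃ z, z ∉ K ∙ y ∧ V = span K {y, z} := by
  have : FiniteDimensional K V := .of_finrank_pos (by omega)
  have hyV : K ∙ y < V := by
    refine lt_of_le_of_ne ((span_singleton_le_iff_mem y V).2 hy) fun h => ?_
    have := finrank_span_singleton (K := K) hy0
    rw [h, hV] at this
    omega
  obtain ⟨z, hz, hzy⟩ := SetLike.exists_of_lt hyV
  have hle : span K {y, z} ≤ V := by
    rw [span_le, Set.insert_subset_iff, Set.singleton_subset_iff]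
    exact ⟨hy, hz⟩
  have : FiniteDimensional K (span K {y, z}) := .span_of_finite K (Set.toFinite _)
  have hlt : K ∙ y < span K {y, z} := by
    refine lt_of_le_of_ne (span_mono (by simp)) fun h => hzy ?_
    rw [h]
    exact subset_span (by simp)
  refine ⟨z, hzy, (eq_of_le_of_finrank_le hle ?_).symm⟩
  have := finrank_lt_finrank_of_lt hlt
  rw [finrank_span_singleton hy0] at this
  omega

theorem span_pair_smul_add_smul (x y : M) {a : K} (ha : a ≠ 0) (b : K) :
    span K {x, a • y + b • x} = span K {x, y} := by
  refine le_antisymm (span_le.2 ?_) (span_le.2 ?_) <;>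
    rw [Set.insert_subset_iff, Set.singleton_subset_iff] <;> refine ⟨subset_span (by simp), ?_⟩
  · exact mem_span_pair.2 ⟨b, a, add_comm _ _⟩
  · refine mem_span_pair.2 ⟨-(a⁻¹ * b), a⁻¹, ?_⟩
    rw [smul_add, smul_smul, smul_smul, inv_mul_cancel₀ ha]
    module

end SpanPair

section Ratio

variable {ι K : Type*} [Field K]

theorem mem_span_pair_mul_iff (c q w : ι → K) :
    w ∈ span K {c, c * q} ↔ ∃ s t : K, w = fun j => c j * (s + t * q j) := by
  rw [mem_span_pair]
  refine exists₂_congr fun s t => ⟨fun h => ?_, fun h => ?_⟩ <;> subst h <;> funext j <;>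
    simp only [Pi.add_apply, Pi.smul_apply, Pi.mul_apply, smul_eq_mul] <;> ring

theorem exists_eq_span_pair_mul [Fintype ι] [Nonempty ι] {V : Submodule K (ι → K)}
    (hV : finrank K V = 2) {y : ι → K} (hy : y ∈ V) (hy0 : ∀ j, y j ≠ 0) :
    ∃ r : ι → K, (∃ i j, r i ≠ r j) ∧ V = span K {y, y * r} := by
  obtain ⟨z, hzy, rfl⟩ :=
    exists_eq_span_pair_of_finrank_eq_two hV hy fun h => hy0 (Classical.arbitrary ι) (by simp [h])
  have hz : y * (z / y) = z := by
    funext j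
    exact mul_div_cancel₀ (z j) (hy0 j)
  refine ⟨z / y, ?_, by rw [hz]⟩
  by_contra! hconst
  obtain ⟨j₀⟩ := ‹Nonempty ι›
  refine hzy (mem_span_singleton.2 ⟨(z / y) j₀, ?_⟩)
  funext j
  simp only [Pi.smul_apply, smul_eq_mul, hconst j₀ j, Pi.div_apply, div_mul_cancel₀ _ (hy0 j)]

end Ratio

theorem exists_perm_antitone_comp {α : Type*} [LinearOrder α] {m : ℕ} (r : Fin m → α) :
    ∃ σ : Equiv.Perm (Fin m), Antitone (r ∘ σ) :=
  ⟨Tuple.sort (OrderDual.toDual ∘ r), monotone_toDual_comp_iff.1 (Tuple.monotone_sort _)⟩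

theorem Antitone.exists_span_pair_mul_eq {k : ℕ} {p : Fin (k + 2) → ℝ} (hp : Antitone p)
    (hne : ∃ i j, p i ≠ p j) (c : Fin (k + 2) → ℝ) :
    ∃ q : Fin (k + 2) → ℝ, q 0 = 1 ∧ q (Fin.last (k + 1)) = -1 ∧ Antitone q ∧
      span ℝ {c, c * q} = span ℝ {c, c * p} := by
  set M := p 0
  set m := p (Fin.last (k + 1))
  have hmM : m < M := by
    refine (hp (Fin.zero_le _)).lt_of_ne fun h => ?_
    obtain ⟨i, j, hij⟩ := hne
    have hconst : ∀ i, p i = M := fun i =>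
      le_antisymm (hp (Fin.zero_le i)) (h.symm.le.trans (hp (Fin.le_last i)))
    exact hij ((hconst i).trans (hconst j).symm)
  have hd : 0 < M - m := sub_pos.2 hmM
  refine ⟨fun j => (2 * p j - (M + m)) / (M - m), ?_, ?_, ?_, ?_⟩
  · field_simp
    ring
  · field_simp
    ring
  · exact fun i j hij => div_le_div_of_nonneg_right (by linarith [hp hij]) hd.le
  · have hq : (c * fun j => (2 * p j - (M + m)) / (M - m)) =
        (2 / (M - m)) • (c * p) + (-(M + m) / (M - m)) • c := by
      funext j
      simp only [Pi.mul_apply, Pi.add_apply, Pi.smul_apply, smul_eq_mul]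
      field_simp
      ring
    rw [hq, span_pair_smul_add_smul _ _ (by positivity)]

theorem stmt_8_general {n : ℕ} (A : Matrix (Fin n) (Fin (n + 2)) ℝ)
    (hrank : A.rank = n)
    (hpos : ∃ y : Fin (n + 2) → ℝ, A.mulVec y = 0 ∧ ∀ j, 0 < y j) :
    ∃ (σ : Equiv.Perm (Fin (n + 2))) (c q : Fin (n + 2) → ℝ),
      (∀ j, 0 < c j) ∧ q 0 = 1 ∧ q (Fin.last (n + 1)) = -1 ∧
      (∀ i j : Fin (n + 2), i ≤ j → q j ≤ q i) ∧
      ∀ y : Fin (n + 2) → ℝ,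
        (A.submatrix id σ).mulVec y = 0 ↔ ∃ s t : ℝ, y = fun j => c j * (s + t * q j) := by
  obtain ⟨y, hyA, hy⟩ := hpos
  have hV : finrank ℝ (LinearMap.ker A.mulVecLin) = 2 := by
    have := A.rank_add_finrank_ker_mulVecLin
    rw [hrank, Fintype.card_fin] at this
    omega
  obtain ⟨r, ⟨i, j, hr⟩, hker⟩ := exists_eq_span_pair_mul hV hyA fun j => (hy j).ne'
  obtain ⟨σ, hσ⟩ := exists_perm_antitone_comp r
  obtain ⟨q, hq0, hq1, hq, hspan⟩ :=
    hσ.exists_span_pair_mul_eq ⟨σ.symm i, σ.symm j, by simpa using hr⟩ (y ∘ σ)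
  refine ⟨σ, y ∘ σ, q, fun j => hy (σ j), hq0, hq1, fun i j hij => hq hij, fun w => ?_⟩
  rw [← mem_span_pair_mul_iff, hspan, ← Matrix.mulVecLin_apply, ← LinearMap.mem_ker,
    A.ker_mulVecLin_submatrix_equiv, hker, map_span, Set.image_pair]
  rfl

/-- If `A ∈ ℝ^{n×(n+2)}` has full row rank, `ker A` contains a positive vector, and
`ker A` is not a direct product with respect to any nontrivial partition of the
coordinates, then after a suitable permutation of the columns,
`ker A = c ∘ im(1, q)` with `c > 0` and `1 = q₁ ≥ … ≥ q_{n+2} = −1`. -/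
theorem stmt_8 {n : ℕ} (A : Matrix (Fin n) (Fin (n + 2)) ℝ)
    (hrank : A.rank = n)
    (hpos : ∃ y : Fin (n + 2) → ℝ, A.mulVec y = 0 ∧ ∀ j, 0 < y j)
    (hnd : ¬∃ S : Finset (Fin (n + 2)), S.Nonempty ∧ Sᶜ.Nonempty ∧
      ∀ u w : Fin (n + 2) → ℝ, A.mulVec u = 0 → A.mulVec w = 0 →
        A.mulVec (fun j => if j ∈ S then u j else w j) = 0) :
    ∃ (σ : Equiv.Perm (Fin (n + 2))) (c q : Fin (n + 2) → ℝ),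
      (∀ j, 0 < c j) ∧ q 0 = 1 ∧ q (Fin.last (n + 1)) = -1 ∧
      (∀ i j : Fin (n + 2), i ≤ j → q j ≤ q i) ∧
      ∀ y : Fin (n + 2) → ℝ,
        (A.submatrix id σ).mulVec y = 0 ↔ ∃ s t : ℝ, y = fun j => c j * (s + t * q j) :=
  stmt_8_general A hrank hpos
end

section
/- For q, q' ∈ [−1,1] define f_{q,q'} : (−1,1) → ℝ by f_{q,q'}(t) = q/(1+tq) − q'/(1+tq'). Let q_1,…,q_{n+2} ∈ [−1,1] with q_1 > q_2 > … > q_{n+2}. Then for every 1 ≤ k ≤ n+1 and every t ∈ (−1,1), the Wronskian satisfies W(f_{q_1,q_2}, f_{q_2,q_3}, …, f_{q_k,q_{k+1}})(t) = ∏_{i=1}^{k} (i−1)! ∏_{j=i+1}^{k+1} f_{q_i,q_j}(t) > 0. In particular, the sequence of functions f_{q_1,q_2},…,f_{q_{n+1},q_{n+2}} obeys Descartes' rule of signs. -/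
open Finset Matrix



private lemma one_add_pos' {t a : ℝ} (ht : t ∈ Set.Ioo (-1:ℝ) 1) (ha1 : -1 ≤ a) (ha2 : a ≤ 1) :
    0 < 1 + t * a := by
  obtain ⟨ht1, ht2⟩ := ht
  have h1 : |t * a| ≤ |t| := by
    rw [abs_mul]
    exact mul_le_of_le_one_right (abs_nonneg t) (abs_le.mpr ⟨ha1, ha2⟩)
  have h2 : |t| < 1 := abs_lt.mpr ⟨ht1, ht2⟩
  have h3 := neg_abs_le (t * a)
  linarith

private lemma iter_fq (a b : ℝ) (m : ℕ) :
    ∀ t : ℝ, 1 + t * a ≠ 0 → 1 + t * b ≠ 0 →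
      iteratedDeriv m (fun t => a / (1 + t * a) - b / (1 + t * b)) t
        = (-1) ^ m * m.factorial *
            ((a / (1 + t * a)) ^ (m + 1) - (b / (1 + t * b)) ^ (m + 1)) := by
  induction m with
  | zero => intro t ha hb; simp
  | succ m ih =>
    intro t ha hb
    rw [iteratedDeriv_succ]
    have hopen : IsOpen {s : ℝ | 1 + s * a ≠ 0 ∧ 1 + s * b ≠ 0} := by
      have h1 : IsOpen {s : ℝ | 1 + s * a ≠ 0} :=
        isOpen_compl_singleton.preimage (by continuity)
      have h2 : IsOpen {s : ℝ | 1 + s * b ≠ 0} :=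
        isOpen_compl_singleton.preimage (by continuity)
      exact h1.inter h2
    have hmem : {s : ℝ | 1 + s * a ≠ 0 ∧ 1 + s * b ≠ 0} ∈ nhds t :=
      hopen.mem_nhds ⟨ha, hb⟩
    have heq : iteratedDeriv m (fun t => a / (1 + t * a) - b / (1 + t * b))
        =ᶠ[nhds t] fun s => (-1) ^ m * m.factorial *
            ((a / (1 + s * a)) ^ (m + 1) - (b / (1 + s * b)) ^ (m + 1)) :=
      Filter.eventually_of_mem hmem fun s hs => ih s hs.1 hs.2
    rw [heq.deriv_eq]
    have hA : HasDerivAt (fun s : ℝ => a / (1 + s * a)) (a * (-a / (1 + t * a) ^ 2)) t := by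
      have h1 : HasDerivAt (fun s : ℝ => 1 + s * a) a t := by
        simpa using ((hasDerivAt_id t).mul_const a).const_add 1
      simpa [div_eq_mul_inv] using (h1.inv ha).const_mul a
    have hB : HasDerivAt (fun s : ℝ => b / (1 + s * b)) (b * (-b / (1 + t * b) ^ 2)) t := by
      have h1 : HasDerivAt (fun s : ℝ => 1 + s * b) b t := by
        simpa using ((hasDerivAt_id t).mul_const b).const_add 1
      simpa [div_eq_mul_inv] using (h1.inv hb).const_mul b
    have hD : HasDerivAt
        (fun s => (-1:ℝ) ^ m * m.factorial *
            ((a / (1 + s * a)) ^ (m + 1) - (b / (1 + s * b)) ^ (m + 1)))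
        ((-1:ℝ) ^ m * m.factorial *
          ((m+1) * (a / (1 + t * a)) ^ m * (a * (-a / (1 + t * a) ^ 2))
            - (m+1) * (b / (1 + t * b)) ^ m * (b * (-b / (1 + t * b) ^ 2)))) t := by
      have := ((hA.pow (m+1)).sub (hB.pow (m+1))).const_mul
        ((-1:ℝ) ^ m * m.factorial)
      simpa using this
    rw [hD.deriv]
    rw [Nat.factorial_succ]
    push_cast
    simp only [div_eq_mul_inv, ← inv_pow]
    ring


private lemma Efun_eq {m : ℕ} (j : Fin m) (l : Fin (m+1)) :
    (if l = j.castSucc then (1:ℝ) else if (l:ℕ) = (j:ℕ)+1 then -1 else 0)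
      = (if l = j.castSucc then (1:ℝ) else 0) + (if l = j.succ then (-1:ℝ) else 0) := by
  simp only [Fin.ext_iff, Fin.coe_castSucc, Fin.val_succ]
  split_ifs <;> first | (exfalso; omega) | norm_num

private lemma sum_E {m : ℕ} (g : Fin (m+1) → ℝ) (j : Fin m) :
    (∑ l : Fin (m+1), g l *
        (if l = j.castSucc then (1:ℝ) else if (l:ℕ) = (j:ℕ)+1 then -1 else 0))
      = g j.castSucc - g j.succ := by
  simp only [Efun_eq j, mul_add, Finset.sum_add_distrib, mul_ite, mul_one, mul_zero,
    Finset.sum_ite_eq', Finset.mem_univ, if_true]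
  ring

private lemma det_shift {m : ℕ} (x : Fin (m+1) → ℝ) :
    (Matrix.of fun i j : Fin m => x j.castSucc ^ ((i:ℕ)+1) - x j.succ ^ ((i:ℕ)+1)).det
      = (-1)^m * ∏ i : Fin (m+1), ∏ j ∈ Finset.Ioi i, (x j - x i) := by
  set E : Matrix (Fin (m+1)) (Fin (m+1)) ℝ :=
    Matrix.of fun l j => if l = j then (1:ℝ) else if (l:ℕ) = (j:ℕ)+1 then -1 else 0 with hE
  set B : Matrix (Fin (m+1)) (Fin (m+1)) ℝ := Matrix.of fun i j => x j ^ (i:ℕ) with hB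
  have hdetE : E.det = 1 := by
    have ht : E.BlockTriangular OrderDual.toDual := by
      intro i j hij
      have hij' : (i:ℕ) < (j:ℕ) := hij
      simp only [hE, Matrix.of_apply]
      rw [if_neg (by intro h; rw [h] at hij'; omega), if_neg (by omega)]
    rw [Matrix.det_of_lowerTriangular E ht]
    simp [hE]
  have hdetB : B.det = ∏ i : Fin (m+1), ∏ j ∈ Finset.Ioi i, (x j - x i) := by
    have hBT : B = (Matrix.vandermonde x)ᵀ := by
      ext i j; simp [hB, Matrix.vandermonde, Matrix.transpose_apply]
    rw [hBT, Matrix.det_transpose, Matrix.det_vandermonde]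
  have hBE : (B * E).det = B.det := by rw [Matrix.det_mul, hdetE, mul_one]
  have hrow : ∀ j : Fin (m+1), j ≠ Fin.last m → (B * E) 0 j = 0 := by
    intro j hj
    obtain ⟨j', rfl⟩ := Fin.exists_castSucc_eq.mpr hj
    rw [Matrix.mul_apply]
    have h1 : (∑ l : Fin (m+1), B 0 l * E l j'.castSucc)
        = ∑ l : Fin (m+1), (fun l : Fin (m+1) => (1:ℝ)) l *
            (if l = j'.castSucc then (1:ℝ) else if (l:ℕ) = (j':ℕ)+1 then -1 else 0) := by
      refine Finset.sum_congr rfl fun l _ => ?_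
      simp [hB, hE]
    rw [h1, sum_E (fun _ => (1:ℝ)) j']
    ring
  have hlast : (B * E) 0 (Fin.last m) = 1 := by
    rw [Matrix.mul_apply]
    have h1 : ∀ l : Fin (m+1), B 0 l * E l (Fin.last m)
        = if l = Fin.last m then (1:ℝ) else 0 := by
      intro l
      have hl : (l:ℕ) ≠ m + 1 := by omega
      simp only [hB, hE, Matrix.of_apply, Fin.val_zero, pow_zero, one_mul, Fin.val_last]
      rw [if_neg hl]
    simp [h1]
  have hsub : ((B * E).submatrix Fin.succ (Fin.last m).succAbove)
      = Matrix.of fun i j : Fin m => x j.castSucc ^ ((i:ℕ)+1) - x j.succ ^ ((i:ℕ)+1) := by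
    ext i j
    simp only [Matrix.submatrix_apply, Fin.succAbove_last, Matrix.of_apply, Matrix.mul_apply]
    have h1 : (∑ l : Fin (m+1), B i.succ l * E l j.castSucc)
        = ∑ l : Fin (m+1), (fun l : Fin (m+1) => x l ^ ((i:ℕ)+1)) l *
            (if l = j.castSucc then (1:ℝ) else if (l:ℕ) = (j:ℕ)+1 then -1 else 0) := by
      refine Finset.sum_congr rfl fun l _ => ?_
      simp [hB, hE, Fin.val_succ]
    rw [h1, sum_E (fun l => x l ^ ((i:ℕ)+1)) j]
  rw [Matrix.det_succ_row_zero] at hBE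
  rw [Finset.sum_eq_single (Fin.last m)
    (fun b _ hb => by rw [hrow b hb]; ring)
    (fun h => absurd (Finset.mem_univ _) h)] at hBE
  rw [hlast, hsub, Fin.val_last, hdetB] at hBE
  have h2 : ((-1:ℝ))^m * ((-1:ℝ))^m = 1 := by rw [← mul_pow]; norm_num
  calc (Matrix.of fun i j : Fin m =>
        x j.castSucc ^ ((i:ℕ)+1) - x j.succ ^ ((i:ℕ)+1)).det
      = (((-1:ℝ))^m * ((-1:ℝ))^m) * (Matrix.of fun i j : Fin m =>
        x j.castSucc ^ ((i:ℕ)+1) - x j.succ ^ ((i:ℕ)+1)).det := by rw [h2, one_mul]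
    _ = (-1)^m * ((-1)^m * 1 * (Matrix.of fun i j : Fin m =>
        x j.castSucc ^ ((i:ℕ)+1) - x j.succ ^ ((i:ℕ)+1)).det) := by ring
    _ = (-1)^m * ∏ i : Fin (m+1), ∏ j ∈ Finset.Ioi i, (x j - x i) := by rw [hBE]

private lemma prod_pairs {m : ℕ} (g : Fin m → Fin m → ℝ) :
    (∏ p ∈ Finset.univ.filter (fun p : Fin m × Fin m => p.1 < p.2), g p.1 p.2)
      = ∏ i : Fin m, ∏ j ∈ Finset.Ioi i, g i j := by
  rw [Finset.prod_filter, ← Finset.univ_product_univ, Finset.prod_product]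
  refine Finset.prod_congr rfl fun i _ => ?_
  rw [← Finset.prod_filter]
  congr 1
  ext j
  simp
/-- For `q, q' ∈ [−1,1]` let `f_{q,q'}(t) = q/(1+tq) − q'/(1+tq')` on `(−1,1)`.
If `q₁ > … > q_{n+2}` lie in `[−1,1]`, then for `1 ≤ k ≤ n+1` and `t ∈ (−1,1)`, the
Wronskian satisfies
`W(f_{q₁,q₂}, …, f_{q_k,q_{k+1}})(t) = ∏_{i=1}^k (i−1)! ∏_{j=i+1}^{k+1} f_{q_i,q_j}(t) > 0`. -/
theorem stmt_9 {n : ℕ} (q : Fin (n + 2) → ℝ)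
    (hq1 : ∀ i, -1 ≤ q i ∧ q i ≤ 1)
    (hqa : StrictAnti q)
    (fq : ℝ → ℝ → ℝ → ℝ)
    (hfq : ∀ a b t : ℝ, fq a b t = a / (1 + t * a) - b / (1 + t * b)) :
    ∀ (k : ℕ), 1 ≤ k → ∀ (hk : k ≤ n + 1), ∀ t ∈ Set.Ioo (-1 : ℝ) 1,
      (Matrix.of fun i j : Fin k =>
          iteratedDeriv (i : ℕ)
            (fq (q (Fin.castLE (by omega) j.castSucc))
                (q (Fin.castLE (by omega) j.succ))) t).det =
        (∏ i : Fin k, ((i : ℕ).factorial : ℝ)) *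
          ∏ p ∈ Finset.univ.filter (fun p : Fin (k + 1) × Fin (k + 1) => p.1 < p.2),
            fq (q (Fin.castLE (by omega) p.1)) (q (Fin.castLE (by omega) p.2)) t ∧
      0 <
        (∏ i : Fin k, ((i : ℕ).factorial : ℝ)) *
          ∏ p ∈ Finset.univ.filter (fun p : Fin (k + 1) × Fin (k + 1) => p.1 < p.2),
            fq (q (Fin.castLE (by omega) p.1)) (q (Fin.castLE (by omega) p.2)) t := by
  intro k hk1 hk t ht
  have hden : ∀ i : Fin (n+2), 0 < 1 + t * q i :=
    fun i => one_add_pos' ht (hq1 i).1 (hq1 i).2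
  have hkk : k + 1 ≤ n + 2 := by omega
  set x : Fin (k+1) → ℝ :=
    fun j => q (Fin.castLE hkk j) / (1 + t * q (Fin.castLE hkk j)) with hx
  -- the fq values on pairs
  have hfx : ∀ (h1 h2 : k + 1 ≤ n + 2) (i j : Fin (k+1)),
      fq (q (Fin.castLE h1 i)) (q (Fin.castLE h2 j)) t = x i - x j := by
    intro h1 h2 i j
    rw [hfq]
  -- positivity of each factor
  have hpos : ∀ i j : Fin (k+1), i < j → 0 < x i - x j := by
    intro i j hij
    have hab : q (Fin.castLE hkk j) < q (Fin.castLE hkk i) := by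
      exact hqa hij
    have hdi := hden (Fin.castLE hkk i)
    have hdj := hden (Fin.castLE hkk j)
    have hxe : x i - x j = (q (Fin.castLE hkk i) - q (Fin.castLE hkk j)) /
        ((1 + t * q (Fin.castLE hkk i)) * (1 + t * q (Fin.castLE hkk j))) := by
      rw [hx]
      simp only []
      rw [div_sub_div _ _ hdi.ne' hdj.ne']
      congr 1
      ring
    rw [hxe]
    exact div_pos (sub_pos.mpr hab) (mul_pos hdi hdj)
  -- the matrix identity
  have hmat : (Matrix.of fun i j : Fin k =>
        iteratedDeriv (i : ℕ)
          (fq (q (Fin.castLE (by omega) j.castSucc))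
              (q (Fin.castLE (by omega) j.succ))) t)
      = Matrix.of fun i j : Fin k => ((-1:ℝ) ^ (i:ℕ) * ((i:ℕ).factorial : ℝ)) *
          ((Matrix.of fun i j : Fin k =>
              x j.castSucc ^ ((i:ℕ)+1) - x j.succ ^ ((i:ℕ)+1)) i j) := by
    ext i j
    have hfeq : (fq (q (Fin.castLE (by omega) j.castSucc))
        (q (Fin.castLE (by omega) j.succ)))
        = fun s : ℝ => q (Fin.castLE hkk j.castSucc) / (1 + s * q (Fin.castLE hkk j.castSucc))
            - q (Fin.castLE hkk j.succ) / (1 + s * q (Fin.castLE hkk j.succ)) :=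
      funext fun s => hfq _ _ s
    rw [Matrix.of_apply, hfeq,
      iter_fq _ _ _ t (hden (Fin.castLE hkk j.castSucc)).ne' (hden (Fin.castLE hkk j.succ)).ne']
    simp only [Matrix.of_apply, hx]
  rw [hmat, Matrix.det_mul_column, det_shift]
  -- rewrite the pair product
  have hPfilter : (∏ p ∈ Finset.univ.filter (fun p : Fin (k + 1) × Fin (k + 1) => p.1 < p.2),
        fq (q (Fin.castLE (by omega) p.1)) (q (Fin.castLE (by omega) p.2)) t)
      = ∏ i : Fin (k+1), ∏ j ∈ Finset.Ioi i, (x i - x j) := by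
    rw [prod_pairs (fun i j : Fin (k+1) =>
      fq (q (Fin.castLE (by omega : k+1 ≤ n+2) i)) (q (Fin.castLE (by omega : k+1 ≤ n+2) j)) t)]
    exact Finset.prod_congr rfl fun i _ => Finset.prod_congr rfl fun j _ => hfx _ _ i j
  have hsigns : (∏ i : Fin k, ((-1:ℝ) ^ (i:ℕ) * ((i:ℕ).factorial : ℝ)))
      = (-1:ℝ) ^ (∑ i : Fin k, (i:ℕ)) * ∏ i : Fin k, ((i:ℕ).factorial : ℝ) := by
    rw [Finset.prod_mul_distrib, Finset.prod_pow_eq_pow_sum]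
  have hP : (∏ i : Fin (k+1), ∏ j ∈ Finset.Ioi i, (x j - x i))
      = (-1:ℝ) ^ (∑ i : Fin (k+1), (Finset.Ioi i).card) *
          ∏ i : Fin (k+1), ∏ j ∈ Finset.Ioi i, (x i - x j) := by
    rw [← Finset.prod_pow_eq_pow_sum, ← Finset.prod_mul_distrib]
    refine Finset.prod_congr rfl fun i _ => ?_
    rw [← Finset.prod_const (-1:ℝ), ← Finset.prod_mul_distrib]
    exact Finset.prod_congr rfl fun j _ => by ring
  have heven : Even ((∑ i : Fin k, (i:ℕ)) + k + ∑ i : Fin (k+1), (Finset.Ioi i).card) := by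
    have hc : ∀ i : Fin (k+1), (Finset.Ioi i).card = k - (i:ℕ) := by
      intro i; rw [Fin.card_Ioi]; omega
    have h1 : (∑ i : Fin (k+1), (Finset.Ioi i).card) = ∑ i ∈ Finset.range (k+1), (k - i) := by
      simp_rw [hc]
      exact Fin.sum_univ_eq_sum_range (fun i => k - i) (k+1)
    have h2 : (∑ i ∈ Finset.range (k+1), (k - i)) = ∑ i ∈ Finset.range (k+1), i := by
      rw [← Finset.sum_range_reflect (fun i => i) (k+1)]
      exact Finset.sum_congr rfl fun i hi => by omega
    have h3 : (∑ i : Fin k, (i:ℕ)) = ∑ i ∈ Finset.range k, i :=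
      Fin.sum_univ_eq_sum_range (fun i => i) k
    rw [h1, h2, h3, Finset.sum_range_succ]
    exact ⟨(∑ i ∈ Finset.range k, i) + k, by ring⟩
  constructor
  · rw [hPfilter, hsigns, hP]
    have hone : (-1:ℝ) ^ (∑ i : Fin k, (i:ℕ)) * (-1:ℝ) ^ k *
        (-1:ℝ) ^ (∑ i : Fin (k+1), (Finset.Ioi i).card) = 1 := by
      rw [← pow_add, ← pow_add]
      exact Even.neg_one_pow heven
    calc ((-1:ℝ) ^ (∑ i : Fin k, (i:ℕ)) * ∏ i : Fin k, ((i:ℕ).factorial : ℝ)) *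
          ((-1:ℝ) ^ k * ((-1:ℝ) ^ (∑ i : Fin (k+1), (Finset.Ioi i).card) *
            ∏ i : Fin (k+1), ∏ j ∈ Finset.Ioi i, (x i - x j)))
        = ((-1:ℝ) ^ (∑ i : Fin k, (i:ℕ)) * (-1:ℝ) ^ k *
            (-1:ℝ) ^ (∑ i : Fin (k+1), (Finset.Ioi i).card)) *
          ((∏ i : Fin k, ((i:ℕ).factorial : ℝ)) *
            ∏ i : Fin (k+1), ∏ j ∈ Finset.Ioi i, (x i - x j)) := by ring
      _ = (∏ i : Fin k, ((i:ℕ).factorial : ℝ)) *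
            ∏ i : Fin (k+1), ∏ j ∈ Finset.Ioi i, (x i - x j) := by rw [hone, one_mul]
  · rw [hPfilter]
    refine mul_pos (Finset.prod_pos fun i _ => by positivity) ?_
    refine Finset.prod_pos fun i _ => Finset.prod_pos fun j hj => ?_
    exact hpos i j (Finset.mem_Ioi.mp hj)
end

section
/- For n ∈ ℕ and α_1,…,α_n, β_1,…,β_n ∈ ℝ, set ᾱ = α_1 + ⋯ + α_n, β̄ = β_1 + ⋯ + β_n, and d = n(n−1)/2. Then there exists a real polynomial p of degree at most d such that the Wronskian of the sign-characteristic functions satisfies W(s_{α_1,β_1}, …, s_{α_n,β_n})(λ) = s_{ᾱ−d, β̄−d}(λ) · p(λ) for all λ ∈ (0,1). In particular, W(s_{α_1,β_1}, …, s_{α_n,β_n}) has at most d = C(n,2) distinct zeros on (0,1). -/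
open Polynomial

lemma iter_deriv_sign (a b : ℝ) (k : ℕ) :
    ∃ q : Polynomial ℝ, q.degree ≤ k ∧ ∀ x ∈ Set.Ioo (0:ℝ) 1,
      iteratedDeriv k (fun x : ℝ => x ^ a * (1 - x) ^ b) x
        = x ^ (a - k) * (1 - x) ^ (b - k) * q.eval x := by
  induction k with
  | zero =>
    exact ⟨1, by simp, fun x _ => by simp⟩
  | succ k ih =>
    obtain ⟨q, hdeg, heq⟩ := ih
    refine ⟨C (a - k) * (1 - X) * q - C (b - k) * X * q + X * (1 - X) * derivative q,
      ?_, ?_⟩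
    · apply le_trans (degree_add_le _ _)
      apply max_le
      · apply le_trans (degree_sub_le _ _)
        apply max_le
        · refine le_trans (degree_mul_le _ _) ?_
          have h1 : (C (a - (k:ℝ)) * (1 - X)).degree ≤ 1 := by
            refine le_trans (degree_mul_le _ _) ?_
            have : (1 - X : ℝ[X]).degree ≤ 1 :=
              le_trans (degree_sub_le _ _) (by simp)
            calc (C (a - (k:ℝ))).degree + (1 - X : ℝ[X]).degree
                ≤ 0 + 1 := add_le_add degree_C_le this
              _ = 1 := by simp
          calc (C (a - (k:ℝ)) * (1 - X)).degree + q.degree ≤ 1 + k :=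
                add_le_add h1 hdeg
            _ = ((k+1 : ℕ) : WithBot ℕ) := by push_cast; ring
        · refine le_trans (degree_mul_le _ _) ?_
          have h1 : (C (b - (k:ℝ)) * X).degree ≤ 1 := by
            refine le_trans (degree_mul_le _ _) ?_
            calc (C (b - (k:ℝ))).degree + (X : ℝ[X]).degree
                ≤ 0 + 1 := add_le_add degree_C_le (by simp)
              _ = 1 := by simp
          calc (C (b - (k:ℝ)) * X).degree + q.degree ≤ 1 + k :=
                add_le_add h1 hdeg
            _ = ((k+1 : ℕ) : WithBot ℕ) := by push_cast; ring
      · by_cases hq0 : derivative q = 0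
        · simp [hq0]
        · have hq : q ≠ 0 := fun h => hq0 (by simp [h])
          have hlt : (derivative q).degree < q.degree := degree_derivative_lt hq
          have hlt' : (derivative q).degree < (k : WithBot ℕ) := lt_of_lt_of_le hlt hdeg
          rw [degree_eq_natDegree hq0] at hlt'
          have hk : (derivative q).natDegree < k := by exact_mod_cast hlt'
          refine le_trans (degree_mul_le _ _) ?_
          have h1 : (X * (1 - X) : ℝ[X]).degree ≤ 2 := by
            refine le_trans (degree_mul_le _ _) ?_
            have : (1 - X : ℝ[X]).degree ≤ 1 :=
              le_trans (degree_sub_le _ _) (by simp)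
            calc (X : ℝ[X]).degree + (1 - X : ℝ[X]).degree ≤ 1 + 1 :=
                add_le_add (by simp) this
              _ = 2 := by norm_num
          calc (X * (1 - X) : ℝ[X]).degree + (derivative q).degree
              ≤ 2 + (derivative q).natDegree := add_le_add h1 (degree_le_natDegree)
            _ ≤ ((k+1 : ℕ) : WithBot ℕ) := by
                have : 2 + (derivative q).natDegree ≤ k + 1 := by omega
                exact_mod_cast Nat.cast_le.mpr this
    · intro x hx
      obtain ⟨hx0, hx1⟩ := hx
      have hx1' : 0 < 1 - x := by linarith
      rw [iteratedDeriv_succ]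
      have hev : deriv (iteratedDeriv k (fun x : ℝ => x ^ a * (1 - x) ^ b)) x
          = deriv (fun x : ℝ => x ^ (a - k) * (1 - x) ^ (b - k) * q.eval x) x := by
        apply Filter.EventuallyEq.deriv_eq
        filter_upwards [Ioo_mem_nhds hx0 hx1] with y hy
        exact heq y hy
      rw [hev]
      have h1 : HasDerivAt (fun x : ℝ => x ^ (a - k)) ((a - k) * x ^ (a - k - 1)) x :=
        Real.hasDerivAt_rpow_const (Or.inl hx0.ne')
      have h2 : HasDerivAt (fun x : ℝ => (1 - x) ^ (b - k))
          ((b - k) * (1 - x) ^ (b - k - 1) * (-1)) x := by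
        have hlin : HasDerivAt (fun x : ℝ => 1 - x) (-1) x := by
          simpa using (hasDerivAt_id' x).const_sub (1:ℝ)
        exact (Real.hasDerivAt_rpow_const (p := b - k) (Or.inl hx1'.ne')).comp x hlin
      have h3 : HasDerivAt (fun x : ℝ => q.eval x) ((derivative q).eval x) x :=
        q.hasDerivAt x
      have hD := ((h1.mul h2).mul h3).deriv
      rw [show (fun x : ℝ => x ^ (a - k) * (1 - x) ^ (b - k) * q.eval x) = ((fun x : ℝ => x ^ (a - (k:ℝ))) * fun x : ℝ => (1 - x) ^ (b - (k:ℝ))) * fun x : ℝ => eval x q from rfl, hD]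
      simp only [Pi.mul_apply]
      have hxa : x ^ (a - k) = x ^ (a - k - 1) * x := by
        rw [← Real.rpow_add_one hx0.ne' (a - k - 1)]; ring_nf
      have hxb : (1 - x) ^ (b - k) = (1 - x) ^ (b - k - 1) * (1 - x) := by
        rw [← Real.rpow_add_one hx1'.ne' (b - k - 1)]; ring_nf
      have hca : a - ((k : ℕ) + 1 : ℕ) = a - k - 1 := by push_cast; ring
      have hcb : b - ((k : ℕ) + 1 : ℕ) = b - k - 1 := by push_cast; ring
      rw [hca, hcb, hxa, hxb]
      simp only [eval_add, eval_sub, eval_mul, eval_C, eval_X, eval_one]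
      ring


/-- The Wronskian of `n` sign-characteristic functions `s_{α_i,β_i}(λ) = λ^{α_i}(1−λ)^{β_i}`
equals `s_{ᾱ−d, β̄−d} · p` on `(0,1)` for a real polynomial `p` of degree at most
`d = n(n−1)/2`; in particular it has at most `d` distinct zeros on `(0,1)`. -/
theorem stmt_14 (n : ℕ) (α β : Fin n → ℝ) :
    ∃ p : Polynomial ℝ, p.degree ≤ (n * (n - 1) / 2 : ℕ) ∧
      (∀ l ∈ Set.Ioo (0 : ℝ) 1,
        (Matrix.of fun i j : Fin n =>
            iteratedDeriv (i : ℕ) (fun x : ℝ => x ^ α j * (1 - x) ^ β j) l).det =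
          l ^ ((∑ j, α j) - ((n * (n - 1) / 2 : ℕ) : ℝ)) *
            (1 - l) ^ ((∑ j, β j) - ((n * (n - 1) / 2 : ℕ) : ℝ)) * p.eval l) ∧
      {l ∈ Set.Ioo (0 : ℝ) 1 |
          (Matrix.of fun i j : Fin n =>
              iteratedDeriv (i : ℕ) (fun x : ℝ => x ^ α j * (1 - x) ^ β j) l).det = 0}.ncard ≤
        n * (n - 1) / 2 := by
  classical
  set d : ℕ := n * (n - 1) / 2 with hd
  choose q hqdeg hqeq using fun (k : ℕ) (j : Fin n) => iter_deriv_sign (α j) (β j) k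
  set P : Polynomial ℝ :=
    ∑ σ : Equiv.Perm (Fin n), C ((Equiv.Perm.sign σ : ℤ) : ℝ) * ∏ j, q (σ j) j with hP
  have hsum : ∀ σ : Equiv.Perm (Fin n), ∑ j, ((σ j : ℕ)) = d := by
    intro σ
    rw [Equiv.sum_comp σ (fun j => (j : ℕ)), hd]
    rw [Fin.sum_univ_eq_sum_range (fun i => i) n, Finset.sum_range_id]
  have hPdeg : P.degree ≤ (d : WithBot ℕ) := by
    refine le_trans (degree_sum_le _ _) ?_
    apply Finset.sup_le
    intro σ _
    refine le_trans (degree_mul_le _ _) ?_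
    calc (C ((Equiv.Perm.sign σ : ℤ) : ℝ)).degree + (∏ j, q (σ j) j).degree
        ≤ 0 + (∏ j, q (σ j) j).degree := add_le_add degree_C_le le_rfl
      _ = (∏ j, q (σ j) j).degree := by rw [zero_add]
      _ ≤ ∑ j, (q (σ j) j).degree := degree_prod_le _ _
      _ ≤ ∑ j, ((σ j : ℕ) : WithBot ℕ) := Finset.sum_le_sum fun j _ => hqdeg (σ j) j
      _ = (d : WithBot ℕ) := by rw [← Nat.cast_sum, hsum σ]
  have hform : ∀ l ∈ Set.Ioo (0 : ℝ) 1,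
      (Matrix.of fun i j : Fin n =>
          iteratedDeriv (i : ℕ) (fun x : ℝ => x ^ α j * (1 - x) ^ β j) l).det =
        l ^ ((∑ j, α j) - (d : ℝ)) * (1 - l) ^ ((∑ j, β j) - (d : ℝ)) * P.eval l := by
    intro l hl
    have hl0 : 0 < l := hl.1
    have hl1 : 0 < 1 - l := by linarith [hl.2]
    rw [Matrix.det_apply]
    have hterm : ∀ σ : Equiv.Perm (Fin n),
        (∏ j, (Matrix.of fun i j : Fin n =>
            iteratedDeriv (i : ℕ) (fun x : ℝ => x ^ α j * (1 - x) ^ β j) l) (σ j) j)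
          = l ^ ((∑ j, α j) - (d : ℝ)) * (1 - l) ^ ((∑ j, β j) - (d : ℝ)) *
            ∏ j, (q (σ j) j).eval l := by
      intro σ
      have : ∀ j, (Matrix.of fun i j : Fin n =>
          iteratedDeriv (i : ℕ) (fun x : ℝ => x ^ α j * (1 - x) ^ β j) l) (σ j) j
          = l ^ (α j - (σ j : ℕ)) * (1 - l) ^ (β j - (σ j : ℕ)) * (q (σ j) j).eval l :=
        fun j => hqeq (σ j) j l hl
      rw [Finset.prod_congr rfl fun j _ => this j]
      rw [Finset.prod_mul_distrib, Finset.prod_mul_distrib]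
      rw [← Real.rpow_sum_of_pos hl0, ← Real.rpow_sum_of_pos hl1]
      have h1 : ∑ j, (α j - ((σ j : ℕ) : ℝ)) = (∑ j, α j) - (d : ℝ) := by
        rw [Finset.sum_sub_distrib]
        congr 1
        rw [← Nat.cast_sum, hsum σ]
      have h2 : ∑ j, (β j - ((σ j : ℕ) : ℝ)) = (∑ j, β j) - (d : ℝ) := by
        rw [Finset.sum_sub_distrib]
        congr 1
        rw [← Nat.cast_sum, hsum σ]
      rw [h1, h2]
    calc ∑ σ : Equiv.Perm (Fin n), Equiv.Perm.sign σ •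
          ∏ j, (Matrix.of fun i j : Fin n =>
            iteratedDeriv (i : ℕ) (fun x : ℝ => x ^ α j * (1 - x) ^ β j) l) (σ j) j
        = ∑ σ : Equiv.Perm (Fin n), l ^ ((∑ j, α j) - (d : ℝ)) *
            (1 - l) ^ ((∑ j, β j) - (d : ℝ)) *
            (((Equiv.Perm.sign σ : ℤ) : ℝ) * ∏ j, (q (σ j) j).eval l) := by
          refine Finset.sum_congr rfl fun σ _ => ?_
          rw [hterm σ, Units.smul_def, zsmul_eq_mul]
          ring
      _ = l ^ ((∑ j, α j) - (d : ℝ)) * (1 - l) ^ ((∑ j, β j) - (d : ℝ)) * P.eval l := by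
          rw [← Finset.mul_sum, hP]
          congr 1
          rw [eval_finset_sum]
          refine (Finset.sum_congr rfl fun σ _ => ?_).symm
          rw [eval_mul, eval_C, eval_prod]
  refine ⟨P, hPdeg, hform, ?_⟩
  have hSeq : {l ∈ Set.Ioo (0 : ℝ) 1 |
      (Matrix.of fun i j : Fin n =>
          iteratedDeriv (i : ℕ) (fun x : ℝ => x ^ α j * (1 - x) ^ β j) l).det = 0}
      = {l ∈ Set.Ioo (0 : ℝ) 1 | P.eval l = 0} := by
    ext l
    simp only [Set.mem_setOf_eq, Set.mem_sep_iff]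
    constructor
    · rintro ⟨hl, h0⟩
      refine ⟨hl, ?_⟩
      rw [hform l hl] at h0
      have hl0 : (0:ℝ) < l := hl.1
      have hl1 : (0:ℝ) < 1 - l := by linarith [hl.2]
      have p1 := (Real.rpow_pos_of_pos hl0 ((∑ j, α j) - (d : ℝ))).ne'
      have p2 := (Real.rpow_pos_of_pos hl1 ((∑ j, β j) - (d : ℝ))).ne'
      rcases mul_eq_zero.mp h0 with h | h
      · rcases mul_eq_zero.mp h with h | h
        · exact absurd h p1
        · exact absurd h p2
      · exact h
    · rintro ⟨hl, h0⟩
      exact ⟨hl, by rw [hform l hl, h0, mul_zero]⟩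
  rw [hSeq]
  by_cases hP0 : P = 0
  · have : {l ∈ Set.Ioo (0 : ℝ) 1 | P.eval l = 0} = Set.Ioo (0:ℝ) 1 := by
      ext l; simp [hP0]
    rw [this, Set.Infinite.ncard (Set.Ioo_infinite (by norm_num))]
    exact Nat.zero_le _
  · have hsub : {l ∈ Set.Ioo (0 : ℝ) 1 | P.eval l = 0} ⊆ ↑P.roots.toFinset := by
      intro l hl
      simp only [Finset.coe_sort_coe, Multiset.mem_toFinset, Finset.mem_coe]
      rw [mem_roots hP0]
      exact hl.2
    calc {l ∈ Set.Ioo (0 : ℝ) 1 | P.eval l = 0}.ncard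
        ≤ (↑P.roots.toFinset : Set ℝ).ncard :=
          Set.ncard_le_ncard hsub P.roots.toFinset.finite_toSet
      _ = P.roots.toFinset.card := Set.ncard_coe_finset _
      _ ≤ Multiset.card P.roots := Multiset.toFinset_card_le _
      _ ≤ P.natDegree := P.card_roots'
      _ ≤ d := natDegree_le_iff_degree_le.mpr hPdeg
end

section
/- Let f : [a,b] → ℝ be continuous on [a,b], differentiable on (a,b), differentiable from the right at a, and suppose f' has finitely many zeros in (a,b). (i) If the number Z(f') of zeros of f' in (a,b) is even, f(a)·f(b) < 0, and f(a)·f'(a) > 0, then f has at most Z(f') − 1 zeros in [a,b]. (ii) If Z(f') is odd, f(a)·f(b) > 0, and f(a)·f'(a) > 0, then f has at most Z(f') − 1 zeros in [a,b]. -/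
open Set Filter Topology




lemma sign_right {f : ℝ → ℝ} {s : ℝ} (hf : f s = 0) (hd : deriv f s ≠ 0) :
    ∀ᶠ x in 𝓝[>] s, 0 < f x * deriv f s := by
  have hdiff : DifferentiableAt ℝ f s := differentiableAt_of_deriv_ne_zero hd
  have h := hasDerivAt_iff_tendsto_slope.1 hdiff.hasDerivAt
  have h2 : Tendsto (slope f s) (𝓝[>] s) (𝓝 (deriv f s)) :=
    h.mono_left (nhdsWithin_mono _ (fun x hx => ne_of_gt hx))
  have h3 : Tendsto (fun x => slope f s x * deriv f s) (𝓝[>] s) (𝓝 (deriv f s * deriv f s)) :=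
    h2.mul_const _
  have hpos : (0:ℝ) < deriv f s * deriv f s := mul_self_pos.2 hd
  filter_upwards [h3.eventually (eventually_gt_nhds hpos), self_mem_nhdsWithin] with x hx hx'
  have hxs : s < x := hx'
  have hfx : f x = slope f s x * (x - s) := by
    rw [slope_def_field, hf, sub_zero, div_mul_cancel₀ _ (sub_ne_zero.2 (ne_of_gt hxs))]
  calc (0:ℝ) < (slope f s x * deriv f s) * (x - s) := mul_pos hx (sub_pos.2 hxs)
    _ = f x * deriv f s := by rw [hfx]; ring

lemma sign_left {f : ℝ → ℝ} {s : ℝ} (hf : f s = 0) (hd : deriv f s ≠ 0) :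
    ∀ᶠ x in 𝓝[<] s, f x * deriv f s < 0 := by
  have hdiff : DifferentiableAt ℝ f s := differentiableAt_of_deriv_ne_zero hd
  have h := hasDerivAt_iff_tendsto_slope.1 hdiff.hasDerivAt
  have h2 : Tendsto (slope f s) (𝓝[<] s) (𝓝 (deriv f s)) :=
    h.mono_left (nhdsWithin_mono _ (fun x hx => ne_of_lt hx))
  have h3 : Tendsto (fun x => slope f s x * deriv f s) (𝓝[<] s) (𝓝 (deriv f s * deriv f s)) :=
    h2.mul_const _
  have hpos : (0:ℝ) < deriv f s * deriv f s := mul_self_pos.2 hd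
  filter_upwards [h3.eventually (eventually_gt_nhds hpos), self_mem_nhdsWithin] with x hx hx'
  have hxs : x < s := hx'
  have hfx : f x = slope f s x * (x - s) := by
    rw [slope_def_field, hf, sub_zero, div_mul_cancel₀ _ (sub_ne_zero.2 (ne_of_lt hxs))]
  calc f x * deriv f s = (slope f s x * deriv f s) * (x - s) := by rw [hfx]; ring
    _ < 0 := mul_neg_of_pos_of_neg hx (sub_neg.2 hxs)

lemma sgn_const {f : ℝ → ℝ} {u v : ℝ} (huv : u ≤ v) (hc : ContinuousOn f (Icc u v))
    (hnz : ∀ x ∈ Icc u v, f x ≠ 0) : 0 < f u * f v := by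
  have hu := hnz u (left_mem_Icc.2 huv)
  have hv := hnz v (right_mem_Icc.2 huv)
  rcases lt_or_gt_of_ne hu with hu' | hu'
  · rcases lt_or_gt_of_ne hv with hv' | hv'
    · exact mul_pos_of_neg_of_neg hu' hv'
    · obtain ⟨x, hx, hfx⟩ := intermediate_value_Icc huv hc ⟨hu'.le, hv'.le⟩
      exact absurd hfx (hnz x hx)
  · rcases lt_or_gt_of_ne hv with hv' | hv'
    · obtain ⟨x, hx, hfx⟩ := intermediate_value_Icc' huv hc ⟨hv'.le, hu'.le⟩
      exact absurd hfx (hnz x hx)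
    · exact mul_pos hu' hv'

lemma crit_below {a b s : ℝ} {f : ℝ → ℝ} {fa' : ℝ} (hcont : ContinuousOn f (Icc a b))
    (hfa' : HasDerivWithinAt f fa' (Ici a) a) (ha : 0 < f a) (ha' : 0 < fa')
    (has : a < s) (hsb : s ≤ b) (hs : f s = 0) :
    ∃ c, a < c ∧ c < s ∧ deriv f c = 0 := by
  have hIci : Ici a \ {a} = Ioi a := by
    ext x
    simp only [mem_diff, mem_Ici, mem_singleton_iff, mem_Ioi]
    constructor
    · rintro ⟨h1, h2⟩; exact lt_of_le_of_ne h1 (Ne.symm h2)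
    · intro h; exact ⟨h.le, ne_of_gt h⟩
  have hslope : Tendsto (slope f a) (𝓝[>] a) (𝓝 fa') := by
    have := hasDerivWithinAt_iff_tendsto_slope.1 hfa'
    rwa [hIci] at this
  have hev : ∀ᶠ x in 𝓝[>] a, 0 < slope f a x := hslope.eventually (eventually_gt_nhds ha')
  have hIoo : Ioo a s ∈ 𝓝[>] a := Ioo_mem_nhdsGT has
  obtain ⟨t, ht1, ht2⟩ := (hev.and hIoo).exists
  have hft : f a < f t := by
    have h := mul_pos ht1 (sub_pos.2 ht2.1)
    rw [slope_def_field, div_mul_cancel₀ _ (sub_ne_zero.2 (ne_of_gt ht2.1))] at h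
    linarith
  have hcs : ContinuousOn f (Icc a s) := hcont.mono (Icc_subset_Icc le_rfl hsb)
  obtain ⟨c, hcmem, hcmax⟩ := isCompact_Icc.exists_isMaxOn (nonempty_Icc.2 has.le) hcs
  have hftc : f t ≤ f c := hcmax (Ioo_subset_Icc_self ht2)
  have hca : a < c := by
    rcases eq_or_lt_of_le hcmem.1 with h | h
    · exfalso; rw [← h] at hftc; linarith
    · exact h
  have hcs' : c < s := by
    rcases eq_or_lt_of_le hcmem.2 with h | h
    · exfalso; rw [h, hs] at hftc; linarith
    · exact h
  exact ⟨c, hca, hcs', (hcmax.isLocalMax (Icc_mem_nhds hca hcs')).deriv_eq_zero⟩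

lemma inj_count {S D : Set ℝ} (hD : D.Finite)
    (hblw : ∀ s ∈ S, ∃ c ∈ D, c < s)
    (hrolle : ∀ s ∈ S, ∀ t ∈ S, s < t → ∃ c ∈ D, s < c ∧ c < t) :
    S.Finite ∧ S.ncard ≤ D.ncard := by
  set φ : ℝ → ℝ := fun s => sSup {c ∈ D | c < s} with hφ
  have hφmem : ∀ s ∈ S, φ s ∈ D ∧ φ s < s := by
    intro s hs
    obtain ⟨c, hc1, hc2⟩ := hblw s hs
    have hne : {c ∈ D | c < s}.Nonempty := ⟨c, hc1, hc2⟩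
    have h := hne.csSup_mem (hD.subset (sep_subset _ _))
    exact ⟨h.1, h.2⟩
  have hφlt : ∀ s ∈ S, ∀ t ∈ S, s < t → φ s < φ t := by
    intro s hs t ht hst
    obtain ⟨c, hc1, hc2, hc3⟩ := hrolle s hs t ht hst
    have hle : c ≤ φ t := le_csSup ((hD.subset (sep_subset _ _)).bddAbove) ⟨hc1, hc3⟩
    exact lt_of_lt_of_le (lt_trans (hφmem s hs).2 hc2) hle
  have hφinj : Set.InjOn φ S := by
    intro s hs t ht h
    by_contra hne
    rcases lt_or_gt_of_ne hne with h' | h'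
    · exact absurd h (ne_of_lt (hφlt s hs t ht h'))
    · exact absurd h (ne_of_gt (hφlt t ht s hs h'))
  have hmaps : ∀ s ∈ S, φ s ∈ D := fun s hs => (hφmem s hs).1
  have himg : φ '' S ⊆ D := by rintro x ⟨s, hs, rfl⟩; exact hmaps s hs
  exact ⟨Set.Finite.of_finite_image (hD.subset himg) hφinj,
    Set.ncard_le_ncard_of_injOn φ hmaps hφinj hD⟩


theorem aux (a b : ℝ) (hab : a < b) (f : ℝ → ℝ)
    (hcont : ContinuousOn f (Set.Icc a b))
    (fa' : ℝ) (hfa' : HasDerivWithinAt f fa' (Set.Ici a) a)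
    (hfin : {x ∈ Set.Ioo a b | deriv f x = 0}.Finite)
    (ha : 0 < f a) (ha' : 0 < fa') (hb : f b ≠ 0)
    (hpar : Even ({x ∈ Set.Ioo a b | deriv f x = 0}.ncard) ↔ f b < 0) :
    {x ∈ Set.Icc a b | f x = 0}.encard ≤
      (({x ∈ Set.Ioo a b | deriv f x = 0}.ncard - 1 : ℕ) : ℕ∞) := by
  set C := {x ∈ Set.Ioo a b | deriv f x = 0} with hCdef
  set S := {x ∈ Set.Icc a b | f x = 0} with hSdef
  have hSmem : ∀ s ∈ S, a < s ∧ s < b ∧ f s = 0 := by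
    intro s hs
    obtain ⟨⟨h1, h2⟩, h3⟩ := hs
    refine ⟨lt_of_le_of_ne h1 ?_, lt_of_le_of_ne h2 ?_, h3⟩
    · rintro rfl; exact (ne_of_gt ha) h3
    · rintro rfl; exact hb h3
  have hCb : ∀ s ∈ S, ∃ c ∈ C, c < s := by
    intro s hs
    obtain ⟨h1, h2, h3⟩ := hSmem s hs
    obtain ⟨c, hc1, hc2, hc3⟩ := crit_below hcont hfa' ha ha' h1 h2.le h3
    exact ⟨c, ⟨⟨hc1, hc2.trans h2⟩, hc3⟩, hc2⟩
  have hRol : ∀ s ∈ S, ∀ t ∈ S, s < t → ∃ c ∈ C, s < c ∧ c < t := by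
    intro s hs t ht hst
    obtain ⟨hs1, hs2, hs3⟩ := hSmem s hs
    obtain ⟨ht1, ht2, ht3⟩ := hSmem t ht
    obtain ⟨c, hc, hc0⟩ := exists_deriv_eq_zero hst
      (hcont.mono (Icc_subset_Icc hs1.le ht2.le)) (hs3.trans ht3.symm)
    exact ⟨c, ⟨⟨hs1.trans hc.1, hc.2.trans ht2⟩, hc0⟩, hc.1, hc.2⟩
  obtain ⟨hSfin, hkZ⟩ := inj_count hfin hCb hRol
  have key : S.ncard ≠ C.ncard := by
    intro hEq
    rcases Nat.eq_zero_or_pos S.ncard with hk0 | hkpos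
    · have hZ0 : Even C.ncard := by rw [← hEq, hk0]; exact Even.zero
      have hfb : f b < 0 := hpar.1 hZ0
      obtain ⟨x, hx, hfx⟩ := intermediate_value_Icc' hab.le hcont ⟨hfb.le, ha.le⟩
      have hxS : x ∈ S := ⟨hx, hfx⟩
      rw [Set.ncard_eq_zero hSfin] at hk0
      rw [hk0] at hxS
      exact hxS
    · by_cases hA : ∃ s₀ ∈ S, deriv f s₀ = 0
      · obtain ⟨s₀, hs₀S, hs₀d⟩ := hA
        obtain ⟨h₀1, h₀2, h₀3⟩ := hSmem s₀ hs₀S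
        have hs₀C : s₀ ∈ C := ⟨⟨h₀1, h₀2⟩, hs₀d⟩
        have hCb' : ∀ s ∈ S, ∃ c ∈ C \ {s₀}, c < s := by
          intro s hs
          rcases le_or_gt s s₀ with h | h
          · obtain ⟨c, hc1, hc2⟩ := hCb s hs
            refine ⟨c, ⟨hc1, ?_⟩, hc2⟩
            simp only [mem_singleton_iff]
            intro hcs; subst hcs; linarith
          · obtain ⟨c, hc1, hc2, hc3⟩ := hRol s₀ hs₀S s hs h
            refine ⟨c, ⟨hc1, ?_⟩, hc3⟩
            simp only [mem_singleton_iff]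
            intro hcs; subst hcs; linarith
        have hRol' : ∀ s ∈ S, ∀ t ∈ S, s < t → ∃ c ∈ C \ {s₀}, s < c ∧ c < t := by
          intro s hs t ht hst
          by_cases hmid : s < s₀ ∧ s₀ < t
          · obtain ⟨c, hc1, hc2, hc3⟩ := hRol s hs s₀ hs₀S hmid.1
            refine ⟨c, ⟨hc1, ?_⟩, hc2, hc3.trans hmid.2⟩
            simp only [mem_singleton_iff]
            intro h; subst h; linarith
          · obtain ⟨c, hc1, hc2, hc3⟩ := hRol s hs t ht hst
            refine ⟨c, ⟨hc1, ?_⟩, hc2, hc3⟩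
            simp only [mem_singleton_iff]
            intro h; subst h; exact hmid ⟨hc2, hc3⟩
        obtain ⟨-, hk'⟩ := inj_count (hfin.diff (t := {s₀})) hCb' hRol'
        have h1 : (C \ {s₀}).ncard = C.ncard - 1 := Set.ncard_diff_singleton_of_mem hs₀C
        rw [h1] at hk'
        omega
      · push_neg at hA
        have hsign : ∀ n : ℕ, ∀ s ∈ S, (S ∩ Iio s).ncard = n → deriv f s * (-1 : ℝ)^n < 0 := by
          intro n
          induction n with
          | zero =>
            intro s hs hr
            obtain ⟨hs1, hs2, hs3⟩ := hSmem s hs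
            have hd := hA s hs
            obtain ⟨x, hx1, hx2⟩ := ((sign_left hs3 hd).and
              (Ioo_mem_nhdsLT hs1 : Ioo a s ∈ 𝓝[<] s)).exists
            have hnz : ∀ y ∈ Icc a x, f y ≠ 0 := by
              intro y hy hfy
              have hyS : y ∈ S := ⟨⟨hy.1, le_trans hy.2 (hx2.2.trans hs2).le⟩, hfy⟩
              have hmem : y ∈ S ∩ Iio s := ⟨hyS, lt_of_le_of_lt hy.2 hx2.2⟩
              rw [Set.ncard_eq_zero (hSfin.inter_of_left _)] at hr
              rw [hr] at hmem
              exact hmem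
            have h0 := sgn_const hx2.1.le
              (hcont.mono (Icc_subset_Icc le_rfl (hx2.2.trans hs2).le)) hnz
            simp only [pow_zero, mul_one]
            nlinarith
          | succ n ih =>
            intro s hs hr
            obtain ⟨hs1, hs2, hs3⟩ := hSmem s hs
            have hfinIS : (S ∩ Iio s).Finite := hSfin.inter_of_left _
            have hne : (S ∩ Iio s).Nonempty := Set.nonempty_of_ncard_ne_zero (by omega)
            have htmem := hne.csSup_mem hfinIS
            set t := sSup (S ∩ Iio s) with htdef
            obtain ⟨ht1, ht2, ht3⟩ := hSmem t htmem.1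
            have hts : t < s := htmem.2
            have hrt : (S ∩ Iio t).ncard = n := by
              have hseteq : S ∩ Iio t = (S ∩ Iio s) \ {t} := by
                ext u
                simp only [mem_inter_iff, mem_Iio, mem_diff, mem_singleton_iff]
                constructor
                · rintro ⟨h1, h2⟩
                  exact ⟨⟨h1, h2.trans hts⟩, ne_of_lt h2⟩
                · rintro ⟨⟨h1, h2⟩, h3⟩
                  exact ⟨h1, lt_of_le_of_ne (le_csSup hfinIS.bddAbove ⟨h1, h2⟩) h3⟩
              rw [hseteq, Set.ncard_diff_singleton_of_mem htmem, hr]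
              omega
            have hIH := ih t htmem.1 hrt
            have hnomid : ∀ y, t < y → y < s → f y ≠ 0 := by
              intro y hy1 hy2 hfy
              have hyS : y ∈ S := ⟨⟨ht1.le.trans hy1.le, (hy2.trans hs2).le⟩, hfy⟩
              have := le_csSup hfinIS.bddAbove (⟨hyS, hy2⟩ : y ∈ S ∩ Iio s)
              linarith
            have hdt := hA t htmem.1
            have hds := hA s hs
            obtain ⟨x₁, hx₁1, hx₁2⟩ := ((sign_right ht3 hdt).and
              (Ioo_mem_nhdsGT hts : Ioo t s ∈ 𝓝[>] t)).exists
            obtain ⟨x₂, hx₂1, hx₂2⟩ := ((sign_left hs3 hds).and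
              (Ioo_mem_nhdsLT hts : Ioo t s ∈ 𝓝[<] s)).exists
            have hsub : ∀ u v : ℝ, u ∈ Ioo t s → v ∈ Ioo t s → u ≤ v → 0 < f u * f v := by
              intro u v hu hv huv
              refine sgn_const huv
                (hcont.mono (Icc_subset_Icc (ht1.le.trans hu.1.le) (hv.2.trans hs2).le)) ?_
              intro y hy
              exact hnomid y (lt_of_lt_of_le hu.1 hy.1) (lt_of_le_of_lt hy.2 hv.2)
            have h12 : 0 < f x₁ * f x₂ := by
              rcases le_total x₁ x₂ with h | h
              · exact hsub x₁ x₂ hx₁2 hx₂2 h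
              · have := hsub x₂ x₁ hx₂2 hx₁2 h; nlinarith
            have hAB : deriv f t * deriv f s < 0 := by
              nlinarith [mul_neg_of_pos_of_neg hx₁1 hx₂1]
            rcases Nat.even_or_odd n with hn | hn
            · have e1 : ((-1:ℝ))^n = 1 := hn.neg_one_pow
              have e2 : ((-1:ℝ))^(n+1) = -1 := (hn.add_one).neg_one_pow
              rw [e1, mul_one] at hIH
              rw [e2]
              nlinarith
            · have e1 : ((-1:ℝ))^n = -1 := hn.neg_one_pow
              have e2 : ((-1:ℝ))^(n+1) = 1 := (hn.add_one).neg_one_pow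
              rw [e1] at hIH
              rw [e2]
              nlinarith
        have hSne : S.Nonempty := Set.nonempty_of_ncard_ne_zero (by omega)
        have hmmem := hSne.csSup_mem hSfin
        set m := sSup S with hmdef
        obtain ⟨hm1, hm2, hm3⟩ := hSmem m hmmem
        have hrm : (S ∩ Iio m).ncard = S.ncard - 1 := by
          have hseteq : S ∩ Iio m = S \ {m} := by
            ext u
            simp only [mem_inter_iff, mem_Iio, mem_diff, mem_singleton_iff]
            constructor
            · rintro ⟨h1, h2⟩; exact ⟨h1, ne_of_lt h2⟩
            · rintro ⟨h1, h2⟩; exact ⟨h1, lt_of_le_of_ne (le_csSup hSfin.bddAbove h1) h2⟩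
          rw [hseteq, Set.ncard_diff_singleton_of_mem hmmem]
        have hsgn := hsign (S.ncard - 1) m hmmem hrm
        have hdm := hA m hmmem
        obtain ⟨x, hx1, hx2⟩ := ((sign_right hm3 hdm).and
          (Ioo_mem_nhdsGT hm2 : Ioo m b ∈ 𝓝[>] m)).exists
        have hnz : ∀ y ∈ Icc x b, f y ≠ 0 := by
          intro y hy hfy
          have hyS : y ∈ S := ⟨⟨((hm1.trans hx2.1).le).trans hy.1, hy.2⟩, hfy⟩
          have hle := le_csSup hSfin.bddAbove hyS
          have hgt : m < y := lt_of_lt_of_le hx2.1 hy.1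
          linarith
        have hxb := sgn_const hx2.2.le
          (hcont.mono (Icc_subset_Icc ((hm1.trans hx2.1).le) le_rfl)) hnz
        have hfb_dm : 0 < f b * deriv f m := by
          rcases lt_trichotomy (f x) 0 with h | h | h
          · have h1 : deriv f m < 0 := by nlinarith
            have h2 : f b < 0 := by nlinarith
            exact mul_pos_of_neg_of_neg h2 h1
          · rw [h] at hx1; simp at hx1
          · have h1 : 0 < deriv f m := by nlinarith
            have h2 : 0 < f b := by nlinarith
            exact mul_pos h2 h1
        rcases Nat.even_or_odd S.ncard with hk | hk
        · have hodd : Odd (S.ncard - 1) := Nat.Even.sub_odd hkpos hk odd_one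
          rw [hodd.neg_one_pow] at hsgn
          have hfb : 0 < f b := by nlinarith
          have := hpar.1 (hEq ▸ hk)
          linarith
        · have heven : Even (S.ncard - 1) := Nat.Odd.sub_odd hk odd_one
          rw [heven.neg_one_pow, mul_one] at hsgn
          have hfb : f b < 0 := by nlinarith
          have := hpar.2 hfb
          rw [← hEq] at this
          exact (Nat.not_odd_iff_even.mpr this) hk
  have hle : S.ncard ≤ C.ncard - 1 := by omega
  calc S.encard = (S.ncard : ℕ∞) := (hSfin.cast_ncard_eq).symm
    _ ≤ ((C.ncard - 1 : ℕ) : ℕ∞) := by exact_mod_cast hle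
theorem aux_neg (a b : ℝ) (hab : a < b) (f : ℝ → ℝ)
    (hcont : ContinuousOn f (Set.Icc a b))
    (fa' : ℝ) (hfa' : HasDerivWithinAt f fa' (Set.Ici a) a)
    (hfin : {x ∈ Set.Ioo a b | deriv f x = 0}.Finite)
    (ha : f a < 0) (ha' : fa' < 0) (hb : f b ≠ 0)
    (hpar : Even ({x ∈ Set.Ioo a b | deriv f x = 0}.ncard) ↔ 0 < f b) :
    {x ∈ Set.Icc a b | f x = 0}.encard ≤
      (({x ∈ Set.Ioo a b | deriv f x = 0}.ncard - 1 : ℕ) : ℕ∞) := by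
  have hCeq : {x ∈ Set.Ioo a b | deriv (fun y => -f y) x = 0}
      = {x ∈ Set.Ioo a b | deriv f x = 0} := by
    ext x
    simp [deriv.neg]
  have hSeq : {x ∈ Set.Icc a b | (fun y => -f y) x = 0}
      = {x ∈ Set.Icc a b | f x = 0} := by
    ext x
    simp [neg_eq_zero]
  have h := aux a b hab (fun y => -f y) hcont.neg (-fa') hfa'.neg
    (by rw [hCeq]; exact hfin) (by simpa using ha) (by simpa using ha')
    (by simpa using hb) (by rw [hCeq]; simpa using hpar)
  rw [hCeq, hSeq] at h
  exact h



/-- Refined Rolle with endpoint derivative information: let `f` be continuous on `[a,b]`,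
differentiable on `(a,b)` and from the right at `a` (with right derivative `fa'`),
with finitely many critical points in `(a,b)`, and let `Z(f')` be their number.
(i) If `Z(f')` is even, `f(a)·f(b) < 0`, and `f(a)·f'(a) > 0`, then `f` has at most
`Z(f') − 1` zeros in `[a,b]`.
(ii) If `Z(f')` is odd, `f(a)·f(b) > 0`, and `f(a)·f'(a) > 0`, then `f` has at most
`Z(f') − 1` zeros in `[a,b]`. -/
theorem stmt_16 (a b : ℝ) (hab : a < b) (f : ℝ → ℝ)
    (hcont : ContinuousOn f (Set.Icc a b))
    (hdiff : ∀ x ∈ Set.Ioo a b, DifferentiableAt ℝ f x)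
    (fa' : ℝ) (hfa' : HasDerivWithinAt f fa' (Set.Ici a) a)
    (hfin : {x ∈ Set.Ioo a b | deriv f x = 0}.Finite) :
    (Even ({x ∈ Set.Ioo a b | deriv f x = 0}.ncard) → f a * f b < 0 →
      0 < f a * fa' →
      {x ∈ Set.Icc a b | f x = 0}.encard ≤
        (({x ∈ Set.Ioo a b | deriv f x = 0}.ncard - 1 : ℕ) : ℕ∞)) ∧
    (Odd ({x ∈ Set.Ioo a b | deriv f x = 0}.ncard) → 0 < f a * f b →
      0 < f a * fa' →
      {x ∈ Set.Icc a b | f x = 0}.encard ≤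
        (({x ∈ Set.Ioo a b | deriv f x = 0}.ncard - 1 : ℕ) : ℕ∞)) := by
  constructor
  · intro hev hfb hfa
    have hfa0 : f a ≠ 0 := by
      intro h; rw [h, zero_mul] at hfa; exact lt_irrefl 0 hfa
    have hb0 : f b ≠ 0 := by
      intro h; rw [h, mul_zero] at hfb; exact lt_irrefl 0 hfb
    rcases lt_or_gt_of_ne hfa0 with hneg | hpos
    · exact aux_neg a b hab f hcont fa' hfa' hfin hneg (by nlinarith) hb0
        (iff_of_true hev (by nlinarith))
    · exact aux a b hab f hcont fa' hfa' hfin hpos (by nlinarith) hb0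
        (iff_of_true hev (by nlinarith))
  · intro hodd hfb hfa
    have hfa0 : f a ≠ 0 := by
      intro h; rw [h, zero_mul] at hfa; exact lt_irrefl 0 hfa
    have hb0 : f b ≠ 0 := by
      intro h; rw [h, mul_zero] at hfb; exact lt_irrefl 0 hfb
    have hnev := Nat.not_even_iff_odd.mpr hodd
    rcases lt_or_gt_of_ne hfa0 with hneg | hpos
    · exact aux_neg a b hab f hcont fa' hfa' hfin hneg (by nlinarith) hb0
        (iff_of_false hnev (by nlinarith))
    · exact aux a b hab f hcont fa' hfa' hfin hpos (by nlinarith) hb0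
        (iff_of_false hnev (by nlinarith))
end

section
/- Let b_1, b_2 ∈ ℝ be nonzero with b_1 ≠ b_2, let c_1, c_2 > 0, and consider the univariate trinomial equation c_1 x^{b_1} + c_2 x^{b_2} = 1 in x > 0. (i) If b_1·b_2 > 0, then the equation has exactly one positive solution. (ii) If b_1·b_2 < 0, set b = b_1/b_2 < 0 and define the discriminant 𝒟 = |b|^{|b|} / (1+|b|)^{1+|b|} − c_1 c_2^{|b|}. Then the equation has exactly two distinct positive solutions if 𝒟 > 0, exactly one positive solution if 𝒟 = 0, and no positive solution if 𝒟 < 0. -/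
open Set Real


private lemma existsUnique_pos_case (b c₁ c₂ : ℝ) (hb : 0 < b) (hc₁ : 0 < c₁) (hc₂ : 0 < c₂) :
    ∃! u : ℝ, 0 < u ∧ c₁ * u ^ b + c₂ * u = 1 := by
  set g : ℝ → ℝ := fun u => c₁ * u ^ b + c₂ * u with hgdef
  have hmono : ∀ u v : ℝ, 0 < u → u < v → g u < g v := by
    intro u v hu huv
    have h1 : u ^ b < v ^ b := Real.rpow_lt_rpow hu.le huv hb
    simp only [hgdef]
    nlinarith
  have h2c₁ : (0:ℝ) < (2 * c₁)⁻¹ := by positivity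
  set u₀ : ℝ := min ((2 * c₁)⁻¹ ^ b⁻¹) ((2 * c₂)⁻¹) with hu₀def
  have hu₀pos : 0 < u₀ := lt_min (Real.rpow_pos_of_pos h2c₁ _) (by positivity)
  have hgu₀ : g u₀ ≤ 1 := by
    have h1 : u₀ ^ b ≤ (2 * c₁)⁻¹ := by
      calc u₀ ^ b ≤ ((2 * c₁)⁻¹ ^ b⁻¹) ^ b :=
            Real.rpow_le_rpow hu₀pos.le (min_le_left _ _) hb.le
        _ = (2 * c₁)⁻¹ := Real.rpow_inv_rpow h2c₁.le hb.ne'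
    have h2 : u₀ ≤ (2 * c₂)⁻¹ := min_le_right _ _
    have h3 := mul_le_mul_of_nonneg_left h1 hc₁.le
    have h4 := mul_le_mul_of_nonneg_left h2 hc₂.le
    have e1 : c₁ * (2 * c₁)⁻¹ = 1/2 := by field_simp
    have e2 : c₂ * (2 * c₂)⁻¹ = 1/2 := by field_simp
    simp only [hgdef]
    linarith
  set u₁ : ℝ := u₀ + c₂⁻¹ with hu₁def
  have hu₁gt : u₀ < u₁ := lt_add_of_pos_right _ (by positivity)
  have hgu₁ : 1 ≤ g u₁ := by
    have h1 : 0 < c₁ * u₁ ^ b := mul_pos hc₁ (rpow_pos_of_pos (hu₀pos.trans hu₁gt) _)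
    have e : c₂ * u₁ = c₂ * u₀ + 1 := by
      rw [hu₁def, mul_add, mul_inv_cancel₀ hc₂.ne']
    simp only [hgdef]
    nlinarith [mul_pos hc₂ hu₀pos]
  have hcont : ContinuousOn g (Icc u₀ u₁) := by
    apply ContinuousOn.add
    · exact continuousOn_const.mul (ContinuousOn.rpow_const continuousOn_id
        fun x hx => Or.inr hb.le)
    · exact continuousOn_const.mul continuousOn_id
  obtain ⟨a, ha, hga⟩ := intermediate_value_Icc hu₁gt.le hcont ⟨hgu₀, hgu₁⟩
  have hapos : 0 < a := hu₀pos.trans_le ha.1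
  refine ⟨a, ⟨hapos, hga⟩, ?_⟩
  rintro v ⟨hv, hev⟩
  have hgv : g v = 1 := hev
  by_contra hne
  rcases lt_or_gt_of_ne hne with h | h
  · have := hmono v a hv h
    rw [hgv, hga] at this; exact lt_irrefl 1 this
  · have := hmono a v hapos h
    rw [hgv, hga] at this; exact lt_irrefl 1 this


private lemma neg_case (β c₁ c₂ : ℝ) (hβ : 0 < β) (hc₁ : 0 < c₁) (hc₂ : 0 < c₂) :
    (0 < β ^ β / (1 + β) ^ (1 + β) - c₁ * c₂ ^ β →
        {u : ℝ | 0 < u ∧ c₁ * u ^ (-β) + c₂ * u = 1}.encard = 2) ∧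
    (β ^ β / (1 + β) ^ (1 + β) - c₁ * c₂ ^ β = 0 →
        ∃! u : ℝ, 0 < u ∧ c₁ * u ^ (-β) + c₂ * u = 1) ∧
    (β ^ β / (1 + β) ^ (1 + β) - c₁ * c₂ ^ β < 0 →
        ¬∃ u : ℝ, 0 < u ∧ c₁ * u ^ (-β) + c₂ * u = 1) := by
  set g : ℝ → ℝ := fun u => c₁ * u ^ (-β) + c₂ * u with hgdef
  set D : ℝ := β ^ β / (1 + β) ^ (1 + β) - c₁ * c₂ ^ β with hDdef
  have hβ1 : (0:ℝ) < β + 1 := by linarith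
  have hApos : 0 < c₁ * β / c₂ := by positivity
  set w : ℝ := (c₁ * β / c₂) ^ (β + 1)⁻¹ with hwdef
  have hwpos : 0 < w := rpow_pos_of_pos hApos _
  have hwpow : w ^ (β + 1) = c₁ * β / c₂ := Real.rpow_inv_rpow hApos.le hβ1.ne'
  -- value at the critical point
  have hkey : c₁ * w ^ (-β) = c₂ * w / β := by
    have h1 : w ^ (-β) = w ^ (1:ℝ) * w ^ (-(β+1)) := by
      rw [← Real.rpow_add hwpos]; ring_nf
    rw [h1, Real.rpow_one, Real.rpow_neg hwpos.le, hwpow]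
    field_simp
  have hm : g w = c₂ * w * (β + 1) / β := by
    simp only [hgdef]
    rw [hkey]
    field_simp
    ring
  have hmpos : 0 < g w := by
    rw [hm]; exact div_pos (by positivity) hβ
  have hc2p : c₂ ^ (β+1) = c₂ ^ β * c₂ := by
    rw [Real.rpow_add hc₂, Real.rpow_one]
  have hβp : β ^ (β+1) = β ^ β * β := by
    rw [Real.rpow_add hβ, Real.rpow_one]
  have hβQ : (0:ℝ) < β ^ β := rpow_pos_of_pos hβ _
  have hPQ : (0:ℝ) < (1 + β) ^ (1 + β) := rpow_pos_of_pos (by linarith) _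
  have hmpow : (g w) ^ (β + 1) = c₁ * c₂ ^ β * (1 + β) ^ (1 + β) / β ^ β := by
    have hte : (0:ℝ) ≤ c₂ * (β + 1) / β := by positivity
    have e1 : c₂ * w * (β + 1) / β = w * (c₂ * (β + 1) / β) := by ring
    have e2 : (1 + β : ℝ) = β + 1 := by ring
    rw [hm, e1, Real.mul_rpow hwpos.le hte, hwpow,
        Real.div_rpow (by positivity) hβ.le, Real.mul_rpow hc₂.le hβ1.le,
        hc2p, hβp, e2]
    field_simp
  -- classification of g w versus 1
  have hlt : g w < 1 ↔ 0 < D := by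
    rw [← Real.rpow_lt_rpow_iff hmpos.le zero_le_one hβ1, Real.one_rpow, hmpow,
        div_lt_one hβQ, hDdef, sub_pos, lt_div_iff₀ hPQ]
  have heq : g w = 1 ↔ D = 0 := by
    rw [← Real.rpow_left_inj hmpos.le zero_le_one hβ1.ne', Real.one_rpow, hmpow,
        div_eq_one_iff_eq hβQ.ne', hDdef, sub_eq_zero, div_eq_iff hPQ.ne']
    constructor <;> intro h <;> linarith
  have hgt : 1 < g w ↔ D < 0 := by
    constructor
    · intro h
      rcases lt_trichotomy D 0 with h' | h' | h'
      · exact h'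
      · exact absurd (heq.2 h') h.ne'
      · exact absurd (hlt.2 h') (not_lt.2 h.le)
    · intro h
      rcases lt_trichotomy (g w) 1 with h' | h' | h'
      · exact absurd (hlt.1 h') (by linarith)
      · exact absurd (heq.1 h') (by linarith)
      · exact h'
  -- derivative
  have hderiv : ∀ u : ℝ, 0 < u →
      HasDerivAt g (c₂ - c₁ * β * (u ^ (β+1))⁻¹) u := by
    intro u hu
    have h1 : HasDerivAt (fun x : ℝ => x ^ (-β)) (-β * u ^ (-β - 1)) u :=
      Real.hasDerivAt_rpow_const (Or.inl hu.ne')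
    have h2 := (h1.const_mul c₁).add ((hasDerivAt_id u).const_mul c₂)
    have e : c₁ * (-β * u ^ (-β - 1)) + c₂ * 1 = c₂ - c₁ * β * (u ^ (β+1))⁻¹ := by
      have : u ^ (-β - 1) = (u ^ (β+1))⁻¹ := by
        rw [← Real.rpow_neg hu.le]; ring_nf
      rw [this]; ring
    rw [e] at h2
    exact h2
  have hcont : ∀ s : Set ℝ, s ⊆ Ioi 0 → ContinuousOn g s := by
    intro s hs
    apply ContinuousOn.add
    · exact continuousOn_const.mul (ContinuousOn.rpow_const continuousOn_id
        fun x hx => Or.inl (ne_of_gt (hs hx)))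
    · exact continuousOn_const.mul continuousOn_id
  -- monotonicity
  have hanti : StrictAntiOn g (Ioc 0 w) := by
    apply strictAntiOn_of_deriv_neg (convex_Ioc 0 w) (hcont _ fun x hx => hx.1)
    intro x hx
    rw [interior_Ioc] at hx
    rw [(hderiv x hx.1).deriv]
    have hupos : 0 < x ^ (β+1) := rpow_pos_of_pos hx.1 _
    have h3 : x ^ (β+1) < c₁ * β / c₂ := by
      rw [← hwpow]; exact Real.rpow_lt_rpow hx.1.le hx.2 hβ1
    have h3' : c₂ * x ^ (β+1) < c₁ * β := by
      rw [lt_div_iff₀ hc₂] at h3; linarith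
    have h4 : c₂ * x ^ (β+1) * (x ^ (β+1))⁻¹ < c₁ * β * (x ^ (β+1))⁻¹ :=
      mul_lt_mul_of_pos_right h3' (inv_pos.2 hupos)
    rw [mul_assoc, mul_inv_cancel₀ hupos.ne', mul_one] at h4
    linarith
  have hmono : StrictMonoOn g (Ici w) := by
    apply strictMonoOn_of_deriv_pos (convex_Ici w)
      (hcont _ fun x hx => lt_of_lt_of_le hwpos hx)
    intro x hx
    rw [interior_Ici] at hx
    have hxpos : 0 < x := hwpos.trans hx
    rw [(hderiv x hxpos).deriv]
    have hupos : 0 < x ^ (β+1) := rpow_pos_of_pos hxpos _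
    have h3 : c₁ * β / c₂ < x ^ (β+1) := by
      rw [← hwpow]; exact Real.rpow_lt_rpow hwpos.le hx hβ1
    have h3' : c₁ * β < c₂ * x ^ (β+1) := by
      rw [div_lt_iff₀ hc₂] at h3; linarith
    have h4 : c₁ * β * (x ^ (β+1))⁻¹ < c₂ * x ^ (β+1) * (x ^ (β+1))⁻¹ :=
      mul_lt_mul_of_pos_right h3' (inv_pos.2 hupos)
    rw [mul_assoc c₂, mul_inv_cancel₀ hupos.ne', mul_one] at h4
    linarith
  have hglobal : ∀ u : ℝ, 0 < u → g w ≤ g u := by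
    intro u hu
    rcases lt_trichotomy u w with h | h | h
    · exact (hanti ⟨hu, h.le⟩ ⟨hwpos, le_refl w⟩ h).le
    · rw [h]
    · exact (hmono self_mem_Ici h.le h).le
  refine ⟨?_, ?_, ?_⟩
  · -- D > 0 : two solutions
    intro hD
    have hm1 : g w < 1 := hlt.2 hD
    set u₀ : ℝ := min (c₁ ^ β⁻¹) (w/2) with hu₀def
    have hu₀pos : 0 < u₀ := lt_min (rpow_pos_of_pos hc₁ _) (by linarith)
    have hu₀lt : u₀ < w := (min_le_right _ _).trans_lt (by linarith)
    have hgu₀ : 1 < g u₀ := by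
      have h1 : u₀ ^ β ≤ c₁ := by
        calc u₀ ^ β ≤ (c₁ ^ β⁻¹) ^ β :=
              Real.rpow_le_rpow hu₀pos.le (min_le_left _ _) hβ.le
          _ = c₁ := Real.rpow_inv_rpow hc₁.le hβ.ne'
      have ht : 0 < u₀ ^ β := rpow_pos_of_pos hu₀pos _
      have h2 : 1 ≤ c₁ * (u₀ ^ β)⁻¹ := by
        rw [← div_eq_mul_inv, le_div_iff₀ ht, one_mul]; exact h1
      have h3 : u₀ ^ (-β) = (u₀ ^ β)⁻¹ := Real.rpow_neg hu₀pos.le β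
      have h4 : 0 < c₂ * u₀ := mul_pos hc₂ hu₀pos
      simp only [hgdef]
      rw [h3]; linarith
    obtain ⟨a, ha, hga⟩ := intermediate_value_Icc' hu₀lt.le
      (hcont _ fun x hx => lt_of_lt_of_le hu₀pos hx.1) ⟨hm1.le, hgu₀.le⟩
    set u₁ : ℝ := w + c₂⁻¹ with hu₁def
    have hu₁gt : w < u₁ := lt_add_of_pos_right _ (by positivity)
    have hgu₁ : 1 < g u₁ := by
      have h1 : 0 < c₁ * u₁ ^ (-β) := mul_pos hc₁ (rpow_pos_of_pos (hwpos.trans hu₁gt) _)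
      have e : c₂ * u₁ = c₂ * w + 1 := by
        rw [hu₁def, mul_add, mul_inv_cancel₀ hc₂.ne']
      simp only [hgdef]
      nlinarith [mul_pos hc₂ hwpos]
    obtain ⟨c, hcmem, hgc⟩ := intermediate_value_Icc hu₁gt.le
      (hcont _ fun x hx => lt_of_lt_of_le hwpos hx.1) ⟨hm1.le, hgu₁.le⟩
    have hapos : 0 < a := hu₀pos.trans_le ha.1
    have haw : a < w := by
      rcases lt_or_eq_of_le ha.2 with h | h
      · exact h
      · exfalso; rw [h] at hga; rw [hga] at hm1; exact lt_irrefl 1 hm1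
    have hcw : w < c := by
      rcases lt_or_eq_of_le hcmem.1 with h | h
      · exact h
      · exfalso; rw [← h] at hgc; rw [hgc] at hm1; exact lt_irrefl 1 hm1
    have hac : a ≠ c := ne_of_lt (haw.trans hcw)
    have hset : {u : ℝ | 0 < u ∧ c₁ * u ^ (-β) + c₂ * u = 1} = {a, c} := by
      ext u
      simp only [mem_setOf_eq, mem_insert_iff, mem_singleton_iff]
      constructor
      · rintro ⟨hu, he⟩
        have hgu : g u = 1 := he
        rcases le_or_gt u w with h | h
        · left
          exact hanti.injOn ⟨hu, h⟩ ⟨hapos, ha.2⟩ (by rw [hgu, hga])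
        · right
          exact hmono.injOn (mem_Ici.2 h.le) (mem_Ici.2 hcmem.1) (by rw [hgu, hgc])
      · rintro (rfl | rfl)
        · exact ⟨hapos, hga⟩
        · exact ⟨hwpos.trans hcw, hgc⟩
    rw [hset]
    exact Set.encard_pair hac
  · -- D = 0 : unique solution
    intro hD
    have hm1 : g w = 1 := heq.2 hD
    refine ⟨w, ⟨hwpos, hm1⟩, ?_⟩
    rintro u ⟨hu, he⟩
    have hgu : g u = 1 := he
    by_contra hne
    rcases lt_or_gt_of_ne hne with h | h
    · have := hanti ⟨hu, h.le⟩ ⟨hwpos, le_refl w⟩ h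
      rw [hgu, hm1] at this; exact lt_irrefl 1 this
    · have := hmono self_mem_Ici (mem_Ici.2 h.le) h
      rw [hgu, hm1] at this; exact lt_irrefl 1 this
  · -- D < 0 : no solution
    intro hD
    rintro ⟨u, hu, he⟩
    have hgu : g u = 1 := he
    have h1 := hglobal u hu
    have h2 : 1 < g w := hgt.2 hD
    rw [hgu] at h1
    linarith


private lemma set_transfer (b₁ b₂ c₁ c₂ : ℝ) (hb₂ : b₂ ≠ 0) :
    {x : ℝ | 0 < x ∧ c₁ * x ^ b₁ + c₂ * x ^ b₂ = 1} =
      (fun u : ℝ => u ^ b₂⁻¹) '' {u : ℝ | 0 < u ∧ c₁ * u ^ (b₁ / b₂) + c₂ * u = 1} := by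
  ext x
  simp only [mem_setOf_eq, mem_image]
  constructor
  · rintro ⟨hx, he⟩
    refine ⟨x ^ b₂, ⟨rpow_pos_of_pos hx _, ?_⟩, Real.rpow_rpow_inv hx.le hb₂⟩
    have e1 : (x ^ b₂) ^ (b₁ / b₂) = x ^ b₁ := by
      rw [← Real.rpow_mul hx.le]
      congr 1
      field_simp
    rw [e1]; exact he
  · rintro ⟨u, ⟨hu, he⟩, rfl⟩
    refine ⟨rpow_pos_of_pos hu _, ?_⟩
    have e1 : (u ^ b₂⁻¹) ^ b₁ = u ^ (b₁ / b₂) := by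
      rw [← Real.rpow_mul hu.le, inv_mul_eq_div]
    have e2 : (u ^ b₂⁻¹) ^ b₂ = u := Real.rpow_inv_rpow hu.le hb₂
    rw [e1, e2]; exact he

private lemma inj_transfer (b₂ : ℝ) (hb₂ : b₂ ≠ 0) (T : Set ℝ) (hT : ∀ u ∈ T, (0:ℝ) < u) :
    InjOn (fun u : ℝ => u ^ b₂⁻¹) T := by
  intro u hu v hv h
  have h' : (u ^ b₂⁻¹) ^ b₂ = (v ^ b₂⁻¹) ^ b₂ := by simp only at h; rw [h]
  rwa [Real.rpow_inv_rpow (hT u hu).le hb₂, Real.rpow_inv_rpow (hT v hv).le hb₂] at h'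


/-- Solution counts for the univariate trinomial `c₁ x^{b₁} + c₂ x^{b₂} = 1` in `x > 0`:
(i) if `b₁·b₂ > 0`, there is exactly one positive solution;
(ii) if `b₁·b₂ < 0`, with `b = b₁/b₂` and discriminant
`𝒟 = |b|^{|b|}/(1+|b|)^{1+|b|} − c₁ c₂^{|b|}`, there are exactly two, exactly one,
or no positive solutions according as `𝒟 > 0`, `𝒟 = 0`, `𝒟 < 0`. -/
theorem stmt_17 (b₁ b₂ c₁ c₂ : ℝ) (hb₁ : b₁ ≠ 0) (hb₂ : b₂ ≠ 0) (hb : b₁ ≠ b₂)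
    (hc₁ : 0 < c₁) (hc₂ : 0 < c₂) :
    (0 < b₁ * b₂ → ∃! x : ℝ, 0 < x ∧ c₁ * x ^ b₁ + c₂ * x ^ b₂ = 1) ∧
    (b₁ * b₂ < 0 →
      ∀ 𝒟 : ℝ,
        𝒟 = |b₁ / b₂| ^ |b₁ / b₂| / (1 + |b₁ / b₂|) ^ (1 + |b₁ / b₂|) -
              c₁ * c₂ ^ |b₁ / b₂| →
        (0 < 𝒟 →
            {x : ℝ | 0 < x ∧ c₁ * x ^ b₁ + c₂ * x ^ b₂ = 1}.encard = 2) ∧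
        (𝒟 = 0 → ∃! x : ℝ, 0 < x ∧ c₁ * x ^ b₁ + c₂ * x ^ b₂ = 1) ∧
        (𝒟 < 0 → ¬∃ x : ℝ, 0 < x ∧ c₁ * x ^ b₁ + c₂ * x ^ b₂ = 1)) := by
  constructor
  · intro hpos
    have hbpos : 0 < b₁ / b₂ := by
      rcases mul_pos_iff.1 hpos with ⟨h1, h2⟩ | ⟨h1, h2⟩
      · exact div_pos h1 h2
      · exact div_pos_of_neg_of_neg h1 h2
    obtain ⟨u, ⟨hu, heu⟩, huniq⟩ := existsUnique_pos_case (b₁ / b₂) c₁ c₂ hbpos hc₁ hc₂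
    have e1 : (u ^ b₂⁻¹) ^ b₁ = u ^ (b₁ / b₂) := by
      rw [← Real.rpow_mul hu.le, inv_mul_eq_div]
    have e2 : (u ^ b₂⁻¹) ^ b₂ = u := Real.rpow_inv_rpow hu.le hb₂
    refine ⟨u ^ b₂⁻¹, ⟨rpow_pos_of_pos hu _, by rw [e1, e2]; exact heu⟩, ?_⟩
    rintro x ⟨hx, hex⟩
    have hx2 : 0 < x ^ b₂ := rpow_pos_of_pos hx _
    have e3 : (x ^ b₂) ^ (b₁ / b₂) = x ^ b₁ := by
      rw [← Real.rpow_mul hx.le]; congr 1; field_simp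
    have h := huniq (x ^ b₂) ⟨hx2, by rw [e3]; exact hex⟩
    rw [← h, Real.rpow_rpow_inv hx.le hb₂]
  · intro hneg 𝒟 hDdef
    have hbneg : b₁ / b₂ < 0 := by
      rcases mul_neg_iff.1 hneg with ⟨h1, h2⟩ | ⟨h1, h2⟩
      · exact div_neg_of_pos_of_neg h1 h2
      · exact div_neg_of_neg_of_pos h1 h2
    set β : ℝ := |b₁ / b₂| with hβdef
    have hβpos : 0 < β := abs_pos.2 (ne_of_lt hbneg)
    have hbeq : b₁ / b₂ = -β := by rw [hβdef, abs_of_neg hbneg, neg_neg]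
    have hD' : 𝒟 = β ^ β / (1 + β) ^ (1 + β) - c₁ * c₂ ^ β := hDdef
    obtain ⟨H1, H2, H3⟩ := neg_case β c₁ c₂ hβpos hc₁ hc₂
    have hfwd : ∀ x : ℝ, 0 < x → c₁ * x ^ b₁ + c₂ * x ^ b₂ = 1 →
        0 < x ^ b₂ ∧ c₁ * (x ^ b₂) ^ (-β) + c₂ * x ^ b₂ = 1 := by
      intro x hx hex
      refine ⟨rpow_pos_of_pos hx _, ?_⟩
      have e3 : (x ^ b₂) ^ (-β) = x ^ b₁ := by
        rw [← hbeq, ← Real.rpow_mul hx.le]; congr 1; field_simp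
      rw [e3]; exact hex
    have hbwd : ∀ u : ℝ, 0 < u → c₁ * u ^ (-β) + c₂ * u = 1 →
        0 < u ^ b₂⁻¹ ∧ c₁ * (u ^ b₂⁻¹) ^ b₁ + c₂ * (u ^ b₂⁻¹) ^ b₂ = 1 := by
      intro u hu heu
      refine ⟨rpow_pos_of_pos hu _, ?_⟩
      have e1 : (u ^ b₂⁻¹) ^ b₁ = u ^ (-β) := by
        rw [← hbeq, ← Real.rpow_mul hu.le, inv_mul_eq_div]
      have e2 : (u ^ b₂⁻¹) ^ b₂ = u := Real.rpow_inv_rpow hu.le hb₂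
      rw [e1, e2]; exact heu
    have hSeq : {x : ℝ | 0 < x ∧ c₁ * x ^ b₁ + c₂ * x ^ b₂ = 1} =
        (fun u : ℝ => u ^ b₂⁻¹) '' {u : ℝ | 0 < u ∧ c₁ * u ^ (-β) + c₂ * u = 1} := by
      rw [← hbeq]
      exact set_transfer b₁ b₂ c₁ c₂ hb₂
    refine ⟨?_, ?_, ?_⟩
    · intro hD
      rw [hSeq, (inj_transfer b₂ hb₂ _ (fun u hu => hu.1)).encard_image]
      exact H1 (hD' ▸ hD)
    · intro hD
      obtain ⟨u, ⟨hu, heu⟩, huniq⟩ := H2 (hD' ▸ hD)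
      refine ⟨u ^ b₂⁻¹, hbwd u hu heu, ?_⟩
      rintro x ⟨hx, hex⟩
      have h := huniq (x ^ b₂) (hfwd x hx hex)
      rw [← h, Real.rpow_rpow_inv hx.le hb₂]
    · intro hD
      rintro ⟨x, hx, hex⟩
      exact H3 (hD' ▸ hD) ⟨x ^ b₂, hfwd x hx hex⟩
end
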